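/- arXiv:1911.05883 — 11 statements merged into one kernel-verified Lean document; each statement's English description precedes it below -/
import Mathlib

section
/- For every real x > 0, e^{1/x}·(1 − 2x) + 2x + 1 > 0. -/
/-!
Substituting `t = 1 / x`, the expression equals `x * ((t - 2) * exp t + t + 2)`. The function
`g t = (t - 2) * exp t + t + 2` vanishes at `0` and has derivative `(t - 1) * exp t + 1`, which is
positive for `t ≠ 0` because `exp (-t) > 1 - t`; hence `g` is positive on `(0, ∞)`.
-/

open Real Set

lemma sub_one_mul_exp_add_one_pos {t : ℝ} (ht : t ≠ 0) : 0 < (t - 1) * exp t + 1 := by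
  have h : -t + 1 < exp (-t) := add_one_lt_exp (neg_ne_zero.mpr ht)
  have h' : (-t + 1) * exp t < 1 := by
    calc (-t + 1) * exp t < exp (-t) * exp t := mul_lt_mul_of_pos_right h (exp_pos t)
      _ = 1 := by rw [← exp_add, neg_add_cancel, exp_zero]
  linarith

lemma hasDerivAt_sub_two_mul_exp_add_add_two (t : ℝ) :
    HasDerivAt (fun s ↦ (s - 2) * exp s + s + 2) ((t - 1) * exp t + 1) t := by
  refine ((((hasDerivAt_id' t).sub_const 2).mul (hasDerivAt_exp t)).add
    (hasDerivAt_id' t)).add_const 2 |>.congr_deriv ?_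
  ring

lemma sub_two_mul_exp_add_add_two_pos {t : ℝ} (ht : 0 < t) : 0 < (t - 2) * exp t + t + 2 := by
  have hmono : StrictMonoOn (fun s ↦ (s - 2) * exp s + s + 2) (Ici 0) := by
    refine strictMonoOn_of_deriv_pos (convex_Ici 0) (by fun_prop) fun s hs ↦ ?_
    rw [interior_Ici] at hs
    rw [(hasDerivAt_sub_two_mul_exp_add_add_two s).deriv]
    exact sub_one_mul_exp_add_one_pos (ne_of_gt hs)
  simpa using hmono self_mem_Ici (mem_Ici.mpr ht.le) ht

theorem exp_one_div_key_inequality (x : ℝ) (hx : 0 < x) :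
    0 < Real.exp (1 / x) * (1 - 2 * x) + 2 * x + 1 := by
  have hsubst : exp (1 / x) * (1 - 2 * x) + 2 * x + 1
      = x * ((1 / x - 2) * exp (1 / x) + 1 / x + 2) := by
    field_simp
    ring
  rw [hsubst]
  exact mul_pos hx (sub_two_mul_exp_add_add_two_pos (one_div_pos.mpr hx))
end

section
/- The function φ(x) = 1/(e^{1/x} − 1) is convex on the interval (0, ∞). -/
/-!
Writing `u = 1 / x`, one has `φ'(x) = u² eᵘ / (eᵘ - 1)²`, and `x ↦ 1 / x` is decreasing, so
convexity of `φ` reduces to `u ↦ u² eᵘ / (eᵘ - 1)²` being decreasing on `(0, ∞)`. Its derivative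
has the sign of `2 (eᵘ - 1) - u (eᵘ + 1)` (that is, of `tanh (u / 2) - u / 2`), which vanishes at
`0` and is nonincreasing because its derivative is `-(u eᵘ - eᵘ + 1) ≤ 0`.
-/

open Real Set

lemma two_mul_exp_sub_one_le_mul_exp_add_one {u : ℝ} (hu : 0 ≤ u) :
    2 * (exp u - 1) ≤ u * (exp u + 1) := by
  let h : ℝ → ℝ := fun u ↦ u * (exp u + 1) - 2 * (exp u - 1)
  have hh' (x : ℝ) : HasDerivAt h (x * exp x - exp x + 1) x :=
    ((hasDerivAt_id' x).mul ((hasDerivAt_exp x).add_const 1)).sub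
      (((hasDerivAt_exp x).sub_const 1).const_mul 2) |>.congr_deriv (by ring)
  have hmono : MonotoneOn h (Ici 0) := by
    refine monotoneOn_of_hasDerivWithinAt_nonneg (convex_Ici 0)
      (fun x _ ↦ (hh' x).continuousAt.continuousWithinAt) (fun x _ ↦ (hh' x).hasDerivWithinAt)
      fun x _ ↦ ?_
    have := mul_le_mul_of_nonneg_left (one_sub_le_exp_neg x) (exp_pos x).le
    rw [← exp_add, add_neg_cancel, exp_zero] at this
    linarith
  simpa [h] using hmono self_mem_Ici hu hu

lemma HasDerivAt.comp_one_div {g : ℝ → ℝ} {g' x : ℝ} (hx : x ≠ 0) (hg : HasDerivAt g g' (1 / x)) :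
    HasDerivAt (fun y ↦ g (1 / y)) (-(1 / x) ^ 2 * g') x :=
  (hg.comp x ((hasDerivAt_inv hx).congr_of_eventuallyEq (.of_forall one_div))).congr_deriv
    (by field_simp)

lemma hasDerivAt_one_div_exp_sub_one {u : ℝ} (hu : u ≠ 0) :
    HasDerivAt (fun u ↦ 1 / (exp u - 1)) (-exp u / (exp u - 1) ^ 2) u := by
  have hne : exp u - 1 ≠ 0 := by simpa [sub_eq_zero] using hu
  simpa only [one_div] using ((hasDerivAt_exp u).sub_const 1).fun_inv hne

lemma hasDerivAt_sq_mul_exp_div_exp_sub_one_sq {u : ℝ} (hu : u ≠ 0) :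
    HasDerivAt (fun u ↦ u ^ 2 * exp u / (exp u - 1) ^ 2)
      (u * exp u * (2 * (exp u - 1) - u * (exp u + 1)) / (exp u - 1) ^ 3) u := by
  have hne : exp u - 1 ≠ 0 := by simpa [sub_eq_zero] using hu
  refine (((hasDerivAt_pow 2 u).fun_mul (hasDerivAt_exp u)).fun_div
    (((hasDerivAt_exp u).sub_const 1).fun_pow 2) (pow_ne_zero 2 hne)).congr_deriv ?_
  field_simp
  ring

lemma antitoneOn_sq_mul_exp_div_exp_sub_one_sq :
    AntitoneOn (fun u ↦ u ^ 2 * exp u / (exp u - 1) ^ 2) (Ioi 0) := by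
  have hg' (u : ℝ) (hu : 0 < u) := hasDerivAt_sq_mul_exp_div_exp_sub_one_sq hu.ne'
  refine antitoneOn_of_hasDerivWithinAt_nonpos (convex_Ioi 0)
    (fun u hu ↦ (hg' u hu).continuousAt.continuousWithinAt)
    (fun u hu ↦ (hg' u (interior_subset hu)).hasDerivWithinAt) fun u hu ↦ ?_
  have hu : 0 < u := interior_subset hu
  have he : 0 < exp u - 1 := by simpa using hu
  have := two_mul_exp_sub_one_le_mul_exp_add_one hu.le
  exact div_nonpos_of_nonpos_of_nonneg
    (mul_nonpos_of_nonneg_of_nonpos (by positivity) (by linarith)) (by positivity)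

theorem convexOn_one_div_exp_one_div_sub_one :
    ConvexOn ℝ (Set.Ioi (0 : ℝ)) (fun x => 1 / (Real.exp (1 / x) - 1)) := by
  have hf' (x : ℝ) (hx : 0 < x) : HasDerivAt (fun x => 1 / (exp (1 / x) - 1))
      ((1 / x) ^ 2 * exp (1 / x) / (exp (1 / x) - 1) ^ 2) x :=
    ((hasDerivAt_one_div_exp_sub_one (by positivity)).comp_one_div hx.ne').congr_deriv (by ring)
  have hinv : AntitoneOn (fun x : ℝ ↦ 1 / x) (Ioi 0) :=
    fun x hx _ _ hxy ↦ one_div_le_one_div_of_le hx hxy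
  refine MonotoneOn.convexOn_of_deriv (convex_Ioi 0)
    (fun x hx ↦ (hf' x hx).continuousAt.continuousWithinAt) ?_ ?_ <;> rw [interior_Ioi]
  · exact fun x hx ↦ (hf' x hx).differentiableAt.differentiableWithinAt
  · exact (antitoneOn_sq_mul_exp_div_exp_sub_one_sq.comp hinv
      fun _ hx ↦ mem_Ioi.2 (one_div_pos.2 hx)).congr fun x hx ↦ (hf' x hx).deriv.symm
end

section
/- The function φ(x) = 1/(e^{1/x} − 1) is star-shaped on (0, ∞): for every ν with 0 < ν ≤ 1 and every x > 0, one has φ(ν x) ≤ ν · φ(x), i.e., 1/(e^{1/(νx)} − 1) ≤ ν/(e^{1/x} − 1). -/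
theorem starShaped_one_div_exp_one_div_sub_one (ν x : ℝ) (hν0 : 0 < ν) (hν1 : ν ≤ 1)
    (hx : 0 < x) :
    1 / (Real.exp (1 / (ν * x)) - 1) ≤ ν / (Real.exp (1 / x) - 1) := by
  have hνx : 0 < ν * x := mul_pos hν0 hx
  have hA : 0 < Real.exp (1 / x) - 1 := by
    have := Real.one_lt_exp_iff.mpr (show (0:ℝ) < 1 / x by positivity)
    linarith
  have hB : 0 < Real.exp (1 / (ν * x)) - 1 := by
    have := Real.one_lt_exp_iff.mpr (show (0:ℝ) < 1 / (ν * x) by positivity)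
    linarith
  rw [div_le_div_iff₀ hB hA]
  -- need (exp(1/x) - 1) ≤ ν * (exp(1/(νx)) - 1)
  have hconv := convexOn_exp.2 (Set.mem_univ (1 / (ν * x))) (Set.mem_univ (0 : ℝ))
    (le_of_lt hν0) (by linarith : (0:ℝ) ≤ 1 - ν) (by ring)
  simp only [smul_eq_mul, mul_zero, add_zero, Real.exp_zero, mul_one] at hconv
  have hkey : Real.exp (ν * (1 / (ν * x))) ≤ ν * Real.exp (1 / (ν * x)) + (1 - ν) := hconv
  have heq : ν * (1 / (ν * x)) = 1 / x := by
    field_simp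
  rw [heq] at hkey
  nlinarith
end

section
/- The function φ(x) = 1/(e^{1/x} − 1) is super-additive on (0, ∞): for all x > 0 and y > 0, φ(x + y) ≥ φ(x) + φ(y), i.e., 1/(e^{1/(x+y)} − 1) ≥ 1/(e^{1/x} − 1) + 1/(e^{1/y} − 1). -/
lemma key_slope {s t : ℝ} (hs : 0 < s) (hst : s ≤ t) :
    t * (Real.exp s - 1) ≤ s * (Real.exp t - 1) := by
  have ht : 0 < t := hs.trans_le hst
  have hb : 0 ≤ s / t := by positivity
  have ha : 0 ≤ 1 - s / t := by
    have : s / t ≤ 1 := (div_le_one ht).2 hst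
    linarith
  have hab : (1 - s / t) + s / t = 1 := by ring
  have hcx := convexOn_exp.2 (Set.mem_univ (0 : ℝ)) (Set.mem_univ t) ha hb hab
  simp only [smul_eq_mul, mul_zero, zero_add, Real.exp_zero, mul_one] at hcx
  have hst' : s / t * t = s := div_mul_cancel₀ s ht.ne'
  rw [hst'] at hcx
  have hmul := mul_le_mul_of_nonneg_left hcx ht.le
  have heq : t * ((1 - s / t) + s / t * Real.exp t) = t - s + s * Real.exp t := by
    field_simp
  nlinarith [hmul, heq]

theorem superadditive_one_div_exp_one_div_sub_one (x y : ℝ) (hx : 0 < x) (hy : 0 < y) :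
    1 / (Real.exp (1 / x) - 1) + 1 / (Real.exp (1 / y) - 1) ≤
      1 / (Real.exp (1 / (x + y)) - 1) := by
  have hxy : 0 < x + y := by linarith
  have ha : 0 < Real.exp (1 / x) - 1 := by
    have h := Real.add_one_lt_exp (x := 1 / x) (one_div_pos.mpr hx).ne'
    have := one_div_pos.mpr hx
    linarith
  have hb : 0 < Real.exp (1 / y) - 1 := by
    have h := Real.add_one_lt_exp (x := 1 / y) (one_div_pos.mpr hy).ne'
    have := one_div_pos.mpr hy
    linarith
  have hc : 0 < Real.exp (1 / (x + y)) - 1 := by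
    have h := Real.add_one_lt_exp (x := 1 / (x + y)) (one_div_pos.mpr hxy).ne'
    have := one_div_pos.mpr hxy
    linarith
  have h1 : (1 / x) * (Real.exp (1 / (x + y)) - 1) ≤ (1 / (x + y)) * (Real.exp (1 / x) - 1) :=
    key_slope (by positivity) (by
      apply div_le_div_of_nonneg_left (by norm_num) hx (by linarith))
  have h2 : (1 / y) * (Real.exp (1 / (x + y)) - 1) ≤ (1 / (x + y)) * (Real.exp (1 / y) - 1) :=
    key_slope (by positivity) (by
      apply div_le_div_of_nonneg_left (by norm_num) hy (by linarith))
  have h1' : (x + y) * (Real.exp (1 / (x + y)) - 1) ≤ x * (Real.exp (1 / x) - 1) := by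
    have hmul := mul_le_mul_of_nonneg_left h1 (le_of_lt (mul_pos hx hxy))
    have e1 : x * (x + y) * ((1 / x) * (Real.exp (1 / (x + y)) - 1))
        = (x + y) * (Real.exp (1 / (x + y)) - 1) := by field_simp
    have e2 : x * (x + y) * ((1 / (x + y)) * (Real.exp (1 / x) - 1))
        = x * (Real.exp (1 / x) - 1) := by field_simp
    linarith [hmul, e1, e2]
  have h2' : (x + y) * (Real.exp (1 / (x + y)) - 1) ≤ y * (Real.exp (1 / y) - 1) := by
    have hmul := mul_le_mul_of_nonneg_left h2 (le_of_lt (mul_pos hy hxy))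
    have e1 : y * (x + y) * ((1 / y) * (Real.exp (1 / (x + y)) - 1))
        = (x + y) * (Real.exp (1 / (x + y)) - 1) := by field_simp
    have e2 : y * (x + y) * ((1 / (x + y)) * (Real.exp (1 / y) - 1))
        = y * (Real.exp (1 / y) - 1) := by field_simp
    linarith [hmul, e1, e2]
  rw [div_add_div _ _ ha.ne' hb.ne', div_le_div_iff₀ (by positivity) hc]
  nlinarith [mul_le_mul_of_nonneg_left h1' hb.le, mul_le_mul_of_nonneg_left h2' ha.le,
    mul_pos ha hb, hc]
end

section
/- Let m, n be positive integers, λ_{ij} > 0 for 1 ≤ i ≤ m, 1 ≤ j ≤ n, α_i = ∑_{j=1}^n λ_{ij}, β_j = ∑_{i=1}^m λ_{ij}, and let ρ ≤ 2. Then the function t ↦ ln f(t), where f(t) = [∏_{i=1}^m Γ(1+α_i t) · ∏_{j=1}^n Γ(1+β_j t)] / [∏_{i=1}^m ∏_{j=1}^n Γ(1+λ_{ij} t)]^ρ, is convex on (0, ∞); that is, f is logarithmically convex on (0,∞). -/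
/-!
Write `g_c(t) = log Γ(1 + c t)`. Then
`log f = ∑ᵢ (g_{αᵢ} - ∑ⱼ g_{λᵢⱼ}) + ∑ⱼ (g_{βⱼ} - ∑ᵢ g_{λᵢⱼ}) + (2 - ρ) ∑ᵢⱼ g_{λᵢⱼ}`,
and each `g_c` is convex, so everything reduces to the convexity of `g_{a+b} - g_a - g_b` for
`a, b > 0`. Replacing `log Γ` by Gauss's approximants `logGammaSeq`, the second derivative of this
difference becomes
`∑_{j<2N} 1/(t + (1+j)/(a+b))² - ∑_{j<N} 1/(t + (1+j)/a)² - ∑_{j<N} 1/(t + (1+j)/b)²`.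
Since `1/(t+p)² = ∫_p^∞ 2/(t+x)³ dx`, each sum is `∫_0^∞ (number of points below x) · 2/(t+x)³ dx`,
and the counts compare because `⌈ax⌉ + ⌈bx⌉ ≤ ⌈(a+b)x⌉ + 1`.
-/

open Finset Filter MeasureTheory Set Topology Real BohrMollerup

theorem ConvexOn.finsetSum {𝕜 E β ι : Type*} [Semiring 𝕜] [PartialOrder 𝕜] [AddCommMonoid E]
    [AddCommMonoid β] [PartialOrder β] [IsOrderedAddMonoid β] [SMul 𝕜 E] [Module 𝕜 β]
    {D : Set E} (hD : Convex 𝕜 D) (s : Finset ι) {f : ι → E → β}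
    (hf : ∀ i ∈ s, ConvexOn 𝕜 D (f i)) : ConvexOn 𝕜 D fun x => ∑ i ∈ s, f i x := by
  classical
  induction s using Finset.induction_on with
  | empty => simpa using convexOn_const (0 : β) hD
  | insert i s hi ih =>
    simp only [sum_insert hi]
    exact (hf i (mem_insert_self i s)).add (ih fun j hj => hf j (mem_insert_of_mem hj))

theorem convexOn_of_tendsto {E ι : Type*} [AddCommMonoid E] [Module ℝ E] {l : Filter ι} [l.NeBot]
    {D : Set E} (hD : Convex ℝ D) {F : ι → E → ℝ} {f : E → ℝ}
    (hF : ∀ᶠ n in l, ConvexOn ℝ D (F n))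
    (hlim : ∀ x ∈ D, Tendsto (fun n => F n x) l (𝓝 (f x))) : ConvexOn ℝ D f := by
  refine ⟨hD, fun x hx y hy a b ha hb hab => ?_⟩
  refine le_of_tendsto_of_tendsto (hlim _ (hD hx hy ha hb hab))
    (((hlim x hx).const_smul a).add ((hlim y hy).const_smul b)) ?_
  filter_upwards [hF] with n hn using hn.2 hx hy ha hb hab

theorem convexOn_of_hasDerivAt2_nonneg {D : Set ℝ} (hD : Convex ℝ D) (hDo : IsOpen D)
    {f f' f'' : ℝ → ℝ} (hf : ∀ x ∈ D, HasDerivAt f (f' x) x)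
    (hf' : ∀ x ∈ D, HasDerivAt f' (f'' x) x) (hf'' : ∀ x ∈ D, 0 ≤ f'' x) : ConvexOn ℝ D f := by
  rw [← hDo.interior_eq] at hf hf' hf''
  refine convexOn_of_hasDerivWithinAt2_nonneg hD (fun x hx => ?_)
    (fun x hx => (hf x hx).hasDerivWithinAt) (fun x hx => (hf' x hx).hasDerivWithinAt) hf''
  rw [← hDo.interior_eq] at hx
  exact (hf x hx).continuousAt.continuousWithinAt

theorem convexOn_log_Gamma_one_add_mul {c : ℝ} (hc : 0 ≤ c) :
    ConvexOn ℝ (Ioi 0) fun t => log (Gamma (1 + c * t)) := by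
  refine (convexOn_log_Gamma.comp_affineMap (AffineMap.lineMap 1 (1 + c))).subset
    (fun t (ht : 0 < t) => ?_) (convex_Ioi 0) |>.congr fun t _ => ?_
  all_goals simp only [Function.comp_apply, Set.mem_preimage, Set.mem_Ioi,
    AffineMap.lineMap_apply_ring', add_sub_cancel_left]
  · positivity
  · ring_nf

theorem Nat.ceil_add_ceil_le {u v : ℝ} (hu : 0 ≤ u) (hv : 0 ≤ v) :
    ⌈u⌉₊ + ⌈v⌉₊ ≤ ⌈u + v⌉₊ + 1 := by
  zify
  rw [Int.natCast_ceil_eq_ceil hu, Int.natCast_ceil_eq_ceil hv,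
    Int.natCast_ceil_eq_ceil (add_nonneg hu hv)]
  exact Int.ceil_add_ceil_le u v

theorem card_filter_range_one_add_div_lt {c : ℝ} (hc : 0 < c) (N : ℕ) (x : ℝ) :
    #{j ∈ Finset.range N | (1 + (j : ℕ)) / c < x} = min N (⌈c * x⌉₊ - 1) := by
  convert Finset.card_range (min N (⌈c * x⌉₊ - 1)) using 2
  ext j
  have hceil := Nat.lt_ceil (n := 1 + j) (a := c * x)
  push_cast at hceil
  rw [mem_filter, Finset.mem_range, Finset.mem_range, div_lt_iff₀' hc, ← hceil]
  omega

theorem card_filter_add_card_filter_le {a b x : ℝ} (ha : 0 < a) (hb : 0 < b) (hx : 0 < x)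
    (N : ℕ) :
    #{j ∈ Finset.range N | (1 + (j : ℕ)) / a < x} + #{j ∈ Finset.range N | (1 + (j : ℕ)) / b < x}
      ≤ #{j ∈ Finset.range (2 * N) | (1 + (j : ℕ)) / (a + b) < x} := by
  rw [card_filter_range_one_add_div_lt ha, card_filter_range_one_add_div_lt hb,
    card_filter_range_one_add_div_lt (add_pos ha hb)]
  have hsum := Nat.ceil_add_ceil_le (mul_pos ha hx).le (mul_pos hb hx).le
  have hla : ⌈a * x⌉₊ ≤ ⌈(a + b) * x⌉₊ := Nat.ceil_mono (by nlinarith)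
  have hlb : ⌈b * x⌉₊ ≤ ⌈(a + b) * x⌉₊ := Nat.ceil_mono (by nlinarith)
  rw [← add_mul] at hsum
  omega

theorem hasDerivAt_neg_inv_sq_add {t x : ℝ} (h : t + x ≠ 0) :
    HasDerivAt (fun x => -((t + x) ^ 2)⁻¹) (2 / (t + x) ^ 3) x := by
  refine ((((hasDerivAt_id x).const_add t).fun_pow 2).fun_inv
    (pow_ne_zero 2 h)).fun_neg.congr_deriv ?_
  simp only [id]
  field_simp
  ring

theorem tendsto_neg_inv_sq_add_atTop (t : ℝ) :
    Tendsto (fun x => -((t + x) ^ 2)⁻¹) atTop (𝓝 0) := by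
  simpa using ((tendsto_pow_atTop two_ne_zero).comp
    (tendsto_atTop_add_const_left _ t tendsto_id)).inv_tendsto_atTop.neg

theorem integrableOn_two_div_cube {t p : ℝ} (h : 0 < t + p) :
    IntegrableOn (fun x => 2 / (t + x) ^ 3) (Ioi p) :=
  integrableOn_Ioi_deriv_of_nonneg'
    (fun x hx => hasDerivAt_neg_inv_sq_add (by linarith [Set.mem_Ici.1 hx] : 0 < t + x).ne')
    (fun x hx => div_nonneg zero_le_two (pow_nonneg (by linarith [Set.mem_Ioi.1 hx]) 3))
    (tendsto_neg_inv_sq_add_atTop t)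

theorem integral_two_div_cube {t p : ℝ} (h : 0 < t + p) :
    ∫ x in Ioi p, 2 / (t + x) ^ 3 = 1 / (t + p) ^ 2 := by
  rw [integral_Ioi_of_hasDerivAt_of_nonneg'
    (fun x hx => hasDerivAt_neg_inv_sq_add (by linarith [Set.mem_Ici.1 hx] : 0 < t + x).ne')
    (fun x hx => div_nonneg zero_le_two (pow_nonneg (by linarith [Set.mem_Ioi.1 hx]) 3))
    (tendsto_neg_inv_sq_add_atTop t)]
  ring

section

variable {ι κ : Type*} {t : ℝ}

theorem sum_indicator_Ioi_eq_card_mul (s : Finset ι) (p : ι → ℝ) (g : ℝ → ℝ) (x : ℝ) :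
    ∑ i ∈ s, (Ioi (p i)).indicator g x = #{i ∈ s | p i < x} * g x := by
  rw [sum_indicator_eq_sum_filter, sum_const, nsmul_eq_mul]
  rfl

theorem integrableOn_card_mul_two_div_cube (s : Finset ι) {p : ι → ℝ} (hp : ∀ i ∈ s, 0 ≤ p i)
    (ht : 0 < t) :
    IntegrableOn (fun x => #{i ∈ s | p i < x} * (2 / (t + x) ^ 3)) (Ioi 0) := by
  simp_rw [← sum_indicator_Ioi_eq_card_mul s p fun x => 2 / (t + x) ^ 3]
  exact integrable_finsetSum _ fun i hi => ((integrableOn_two_div_cube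
    (by linarith [hp i hi])).integrable_indicator measurableSet_Ioi).integrableOn

theorem sum_inv_sq_eq_integral_card (s : Finset ι) {p : ι → ℝ} (hp : ∀ i ∈ s, 0 ≤ p i)
    (ht : 0 < t) :
    ∑ i ∈ s, 1 / (t + p i) ^ 2 = ∫ x in Ioi 0, #{i ∈ s | p i < x} * (2 / (t + x) ^ 3) := by
  have hpt : ∀ i ∈ s, 0 < t + p i := fun i hi => by linarith [hp i hi]
  simp_rw [← sum_indicator_Ioi_eq_card_mul s p fun x => 2 / (t + x) ^ 3]
  rw [integral_finsetSum _ fun i hi => ((integrableOn_two_div_cube (hpt i hi)).integrable_indicator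
    measurableSet_Ioi).integrableOn]
  refine sum_congr rfl fun i hi => ?_
  rw [setIntegral_indicator measurableSet_Ioi, Ioi_inter_Ioi, max_eq_right (hp i hi),
    integral_two_div_cube (hpt i hi)]

theorem sum_inv_sq_le_of_card_filter_le {s : Finset ι} {s' : Finset κ} {p : ι → ℝ} {q : κ → ℝ}
    (hp : ∀ i ∈ s, 0 ≤ p i) (hq : ∀ k ∈ s', 0 ≤ q k) (ht : 0 < t)
    (hcard : ∀ x, 0 < x → #{i ∈ s | p i < x} ≤ #{k ∈ s' | q k < x}) :
    ∑ i ∈ s, 1 / (t + p i) ^ 2 ≤ ∑ k ∈ s', 1 / (t + q k) ^ 2 := by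
  rw [sum_inv_sq_eq_integral_card s hp ht, sum_inv_sq_eq_integral_card s' hq ht]
  refine setIntegral_mono_on (integrableOn_card_mul_two_div_cube s hp ht)
    (integrableOn_card_mul_two_div_cube s' hq ht) measurableSet_Ioi fun x (hx : 0 < x) => ?_
  gcongr
  exact hcard x hx

theorem sum_inv_sq_add_sum_inv_sq_le {a b : ℝ} (ha : 0 < a) (hb : 0 < b) (ht : 0 < t) (N : ℕ) :
    ∑ j ∈ Finset.range N, 1 / (t + (1 + j) / a) ^ 2
      + ∑ j ∈ Finset.range N, 1 / (t + (1 + j) / b) ^ 2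
      ≤ ∑ j ∈ Finset.range (2 * N), 1 / (t + (1 + j) / (a + b)) ^ 2 := by
  set pa : ℕ → ℝ := fun j => (1 + j) / a
  set pb : ℕ → ℝ := fun j => (1 + j) / b
  have hsplit := sum_disjSum (Finset.range N) (Finset.range N)
    fun j => 1 / (t + Sum.elim pa pb j) ^ 2
  simp only [Sum.elim_inl, Sum.elim_inr] at hsplit
  rw [← hsplit]
  refine sum_inv_sq_le_of_card_filter_le ?_ (fun j _ => by positivity) ht fun x hx => ?_
  · rintro (j | j) _ <;> simp only [Sum.elim_inl, Sum.elim_inr, pa, pb] <;> positivity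
  · have hcount := card_filter_add_card_filter_le ha hb hx N
    simp only [card_filter, sum_disjSum, Sum.elim_inl, Sum.elim_inr] at hcount ⊢
    exact hcount

theorem hasDerivAt_sum_one_div_add {s : Finset ι} {p : ι → ℝ} (h : ∀ i ∈ s, t + p i ≠ 0) :
    HasDerivAt (fun t => ∑ i ∈ s, 1 / (t + p i)) (-∑ i ∈ s, 1 / (t + p i) ^ 2) t := by
  rw [← sum_neg_distrib]
  exact .fun_sum fun i hi => by
    simpa [neg_div] using ((hasDerivAt_id t).add_const (p i)).fun_inv (h i hi)

theorem hasDerivAt_logGammaSeq_one_add_mul {c : ℝ} (hc : 0 < c) (ht : 0 < t) (n : ℕ) :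
    HasDerivAt (fun t => logGammaSeq (1 + c * t) n)
      (c * log n - ∑ j ∈ Finset.range (n + 1), 1 / (t + (1 + j) / c)) t := by
  have hlin : HasDerivAt (fun t => 1 + c * t) c t := by
    simpa using ((hasDerivAt_id t).const_mul c).const_add 1
  have hlog : ∀ j ∈ Finset.range (n + 1), HasDerivAt (fun t => log (1 + c * t + j))
      (1 / (t + (1 + j) / c)) t := fun j _ => by
    refine ((hlin.add_const (j : ℝ)).log (by positivity)).congr_deriv ?_
    field_simp
    ring
  exact (((hlin.mul_const (log n)).add_const _).fun_sub (.fun_sum hlog)).congr_deriv (by ring)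

end

/-- The `a + b` approximant carries twice as many factors, so that its point count keeps up with
those of `a` and `b` together. -/
theorem convexOn_logGammaSeq_add_sub {a b : ℝ} (ha : 0 < a) (hb : 0 < b) (n : ℕ) :
    ConvexOn ℝ (Ioi 0) fun t => logGammaSeq (1 + (a + b) * t) (2 * n + 1)
      - logGammaSeq (1 + a * t) n - logGammaSeq (1 + b * t) n := by
  have hab := add_pos ha hb
  have hpos : ∀ {c t : ℝ}, 0 < c → 0 < t → ∀ j : ℕ, t + (1 + j) / c ≠ 0 :=
    fun hc ht j => by positivity
  refine convexOn_of_hasDerivAt2_nonneg (convex_Ioi 0) isOpen_Ioi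
    (fun t (ht : 0 < t) => ((hasDerivAt_logGammaSeq_one_add_mul hab ht (2 * n + 1)).sub
      (hasDerivAt_logGammaSeq_one_add_mul ha ht n)).sub
      (hasDerivAt_logGammaSeq_one_add_mul hb ht n))
    (fun t (ht : 0 < t) => (((hasDerivAt_const t _).sub
      (hasDerivAt_sum_one_div_add fun j _ => hpos hab ht j)).sub ((hasDerivAt_const t _).sub
      (hasDerivAt_sum_one_div_add fun j _ => hpos ha ht j))).sub ((hasDerivAt_const t _).sub
      (hasDerivAt_sum_one_div_add fun j _ => hpos hb ht j)))
    (fun t (ht : 0 < t) => ?_)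
  have hkey := sum_inv_sq_add_sum_inv_sq_le ha hb ht (n + 1)
  rw [show 2 * (n + 1) = 2 * n + 1 + 1 by ring] at hkey
  linarith

theorem convexOn_log_Gamma_add_sub {a b : ℝ} (ha : 0 < a) (hb : 0 ≤ b) :
    ConvexOn ℝ (Ioi 0) fun t =>
      log (Gamma (1 + (a + b) * t)) - log (Gamma (1 + a * t)) - log (Gamma (1 + b * t)) := by
  rcases hb.eq_or_lt with rfl | hb
  · simpa using convexOn_const (0 : ℝ) (convex_Ioi 0)
  refine convexOn_of_tendsto (l := atTop) (convex_Ioi 0)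
    (.of_forall (convexOn_logGammaSeq_add_sub ha hb)) fun t (ht : 0 < t) => ?_
  have hlim : ∀ {c : ℝ}, 0 < c →
      Tendsto (logGammaSeq (1 + c * t)) atTop (𝓝 (log (Gamma (1 + c * t)))) :=
    fun hc => tendsto_log_gamma (by positivity)
  have hodd : Tendsto (fun n : ℕ => 2 * n + 1) atTop atTop :=
    tendsto_atTop_mono (fun n => show n ≤ 2 * n + 1 by omega) tendsto_id
  exact (((hlim (add_pos ha hb)).comp hodd).sub (hlim ha)).sub (hlim hb)

theorem convexOn_log_Gamma_sum_sub_sum {ι : Type*} (s : Finset ι) {c : ι → ℝ}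
    (hc : ∀ i ∈ s, 0 < c i) :
    ConvexOn ℝ (Ioi 0) fun t =>
      log (Gamma (1 + (∑ i ∈ s, c i) * t)) - ∑ i ∈ s, log (Gamma (1 + c i * t)) := by
  classical
  induction s using Finset.induction_on with
  | empty => simpa using convexOn_const (0 : ℝ) (convex_Ioi 0)
  | insert i s hi ih =>
    have hsplit := convexOn_log_Gamma_add_sub (hc i (mem_insert_self i s))
      (sum_nonneg fun j hj => (hc j (mem_insert_of_mem hj)).le)
    refine (hsplit.add (ih fun j hj => hc j (mem_insert_of_mem hj))).congr fun t _ => ?_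
    simp only [Pi.add_apply, sum_insert hi]
    ring

theorem log_prod_Gamma_div_rpow {ι κ : Type*} [Fintype ι] [Fintype κ] {lam : ι → κ → ℝ}
    (hlam : ∀ i j, 0 ≤ lam i j) (ρ : ℝ) {t : ℝ} (ht : 0 < t) :
    log ((∏ i, Gamma (1 + (∑ j, lam i j) * t)) * (∏ j, Gamma (1 + (∑ i, lam i j) * t)) /
        (∏ i, ∏ j, Gamma (1 + lam i j * t)) ^ ρ) =
      ∑ i, (log (Gamma (1 + (∑ j, lam i j) * t)) - ∑ j, log (Gamma (1 + lam i j * t)))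
        + ∑ j, (log (Gamma (1 + (∑ i, lam i j) * t)) - ∑ i, log (Gamma (1 + lam i j * t)))
        + (2 - ρ) * ∑ i, ∑ j, log (Gamma (1 + lam i j * t)) := by
  have hΓ : ∀ {c : ℝ}, 0 ≤ c → 0 < Gamma (1 + c * t) := fun hc => Gamma_pos_of_pos (by positivity)
  have hrow : ∀ i, 0 < Gamma (1 + (∑ j, lam i j) * t) :=
    fun i => hΓ (sum_nonneg fun j _ => hlam i j)
  have hcol : ∀ j, 0 < Gamma (1 + (∑ i, lam i j) * t) :=
    fun j => hΓ (sum_nonneg fun i _ => hlam i j)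
  have hprod : ∀ i, 0 < ∏ j, Gamma (1 + lam i j * t) := fun i => prod_pos fun j _ => hΓ (hlam i j)
  have hA := prod_pos (s := univ) fun i _ => hrow i
  have hB := prod_pos (s := univ) fun j _ => hcol j
  have hL := prod_pos (s := univ) fun i _ => hprod i
  rw [log_div (mul_pos hA hB).ne' (rpow_pos_of_pos hL ρ).ne', log_mul hA.ne' hB.ne', log_rpow hL,
    log_prod fun i _ => (hrow i).ne', log_prod fun j _ => (hcol j).ne',
    log_prod fun i _ => (hprod i).ne',
    sum_congr rfl fun i _ => log_prod fun j _ => (hΓ (hlam i j)).ne']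
  rw [sum_sub_distrib, sum_sub_distrib, sum_comm (f := fun j i => log (Gamma (1 + lam i j * t)))]
  ring

theorem log_convex_ratio_gamma_general
    (m n : ℕ)
    (lam : Fin m → Fin n → ℝ) (hlam : ∀ i j, 0 < lam i j)
    (α : Fin m → ℝ) (hα : ∀ i, α i = ∑ j : Fin n, lam i j)
    (β : Fin n → ℝ) (hβ : ∀ j, β j = ∑ i : Fin m, lam i j)
    (ρ : ℝ) (hρ : ρ ≤ 2)
    (f : ℝ → ℝ)
    (hf : ∀ t, f t =
      ((∏ i : Fin m, Real.Gamma (1 + α i * t)) * ∏ j : Fin n, Real.Gamma (1 + β j * t)) /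
        (∏ i : Fin m, ∏ j : Fin n, Real.Gamma (1 + lam i j * t)) ^ ρ) :
    ConvexOn ℝ (Set.Ioi (0 : ℝ)) (fun t => Real.log (f t)) := by
  have hrows := ConvexOn.finsetSum (convex_Ioi 0) univ fun i _ =>
    convexOn_log_Gamma_sum_sub_sum univ fun j _ => hlam i j
  have hcols := ConvexOn.finsetSum (convex_Ioi 0) univ fun j _ =>
    convexOn_log_Gamma_sum_sub_sum univ fun i _ => hlam i j
  have hcells := ConvexOn.finsetSum (convex_Ioi 0) univ fun i _ =>
    ConvexOn.finsetSum (convex_Ioi 0) univ fun j _ => convexOn_log_Gamma_one_add_mul (hlam i j).le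
  refine ((hrows.add hcols).add (hcells.smul (sub_nonneg.2 hρ))).congr fun t (ht : 0 < t) => ?_
  simp only [hf, hα, hβ, log_prod_Gamma_div_rpow (fun i j => (hlam i j).le) ρ ht, Pi.add_apply,
    smul_eq_mul]

theorem log_convex_ratio_gamma
    (m n : ℕ) (hm : 0 < m) (hn : 0 < n)
    (lam : Fin m → Fin n → ℝ) (hlam : ∀ i j, 0 < lam i j)
    (α : Fin m → ℝ) (hα : ∀ i, α i = ∑ j : Fin n, lam i j)
    (β : Fin n → ℝ) (hβ : ∀ j, β j = ∑ i : Fin m, lam i j)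
    (ρ : ℝ) (hρ : ρ ≤ 2)
    (f : ℝ → ℝ)
    (hf : ∀ t, f t =
      ((∏ i : Fin m, Real.Gamma (1 + α i * t)) * ∏ j : Fin n, Real.Gamma (1 + β j * t)) /
        (∏ i : Fin m, ∏ j : Fin n, Real.Gamma (1 + lam i j * t)) ^ ρ) :
    ConvexOn ℝ (Set.Ioi (0 : ℝ)) (fun t => Real.log (f t)) :=
  log_convex_ratio_gamma_general m n lam hlam α hα β hβ ρ hρ f hf
end

section
/- Let m, n be positive integers, λ_{ij} > 0 for 1 ≤ i ≤ m, 1 ≤ j ≤ n, α_i = ∑_{j=1}^n λ_{ij}, β_j = ∑_{i=1}^m λ_{ij}, and take ρ = 2. Then the logarithmic derivative (ln f)'(t) = f'(t)/f(t) of f(t) = [∏_{i=1}^m Γ(1+α_i t) · ∏_{j=1}^n Γ(1+β_j t)] / [∏_{i=1}^m ∏_{j=1}^n Γ(1+λ_{ij} t)]² is a Bernstein function on (0, ∞): (ln f)'(t) ≥ 0 for all t > 0, and its derivative (ln f)'' is completely monotonic on (0, ∞). -/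
/-!
Write `log f(t)` as `Σᵢ g(αᵢ) + Σⱼ g(βⱼ) - 2 Σᵢⱼ g(λᵢⱼ)` with `g(a) = log Γ(1 + a t)`, and
differentiate the series `log Γ(1 + x) = -γ x + Σₖ (x / (k + 1) - log (1 + x / (k + 1)))` term by
term. The `p`-th `t`-derivative of `log Γ(1 + a t)` is `-γ a + Σₖ a² t / ((k + 1)(k + 1 + a t))`
for `p = 1` and `(-1)ᵖ (p - 1)! Σₖ (a / (k + 1 + a t))ᵖ` for `p ≥ 2`. The term `-γ a` cancels
because `Σᵢ αᵢ + Σⱼ βⱼ = 2 Σᵢⱼ λᵢⱼ`. Both series are superadditive in `a` and vanish at `a = 0`;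
since `αᵢ` and `βⱼ` are the row and column sums of `λ`, superadditivity gives
`Σⱼ g(λᵢⱼ) ≤ g(αᵢ)` and `Σᵢ g(λᵢⱼ) ≤ g(βⱼ)`, hence the sign of every derivative.
-/

open Finset Filter Set Real Topology
open scoped Nat

local notation "γ" => Real.eulerMascheroniConstant

theorem summable_one_div_nat_add_one_pow {q : ℕ} (hq : 2 ≤ q) :
    Summable fun k : ℕ => 1 / ((k : ℝ) + 1) ^ q := by
  simpa using (summable_nat_add_iff 1).mpr (Real.summable_one_div_nat_pow.mpr hq)

theorem one_div_add_pow_le (q : ℕ) {K y : ℝ} (hK : 0 < K) (hy : 0 ≤ y) :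
    1 / (K + y) ^ q ≤ 1 / K ^ q :=
  one_div_le_one_div_of_le (by positivity) (pow_le_pow_left₀ hK.le (by linarith) q)

theorem summable_one_div_nat_add_one_add_pow {q : ℕ} (hq : 2 ≤ q) {y : ℝ} (hy : 0 ≤ y) :
    Summable fun k : ℕ => 1 / ((k : ℝ) + 1 + y) ^ q :=
  (summable_one_div_nat_add_one_pow hq).of_nonneg_of_le (fun _ => by positivity)
    fun _ => one_div_add_pow_le q (by positivity) hy

theorem one_div_sub_one_div_add_le {K y : ℝ} (hK : 0 < K) (hy : 0 ≤ y) :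
    1 / K - 1 / (K + y) ≤ y / K ^ 2 := by
  rw [div_sub_div _ _ hK.ne' (by positivity), div_le_div_iff₀ (by positivity) (by positivity)]
  nlinarith [mul_nonneg hy hK.le, mul_nonneg (mul_nonneg hy hK.le) hy]

theorem summable_one_div_nat_add_one_sub {y : ℝ} (hy : 0 ≤ y) :
    Summable fun k : ℕ => 1 / ((k : ℝ) + 1) - 1 / ((k : ℝ) + 1 + y) := by
  refine ((summable_one_div_nat_add_one_pow le_rfl).mul_left y).of_nonneg_of_le
    (fun k => sub_nonneg.2 <| one_div_le_one_div_of_le (by positivity) (by linarith)) fun k => ?_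
  rw [← mul_div_assoc, mul_one]
  exact one_div_sub_one_div_add_le (by positivity) hy

theorem log_factorial (N : ℕ) : log (N ! : ℝ) = ∑ k ∈ range N, log ((k : ℝ) + 1) := by
  rw [← prod_range_add_one_eq_factorial, Nat.cast_prod, log_prod fun k _ => by positivity]
  push_cast
  rfl

theorem logGammaSeq_one_add {x : ℝ} (hx : 0 ≤ x) (N : ℕ) :
    BohrMollerup.logGammaSeq (1 + x) N =
      (1 + x) * log N - log (N + 1) - ∑ k ∈ range (N + 1), log (1 + x / (k + 1)) := by
  have hsplit : ∀ k : ℕ, log (1 + x + k) = log ((k : ℝ) + 1) + log (1 + x / (k + 1)) :=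
    fun k => by
      rw [← log_mul (by positivity) (by positivity)]
      congr 1
      field_simp
      ring
  rw [BohrMollerup.logGammaSeq, sum_congr rfl fun k _ => hsplit k, sum_add_distrib,
    sum_range_succ, log_factorial]
  ring

theorem hasSum_log_Gamma_one_add {x : ℝ} (hx : 0 ≤ x) :
    HasSum (fun k : ℕ => x / (k + 1) - log (1 + x / (k + 1))) (log (Gamma (1 + x)) + γ * x) := by
  have hterm : ∀ k : ℕ, 0 ≤ x / (k + 1) - log (1 + x / (k + 1)) := fun k => by
    have := log_le_sub_one_of_pos (show 0 < 1 + x / (k + 1) by positivity)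
    linarith
  rw [hasSum_iff_tendsto_nat_of_nonneg hterm, ← tendsto_add_atTop_iff_nat 1]
  have hpartial : ∀ N : ℕ, ∑ k ∈ range (N + 1), (x / (k + 1) - log (1 + x / (k + 1))) =
      BohrMollerup.logGammaSeq (1 + x) N + x * (harmonic (N + 1) - log ↑(N + 1)) +
        (1 + x) * (log (N + 1) - log N) := by
    intro N
    have hharm : ∑ k ∈ range (N + 1), x / ((k : ℝ) + 1) = x * harmonic (N + 1) := by
      simp [harmonic, mul_sum, div_eq_mul_inv]
    rw [logGammaSeq_one_add hx, sum_sub_distrib, hharm]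
    push_cast
    ring
  simp only [hpartial]
  have hharm := tendsto_harmonic_sub_log.comp (tendsto_add_atTop_nat 1)
  have := ((BohrMollerup.tendsto_log_gamma (show 0 < 1 + x by linarith)).add
    (hharm.const_mul x)).add (tendsto_log_nat_add_one_sub_log.const_mul (1 + x))
  simpa [mul_comm x] using this

theorem hasDerivAt_one_div_add_pow (q : ℕ) {c y : ℝ} (h : c + y ≠ 0) :
    HasDerivAt (fun y => 1 / (c + y) ^ q) (-q * (1 / (c + y) ^ (q + 1))) y := by
  have := (((hasDerivAt_id' y).const_add c).fun_pow q).fun_inv (pow_ne_zero q h)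
  simp only [one_div]
  refine this.congr_deriv ?_
  rcases q with _ | q
  · simp
  · rw [Nat.add_sub_cancel]
    field_simp
    ring

theorem hasDerivAt_log_Gamma_one_add {x : ℝ} (hx : 0 < x) :
    HasDerivAt (fun y => log (Gamma (1 + y)))
      (∑' k : ℕ, (1 / ((k : ℝ) + 1) - 1 / ((k : ℝ) + 1 + x)) - γ) x := by
  have hterm : ∀ (k : ℕ), ∀ y ∈ Ioo 0 (x + 1), HasDerivAt
      (fun y => y / (k + 1) - log (1 + y / (k + 1)))
      (1 / ((k : ℝ) + 1) - 1 / ((k : ℝ) + 1 + y)) y := by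
    intro k y hy
    have hpos : 0 < 1 + y / ((k : ℝ) + 1) := by have := hy.1; positivity
    refine (((hasDerivAt_id' y).div_const ((k : ℝ) + 1)).fun_sub
      ((((hasDerivAt_id' y).div_const ((k : ℝ) + 1)).const_add 1).log hpos.ne')).congr_deriv ?_
    field_simp
  have hbound : ∀ (k : ℕ), ∀ y ∈ Ioo 0 (x + 1),
      ‖1 / ((k : ℝ) + 1) - 1 / ((k : ℝ) + 1 + y)‖ ≤ (x + 1) * (1 / ((k : ℝ) + 1) ^ 2) := by
    intro k y hy
    rw [Real.norm_of_nonneg (sub_nonneg.2 <| one_div_le_one_div_of_le (by positivity)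
      (by linarith [hy.1])), ← mul_div_assoc, mul_one]
    exact (one_div_sub_one_div_add_le (by positivity) hy.1.le).trans (by gcongr; exact hy.2.le)
  have hseries := hasDerivAt_tsum_of_isPreconnected
    ((summable_one_div_nat_add_one_pow le_rfl).mul_left (x + 1)) isOpen_Ioo isPreconnected_Ioo
    hterm hbound ⟨hx, by linarith⟩ (hasSum_log_Gamma_one_add hx.le).summable ⟨hx, by linarith⟩
  refine (hseries.fun_sub ((hasDerivAt_id' x).const_mul γ)).congr_of_eventuallyEq ?_
    |>.congr_deriv (by ring)
  filter_upwards [Ioi_mem_nhds hx] with y hy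
  rw [(hasSum_log_Gamma_one_add hy.le).tsum_eq]
  ring

theorem hasDerivAt_tsum_one_div_sub {x : ℝ} (hx : 0 < x) :
    HasDerivAt (fun y => ∑' k : ℕ, (1 / ((k : ℝ) + 1) - 1 / ((k : ℝ) + 1 + y)))
      (∑' k : ℕ, 1 / ((k : ℝ) + 1 + x) ^ 2) x := by
  refine hasDerivAt_tsum_of_isPreconnected
    (g := fun (k : ℕ) y => 1 / ((k : ℝ) + 1) - 1 / ((k : ℝ) + 1 + y))
    (g' := fun (k : ℕ) y => 1 / ((k : ℝ) + 1 + y) ^ 2)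
    (summable_one_div_nat_add_one_pow le_rfl) isOpen_Ioi isPreconnected_Ioi
    (fun k y (hy : 0 < y) => ?_) (fun k y (hy : 0 < y) => ?_) hx
    (summable_one_div_nat_add_one_sub hx.le) hx
  · have hy : (0 : ℝ) < k + 1 + y := by positivity
    simpa using (hasDerivAt_one_div_add_pow 1 hy.ne').const_sub (1 / ((k : ℝ) + 1))
  · rw [Real.norm_of_nonneg (by positivity)]
    exact one_div_add_pow_le _ (by positivity) hy.le

theorem hasDerivAt_tsum_one_div_add_pow {q : ℕ} (hq : 2 ≤ q) {x : ℝ} (hx : 0 < x) :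
    HasDerivAt (fun y => ∑' k : ℕ, 1 / ((k : ℝ) + 1 + y) ^ q)
      (-q * ∑' k : ℕ, 1 / ((k : ℝ) + 1 + x) ^ (q + 1)) x := by
  rw [← tsum_mul_left]
  refine hasDerivAt_tsum_of_isPreconnected (g := fun (k : ℕ) y => 1 / ((k : ℝ) + 1 + y) ^ q)
    (g' := fun (k : ℕ) y => -q * (1 / ((k : ℝ) + 1 + y) ^ (q + 1)))
    ((summable_one_div_nat_add_one_pow (by omega : 2 ≤ q + 1)).mul_left (q : ℝ)) isOpen_Ioi
    isPreconnected_Ioi (fun k y (hy : 0 < y) => ?_) (fun k y (hy : 0 < y) => ?_) hx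
    (summable_one_div_nat_add_one_add_pow hq hx.le) hx
  · have hy : (0 : ℝ) < k + 1 + y := by positivity
    exact hasDerivAt_one_div_add_pow q hy.ne'
  · rw [norm_mul, norm_neg, Real.norm_natCast, Real.norm_of_nonneg (by positivity)]
    exact mul_le_mul_of_nonneg_left (one_div_add_pow_le _ (by positivity) hy.le) q.cast_nonneg

/-- For `p ≥ 1` this is the polygamma value `ψ⁽ᵖ⁻¹⁾(1 + x)`. -/
noncomputable def logGammaOneAddDeriv : ℕ → ℝ → ℝ
  | 0, x => log (Gamma (1 + x))
  | 1, x => ∑' k : ℕ, (1 / ((k : ℝ) + 1) - 1 / ((k : ℝ) + 1 + x)) - γ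
  | p + 2, x => (-1) ^ p * ((p + 1)! : ℝ) * ∑' k : ℕ, 1 / ((k : ℝ) + 1 + x) ^ (p + 2)

theorem hasDerivAt_logGammaOneAddDeriv (p : ℕ) {x : ℝ} (hx : 0 < x) :
    HasDerivAt (logGammaOneAddDeriv p) (logGammaOneAddDeriv (p + 1) x) x := by
  match p with
  | 0 => exact hasDerivAt_log_Gamma_one_add hx
  | 1 =>
    exact ((hasDerivAt_tsum_one_div_sub hx).sub_const γ).congr_deriv
      (by simp [logGammaOneAddDeriv])
  | p + 2 =>
    refine ((hasDerivAt_tsum_one_div_add_pow (by omega) hx).const_mul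
      ((-1) ^ p * ((p + 1)! : ℝ))).congr_deriv ?_
    simp only [logGammaOneAddDeriv, Nat.factorial_succ (p + 1)]
    push_cast
    ring

theorem hasDerivAt_pow_mul_logGammaOneAddDeriv_mul (p : ℕ) {a t : ℝ} (ha : 0 ≤ a) (ht : 0 < t) :
    HasDerivAt (fun s => a ^ p * logGammaOneAddDeriv p (a * s))
      (a ^ (p + 1) * logGammaOneAddDeriv (p + 1) (a * t)) t := by
  rcases ha.eq_or_lt with rfl | ha
  · simpa using hasDerivAt_const t (0 ^ p * logGammaOneAddDeriv p 0)
  · refine (((hasDerivAt_logGammaOneAddDeriv p (mul_pos ha ht)).comp t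
      ((hasDerivAt_id' t).const_mul a)).const_mul (a ^ p)).congr_deriv ?_
    ring

/-- Merging the grids `(k + 1) / a` and `(l + 1) / b` in increasing order, the `m`-th merged point
is at least `(m + 1) / (a + b)`; the induction removes the larger of the two last points. -/
theorem sum_range_add_sum_range_le {u : ℝ → ℝ} (hu : AntitoneOn u (Ioi 0)) {a b : ℝ}
    (ha : 0 < a) (hb : 0 < b) (K L : ℕ) :
    ∑ k ∈ range K, u ((k + 1) / a) + ∑ k ∈ range L, u ((k + 1) / b) ≤
      ∑ k ∈ range (K + L), u ((k + 1) / (a + b)) := by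
  obtain ⟨N, hN⟩ : ∃ N, K + L = N := ⟨_, rfl⟩
  induction N generalizing K L a b with
  | zero =>
    obtain ⟨rfl, rfl⟩ : K = 0 ∧ L = 0 := by omega
    simp
  | succ N ih =>
    wlog hLK : L * a ≤ K * b generalizing K L a b
    · have := this hb ha L K (by omega) (by linarith)
      rwa [add_comm, add_comm b, add_comm L] at this
    obtain ⟨K, rfl⟩ : ∃ K', K = K' + 1 := Nat.exists_eq_add_one.2 <| Nat.pos_of_ne_zero <| by
      rintro rfl
      have : (0 : ℝ) < L * a := mul_pos (by exact_mod_cast (show 0 < L by omega)) ha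
      simp only [CharP.cast_eq_zero, zero_mul] at hLK
      linarith
    have hstep : u ((K + 1) / a) ≤ u (((K + L : ℕ) + 1) / (a + b)) := by
      refine hu (mem_Ioi.2 (by positivity)) (mem_Ioi.2 (by positivity)) ?_
      rw [div_le_div_iff₀ (by positivity) ha]
      push_cast at hLK ⊢
      nlinarith
    rw [sum_range_succ, show K + 1 + L = K + L + 1 by omega, sum_range_succ]
    push_cast at hstep ⊢
    linarith [ih ha hb K L (by omega)]

theorem tsum_add_tsum_le {u : ℝ → ℝ} (hu : AntitoneOn u (Ioi 0)) (hu0 : ∀ y, 0 < y → 0 ≤ u y)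
    (hsum : ∀ c, 0 < c → Summable fun k : ℕ => u ((k + 1) / c)) {a b : ℝ} (ha : 0 < a)
    (hb : 0 < b) :
    ∑' k : ℕ, u ((k + 1) / a) + ∑' k : ℕ, u ((k + 1) / b) ≤ ∑' k : ℕ, u ((k + 1) / (a + b)) :=
  le_of_tendsto' ((hsum a ha).hasSum.tendsto_sum_nat.add (hsum b hb).hasSum.tendsto_sum_nat)
    fun N => (sum_range_add_sum_range_le hu ha hb N N).trans
      ((hsum _ (add_pos ha hb)).sum_le_tsum _ fun k _ => hu0 _ (by positivity))

theorem mul_tsum_one_div_sub_superadditive {t a b : ℝ} (ht : 0 ≤ t) (ha : 0 ≤ a) (hb : 0 ≤ b) :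
    a * ∑' k : ℕ, (1 / ((k : ℝ) + 1) - 1 / ((k : ℝ) + 1 + a * t)) +
        b * ∑' k : ℕ, (1 / ((k : ℝ) + 1) - 1 / ((k : ℝ) + 1 + b * t)) ≤
      (a + b) * ∑' k : ℕ, (1 / ((k : ℝ) + 1) - 1 / ((k : ℝ) + 1 + (a + b) * t)) := by
  have hs : ∀ c, 0 ≤ c →
      Summable fun k : ℕ => c * (1 / ((k : ℝ) + 1) - 1 / ((k : ℝ) + 1 + c * t)) :=
    fun c hc => (summable_one_div_nat_add_one_sub (by positivity)).mul_left c
  rw [← tsum_mul_left, ← tsum_mul_left, ← tsum_mul_left, ← (hs a ha).tsum_add (hs b hb)]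
  refine (hs a ha).add (hs b hb) |>.tsum_le_tsum (fun k => ?_) (hs _ (add_nonneg ha hb))
  have ha' : a / ((k : ℝ) + 1 + (a + b) * t) ≤ a / (k + 1 + a * t) := by
    gcongr
    nlinarith [mul_nonneg hb ht]
  have hb' : b / ((k : ℝ) + 1 + (a + b) * t) ≤ b / (k + 1 + b * t) := by
    gcongr
    nlinarith [mul_nonneg ha ht]
  simp only [mul_sub, mul_one_div, add_div]
  linarith

theorem pow_mul_tsum_one_div_add_pow_superadditive {q : ℕ} (hq : 2 ≤ q) {t a b : ℝ}
    (ht : 0 ≤ t) (ha : 0 < a) (hb : 0 < b) :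
    a ^ q * ∑' k : ℕ, 1 / ((k : ℝ) + 1 + a * t) ^ q +
        b ^ q * ∑' k : ℕ, 1 / ((k : ℝ) + 1 + b * t) ^ q ≤
      (a + b) ^ q * ∑' k : ℕ, 1 / ((k : ℝ) + 1 + (a + b) * t) ^ q := by
  have hterm : ∀ c, 0 < c → ∀ k : ℕ,
      c ^ q * (1 / ((k : ℝ) + 1 + c * t) ^ q) = 1 / ((k + 1) / c + t) ^ q := fun c hc k => by
    rw [show ((k : ℝ) + 1) / c + t = (k + 1 + c * t) / c by field_simp, div_pow, one_div_div,
      mul_one_div]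
  have hrw : ∀ c, 0 < c → c ^ q * ∑' k : ℕ, 1 / ((k : ℝ) + 1 + c * t) ^ q =
      ∑' k : ℕ, 1 / ((k + 1) / c + t) ^ q := fun c hc => by
    rw [← tsum_mul_left]
    exact tsum_congr (hterm c hc)
  rw [hrw a ha, hrw b hb, hrw _ (add_pos ha hb)]
  refine tsum_add_tsum_le (u := fun y => 1 / (y + t) ^ q) (fun x (hx : 0 < x) y _ hxy => ?_)
    (fun y hy => by positivity) (fun c hc => ?_) ha hb
  · exact one_div_le_one_div_of_le (by positivity)
      (pow_le_pow_left₀ (by positivity) (by linarith) q)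
  · exact ((summable_one_div_nat_add_one_add_pow hq (by positivity : 0 ≤ c * t)).mul_left
      (c ^ q)).congr (hterm c hc)

theorem iteratedDeriv_eqOn_of_hasDerivAt {𝕜 F : Type*} [NontriviallyNormedField 𝕜]
    [NormedAddCommGroup F] [NormedSpace 𝕜 F] {U : Set 𝕜} (hU : IsOpen U) {g : 𝕜 → F}
    {P : ℕ → 𝕜 → F} (h0 : EqOn g (P 0) U) (hP : ∀ p, ∀ t ∈ U, HasDerivAt (P p) (P (p + 1) t) t)
    (p : ℕ) : EqOn (iteratedDeriv p g) (P p) U := by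
  induction p with
  | zero => simpa using h0
  | succ p ih =>
    intro t ht
    rw [iteratedDeriv_succ, (ih.eventuallyEq_of_mem (hU.mem_nhds ht)).deriv_eq]
    exact (hP p t ht).deriv

theorem sum_le_apply_sum_of_superadditive {ν : Type*} {g : ℝ → ℝ} (h0 : g 0 = 0)
    (hg : ∀ a b, 0 ≤ a → 0 ≤ b → g a + g b ≤ g (a + b)) (s : Finset ν) {w : ν → ℝ}
    (hw : ∀ j ∈ s, 0 ≤ w j) : ∑ j ∈ s, g (w j) ≤ g (∑ j ∈ s, w j) := by
  have := le_sum_of_subadditive_on_pred (s := s) (fun x => -g x) (0 ≤ ·) (by simp [h0])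
    (fun a b ha hb => by linarith [hg a b ha hb]) (fun a b => add_nonneg) w hw
  simpa [sum_neg_distrib] using this

section MarginalExcess

variable {ι κ : Type*} [Fintype ι] [Fintype κ] {lam : ι → κ → ℝ}

def marginalExcess (lam : ι → κ → ℝ) (g : ℝ → ℝ) : ℝ :=
  ∑ i, g (∑ j, lam i j) + ∑ j, g (∑ i, lam i j) - 2 * ∑ i, ∑ j, g (lam i j)

theorem log_div_sq_eq_marginalExcess (hlam : ∀ i j, 0 ≤ lam i j) {g : ℝ → ℝ}
    (hg : ∀ a, 0 ≤ a → 0 < g a) :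
    log ((∏ i, g (∑ j, lam i j)) * (∏ j, g (∑ i, lam i j)) / (∏ i, ∏ j, g (lam i j)) ^ 2) =
      marginalExcess lam fun a => log (g a) := by
  have hrow : ∀ i, 0 < g (∑ j, lam i j) := fun i => hg _ (sum_nonneg fun j _ => hlam i j)
  have hcol : ∀ j, 0 < g (∑ i, lam i j) := fun j => hg _ (sum_nonneg fun i _ => hlam i j)
  have hent : ∀ i j, 0 < g (lam i j) := fun i j => hg _ (hlam i j)
  have hrow' : 0 < ∏ i, g (∑ j, lam i j) := prod_pos fun i _ => hrow i
  have hcol' : 0 < ∏ j, g (∑ i, lam i j) := prod_pos fun j _ => hcol j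
  have hent' : ∀ i, 0 < ∏ j, g (lam i j) := fun i => prod_pos fun j _ => hent i j
  have hent'' : 0 < ∏ i, ∏ j, g (lam i j) := prod_pos fun i _ => hent' i
  rw [log_div (by positivity) (by positivity), log_mul hrow'.ne' hcol'.ne', log_pow,
    log_prod fun i _ => (hrow i).ne', log_prod fun j _ => (hcol j).ne',
    log_prod fun i _ => (hent' i).ne']
  simp only [marginalExcess, log_prod fun j _ => (hent _ j).ne']
  push_cast
  ring

theorem marginalExcess_const_mul (lam : ι → κ → ℝ) (c : ℝ) (g : ℝ → ℝ) :
    marginalExcess lam (fun a => c * g a) = c * marginalExcess lam g := by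
  simp only [marginalExcess, ← mul_sum]
  ring

theorem hasDerivAt_marginalExcess (hlam : ∀ i j, 0 ≤ lam i j) {G G' : ℝ → ℝ → ℝ} {t : ℝ}
    (hG : ∀ a, 0 ≤ a → HasDerivAt (G a) (G' a t) t) :
    HasDerivAt (fun s => marginalExcess lam fun a => G a s)
      (marginalExcess lam fun a => G' a t) t :=
  ((HasDerivAt.fun_sum fun i _ => hG _ (sum_nonneg fun j _ => hlam i j)).fun_add
    (HasDerivAt.fun_sum fun j _ => hG _ (sum_nonneg fun i _ => hlam i j))).fun_sub
    ((HasDerivAt.fun_sum fun i _ => HasDerivAt.fun_sum fun j _ => hG _ (hlam i j)).const_mul 2)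

theorem marginalExcess_nonneg (hlam : ∀ i j, 0 ≤ lam i j) {g : ℝ → ℝ} (h0 : g 0 = 0)
    (hg : ∀ a b, 0 < a → 0 < b → g a + g b ≤ g (a + b)) :
    0 ≤ marginalExcess lam g := by
  have hg' : ∀ a b, 0 ≤ a → 0 ≤ b → g a + g b ≤ g (a + b) := by
    intro a b ha hb
    rcases ha.eq_or_lt with rfl | ha
    · simp [h0]
    rcases hb.eq_or_lt with rfl | hb
    · simp [h0]
    exact hg a b ha hb
  have hrow : ∑ i, ∑ j, g (lam i j) ≤ ∑ i, g (∑ j, lam i j) :=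
    sum_le_sum fun i _ => sum_le_apply_sum_of_superadditive h0 hg' _ fun j _ => hlam i j
  have hcol : ∑ i, ∑ j, g (lam i j) ≤ ∑ j, g (∑ i, lam i j) :=
    sum_comm.trans_le <| sum_le_sum fun j _ =>
      sum_le_apply_sum_of_superadditive h0 hg' _ fun i _ => hlam i j
  unfold marginalExcess
  linarith

theorem hasDerivAt_marginalExcess_logGammaOneAddDeriv (hlam : ∀ i j, 0 ≤ lam i j) (p : ℕ)
    {t : ℝ} (ht : 0 < t) :
    HasDerivAt (fun s => marginalExcess lam fun a => a ^ p * logGammaOneAddDeriv p (a * s))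
      (marginalExcess lam fun a => a ^ (p + 1) * logGammaOneAddDeriv (p + 1) (a * t)) t :=
  hasDerivAt_marginalExcess (G := fun a s => a ^ p * logGammaOneAddDeriv p (a * s))
    (G' := fun a s => a ^ (p + 1) * logGammaOneAddDeriv (p + 1) (a * s)) hlam
    fun _ ha => hasDerivAt_pow_mul_logGammaOneAddDeriv_mul p ha ht

theorem marginalExcess_logGammaOneAddDeriv_one_nonneg (hlam : ∀ i j, 0 ≤ lam i j) {t : ℝ}
    (ht : 0 ≤ t) : 0 ≤ marginalExcess lam fun a => a ^ 1 * logGammaOneAddDeriv 1 (a * t) := by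
  refine marginalExcess_nonneg hlam (by simp) fun a b ha hb => ?_
  have := mul_tsum_one_div_sub_superadditive ht ha.le hb.le
  simp only [logGammaOneAddDeriv, pow_one]
  linarith

theorem neg_one_pow_mul_marginalExcess_logGammaOneAddDeriv_add_two_nonneg
    (hlam : ∀ i j, 0 ≤ lam i j) (k : ℕ) {t : ℝ} (ht : 0 ≤ t) :
    0 ≤ (-1) ^ k *
      marginalExcess lam fun a => a ^ (k + 2) * logGammaOneAddDeriv (k + 2) (a * t) := by
  have hrw : (fun a => a ^ (k + 2) * logGammaOneAddDeriv (k + 2) (a * t)) = fun a =>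
      ((-1) ^ k * ((k + 1)! : ℝ)) *
        (a ^ (k + 2) * ∑' n : ℕ, 1 / ((n : ℝ) + 1 + a * t) ^ (k + 2)) := by
    funext a
    simp only [logGammaOneAddDeriv]
    ring
  have hpos := marginalExcess_nonneg hlam (by simp) fun a b ha hb =>
    pow_mul_tsum_one_div_add_pow_superadditive (q := k + 2) (by omega) ht ha hb
  rw [hrw, marginalExcess_const_mul, ← mul_assoc, ← mul_assoc, ← pow_add, ← two_mul, pow_mul]
  simp only [neg_one_sq, one_pow, one_mul]
  exact mul_nonneg (by positivity) hpos

end MarginalExcess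

theorem bernstein_log_deriv_ratio_gamma_general
    (m n : ℕ)
    (lam : Fin m → Fin n → ℝ) (hlam : ∀ i j, 0 < lam i j)
    (α : Fin m → ℝ) (hα : ∀ i, α i = ∑ j : Fin n, lam i j)
    (β : Fin n → ℝ) (hβ : ∀ j, β j = ∑ i : Fin m, lam i j)
    (f : ℝ → ℝ)
    (hf : ∀ t, f t =
      ((∏ i : Fin m, Real.Gamma (1 + α i * t)) * ∏ j : Fin n, Real.Gamma (1 + β j * t)) /
        (∏ i : Fin m, ∏ j : Fin n, Real.Gamma (1 + lam i j * t)) ^ 2) :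
    (∀ t : ℝ, 0 < t → 0 ≤ deriv (fun s => Real.log (f s)) t) ∧
      (∀ (k : ℕ) (t : ℝ), 0 < t →
        0 ≤ (-1 : ℝ) ^ k *
          iteratedDeriv k (deriv (deriv (fun s => Real.log (f s)))) t) := by
  have hlam₀ : ∀ i j, 0 ≤ lam i j := fun i j => (hlam i j).le
  have hlog : EqOn (fun s => log (f s))
      (fun s => marginalExcess lam fun a => a ^ 0 * logGammaOneAddDeriv 0 (a * s)) (Ioi 0) := by
    intro s (hs : 0 < s)
    simp only [hf, hα, hβ, pow_zero, one_mul, logGammaOneAddDeriv]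
    exact log_div_sq_eq_marginalExcess (g := fun a => Gamma (1 + a * s)) hlam₀
      fun a ha => Gamma_pos_of_pos (by positivity)
  have hderiv := iteratedDeriv_eqOn_of_hasDerivAt isOpen_Ioi hlog
    fun p t ht => hasDerivAt_marginalExcess_logGammaOneAddDeriv hlam₀ p ht
  refine ⟨fun t ht => ?_, fun k t ht => ?_⟩
  · rw [← iteratedDeriv_one, hderiv 1 ht]
    exact marginalExcess_logGammaOneAddDeriv_one_nonneg hlam₀ ht.le
  · rw [← iteratedDeriv_succ', ← iteratedDeriv_succ', hderiv (k + 2) ht]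
    exact neg_one_pow_mul_marginalExcess_logGammaOneAddDeriv_add_two_nonneg hlam₀ k ht.le

theorem bernstein_log_deriv_ratio_gamma
    (m n : ℕ) (hm : 0 < m) (hn : 0 < n)
    (lam : Fin m → Fin n → ℝ) (hlam : ∀ i j, 0 < lam i j)
    (α : Fin m → ℝ) (hα : ∀ i, α i = ∑ j : Fin n, lam i j)
    (β : Fin n → ℝ) (hβ : ∀ j, β j = ∑ i : Fin m, lam i j)
    (f : ℝ → ℝ)
    (hf : ∀ t, f t =
      ((∏ i : Fin m, Real.Gamma (1 + α i * t)) * ∏ j : Fin n, Real.Gamma (1 + β j * t)) /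
        (∏ i : Fin m, ∏ j : Fin n, Real.Gamma (1 + lam i j * t)) ^ 2) :
    (∀ t : ℝ, 0 < t → 0 ≤ deriv (fun s => Real.log (f s)) t) ∧
      (∀ (k : ℕ) (t : ℝ), 0 < t →
        0 ≤ (-1 : ℝ) ^ k *
          iteratedDeriv k (deriv (deriv (fun s => Real.log (f s)))) t) :=
  bernstein_log_deriv_ratio_gamma_general m n lam hlam α hα β hβ f hf
end

section
/- Let m, n be positive integers with m ≥ 2 or n ≥ 2, let λ_{ij} > 0 for 1 ≤ i ≤ m, 1 ≤ j ≤ n, α_i = ∑_{j=1}^n λ_{ij}, β_j = ∑_{i=1}^m λ_{ij}, and take ρ = 2. Then the image of (0, ∞) under the logarithmic derivative (ln f)', where f(t) = [∏_{i=1}^m Γ(1+α_i t) · ∏_{j=1}^n Γ(1+β_j t)] / [∏_{i=1}^m ∏_{j=1}^n Γ(1+λ_{ij} t)]², is exactly the open interval (0, ln( [∏_{i=1}^m α_i^{α_i} · ∏_{j=1}^n β_j^{β_j}] / [∏_{i=1}^m ∏_{j=1}^n λ_{ij}^{λ_{ij}}]² )). -/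
/-!
Write `ψ = (log ∘ Γ)'` and, for `G : ℝ → ℝ`, `Φ G = ∑ᵢ G αᵢ + ∑ⱼ G βⱼ - 2 ∑ᵢⱼ G λᵢⱼ`. Then
`(log f)' t = Φ (x ↦ x ψ(1 + x t))` and the right endpoint is `L = Φ (x ↦ x log x)`. Since each
`αᵢ`, `βⱼ` is the sum of the `λ`'s in its row or column and `x ↦ x F x` is superadditive for
increasing `F`, `Φ (x ↦ x F x) > 0` for every strictly increasing `F` once some row or column
has two entries; and `Φ` kills linear functions.

Convexity of `log ∘ Γ` and `ψ(x + 1) = ψ x + 1/x` make `ψ` strictly increasing, which gives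
`(log f)' > 0`. With `ρ s = ψ(1 + s) - log s`, one has
`(log f)' t = L + Φ (x ↦ x ρ(x t))`, and `ρ` is strictly decreasing with limit `0` at infinity,
which gives `(log f)' < L` and `(log f)' → L`. Finally `(log f)' → 0` at `0⁺`, and by Darboux's
theorem the image of `(0, ∞)` under the derivative is an interval.
-/

open Finset Filter Topology Set Real

namespace Real

noncomputable def digamma : ℝ → ℝ := deriv (log ∘ Gamma)

theorem differentiableAt_log_Gamma {x : ℝ} (hx : 0 < x) : DifferentiableAt ℝ (log ∘ Gamma) x :=
  (differentiableAt_Gamma fun m => ((neg_nonpos.2 m.cast_nonneg).trans_lt hx).ne').log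
    (Gamma_pos_of_pos hx).ne'

theorem log_Gamma_add_one {x : ℝ} (hx : 0 < x) :
    (log ∘ Gamma) (x + 1) = (log ∘ Gamma) x + log x := by
  simp only [Function.comp_apply, Gamma_add_one hx.ne',
    log_mul hx.ne' (Gamma_pos_of_pos hx).ne', add_comm]

theorem digamma_add_one {x : ℝ} (hx : 0 < x) : digamma (x + 1) = digamma x + x⁻¹ := by
  rw [digamma, ← deriv_comp_add_const, ← deriv_log,
    ← deriv_add (differentiableAt_log_Gamma hx) (differentiableAt_log hx.ne')]
  exact EventuallyEq.deriv_eq (eventually_gt_nhds hx |>.mono fun y hy => log_Gamma_add_one hy)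

theorem monotoneOn_digamma : MonotoneOn digamma (Ioi 0) :=
  convexOn_log_Gamma.monotoneOn_deriv fun _ hx => differentiableAt_log_Gamma hx

/-- `ψ b - ψ a ≥ a⁻¹ - b⁻¹` by monotonicity at `a + 1 ≤ b + 1` and `digamma_add_one`. -/
theorem strictMonoOn_digamma : StrictMonoOn digamma (Ioi 0) := by
  intro a (ha : 0 < a) b (hb : 0 < b) hab
  have h := monotoneOn_digamma (mem_Ioi.2 (by linarith : (0 : ℝ) < a + 1))
    (mem_Ioi.2 (by linarith : (0 : ℝ) < b + 1)) (by linarith)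
  rw [digamma_add_one ha, digamma_add_one hb] at h
  linarith [inv_strictAnti₀ ha hab]

theorem digamma_le_log {x : ℝ} (hx : 0 < x) : digamma x ≤ log x := by
  have h := convexOn_log_Gamma.deriv_le_slope hx (mem_Ioi.2 (by linarith : (0 : ℝ) < x + 1))
    (lt_add_one x) (differentiableAt_log_Gamma hx)
  rwa [slope_def_field, log_Gamma_add_one hx, add_sub_cancel_left, add_sub_cancel_left,
    div_one] at h

theorem log_le_digamma_add_one {x : ℝ} (hx : 0 < x) : log x ≤ digamma (x + 1) := by
  have h := convexOn_log_Gamma.slope_le_deriv hx (mem_Ioi.2 (by linarith : (0 : ℝ) < x + 1))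
    (lt_add_one x) (differentiableAt_log_Gamma (by linarith))
  rwa [slope_def_field, log_Gamma_add_one hx, add_sub_cancel_left, add_sub_cancel_left,
    div_one] at h

/-- A strictly monotone derivative is continuous, since its images of intervals are intervals. -/
theorem continuousAt_digamma {x : ℝ} (hx : 0 < x) : ContinuousAt digamma x := by
  have hx2 : 0 < x / 2 := half_pos hx
  have himage : OrdConnected (digamma '' Ioi 0) :=
    ordConnected_Ioi.image_deriv fun _ hy => differentiableAt_log_Gamma hy
  refine strictMonoOn_digamma.continuousAt_of_image_mem_nhds (Ioi_mem_nhds hx) ?_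
  refine mem_of_superset (Icc_mem_nhds (strictMonoOn_digamma hx2 hx (by linarith))
    (strictMonoOn_digamma hx (mem_Ioi.2 (by linarith : 0 < 2 * x)) (by linarith))) ?_
  exact himage.out (mem_image_of_mem _ hx2) (mem_image_of_mem _ (mem_Ioi.2 (by linarith)))

theorem digamma_one_add_sub_log_nonneg {s : ℝ} (hs : 0 < s) : 0 ≤ digamma (1 + s) - log s := by
  rw [add_comm, sub_nonneg]
  exact log_le_digamma_add_one hs

theorem digamma_one_add_sub_log_le_inv {s : ℝ} (hs : 0 < s) :
    digamma (1 + s) - log s ≤ s⁻¹ := by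
  have hlog : log (1 + s) - log s ≤ s⁻¹ := by
    rw [← log_div (by positivity) hs.ne']
    calc log ((1 + s) / s) ≤ (1 + s) / s - 1 := log_le_sub_one_of_pos (by positivity)
      _ = s⁻¹ := by field_simp; ring
  linarith [digamma_le_log (by linarith : 0 < 1 + s)]

theorem tendsto_digamma_one_add_sub_log_atTop :
    Tendsto (fun s => digamma (1 + s) - log s) atTop (𝓝 0) :=
  tendsto_of_tendsto_of_tendsto_of_le_of_le' tendsto_const_nhds tendsto_inv_atTop_zero
    (eventually_gt_atTop 0 |>.mono fun _ hs => digamma_one_add_sub_log_nonneg hs)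
    (eventually_gt_atTop 0 |>.mono fun _ hs => digamma_one_add_sub_log_le_inv hs)

theorem strictAntiOn_log_add_one_sub_log_sub_inv :
    StrictAntiOn (fun s => log (s + 1) - log s - (s + 1)⁻¹) (Ioi 0) := by
  refine strictAntiOn_of_hasDerivWithinAt_neg (convex_Ioi 0)
    (f' := fun s => -(s * (s + 1) ^ 2)⁻¹) ?_ (fun s hs => ?_) (fun s hs => ?_)
  · intro s (hs : 0 < s)
    have hs0 : s ≠ 0 := hs.ne'
    have hs1 : s + 1 ≠ 0 := by linarith
    exact ContinuousAt.continuousWithinAt (by fun_prop (disch := assumption))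
  · rw [interior_Ioi] at hs
    have hs : 0 < s := hs
    have h1 : HasDerivAt (fun s => s + 1) 1 s := (hasDerivAt_id s).add_const 1
    have h := ((h1.log (by linarith)).sub (hasDerivAt_log hs.ne')).sub (h1.inv (by linarith))
    refine (h.congr_deriv ?_).hasDerivWithinAt
    field_simp
    ring
  · rw [interior_Ioi] at hs
    have hs : 0 < s := hs
    simp only [neg_lt_zero, inv_pos]
    positivity

/-- `ρ s - ρ (s + 1) = log (s + 1) - log s - (s + 1)⁻¹` is strictly decreasing, so for `a < b`
the differences `ρ (a + N) - ρ (b + N)` decrease in `N`, and they tend to `0`. -/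
theorem strictAntiOn_digamma_one_add_sub_log :
    StrictAntiOn (fun s => digamma (1 + s) - log s) (Ioi 0) := by
  set ρ := fun s => digamma (1 + s) - log s
  set G := fun s : ℝ => log (s + 1) - log s - (s + 1)⁻¹
  have hstep : ∀ s, 0 < s → ρ s - ρ (s + 1) = G s := by
    intro s hs
    simp only [ρ, G]
    rw [show 1 + (s + 1) = (1 + s) + 1 by ring, digamma_add_one (by linarith), add_comm s 1]
    ring
  intro a (ha : 0 < a) b (hb : 0 < b) hab
  set d : ℕ → ℝ := fun N => ρ (a + 1 + N) - ρ (b + 1 + N)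
  have hd_anti : Antitone d := by
    refine antitone_nat_of_succ_le fun N => ?_
    have hG := strictAntiOn_log_add_one_sub_log_sub_inv (show 0 < a + 1 + N by positivity)
      (show 0 < b + 1 + N by positivity) (by linarith)
    have e : ∀ c : ℝ, c + 1 + ((N + 1 : ℕ) : ℝ) = c + 1 + N + 1 := fun c => by push_cast; ring
    simp only [d, e]
    linarith [hstep (a + 1 + N) (by positivity), hstep (b + 1 + N) (by positivity)]
  have hd_lim : Tendsto d atTop (𝓝 0) := by
    have hρ : ∀ c : ℝ, Tendsto (fun N : ℕ => ρ (c + N)) atTop (𝓝 0) := fun c =>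
      tendsto_digamma_one_add_sub_log_atTop.comp
        (tendsto_atTop_add_const_left _ c tendsto_natCast_atTop_atTop)
    simpa using (hρ (a + 1)).sub (hρ (b + 1))
  have hd0 : 0 ≤ d 0 := hd_anti.le_of_tendsto hd_lim 0
  have hG := strictAntiOn_log_add_one_sub_log_sub_inv ha hb hab
  simp only [d, Nat.cast_zero, add_zero] at hd0
  show ρ b < ρ a
  linarith [hstep a ha, hstep b hb]

end Real

theorem image_deriv_Ioi_eq_Ioo {g W : ℝ → ℝ} {a b : ℝ}
    (hg : ∀ t, 0 < t → HasDerivAt g (W t) t) (hW : ∀ t, 0 < t → W t ∈ Ioo a b)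
    (ha : Tendsto W (𝓝[>] 0) (𝓝 a)) (hb : Tendsto W atTop (𝓝 b)) :
    deriv g '' Ioi 0 = Ioo a b := by
  have himage : deriv g '' Ioi 0 = W '' Ioi 0 := image_congr fun t ht => (hg t ht).deriv
  have hconn : OrdConnected (W '' Ioi 0) :=
    himage ▸ ordConnected_Ioi.image_deriv fun t ht => (hg t ht).differentiableAt
  rw [himage]
  refine Subset.antisymm (image_subset_iff.2 hW) fun y hy => ?_
  obtain ⟨t₁, hWt₁, ht₁⟩ := ((ha.eventually (gt_mem_nhds hy.1)).and self_mem_nhdsWithin).exists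
  obtain ⟨t₂, hWt₂, ht₂⟩ :=
    ((hb.eventually (lt_mem_nhds hy.2)).and (eventually_gt_atTop 0)).exists
  exact hconn.out (mem_image_of_mem W ht₁) (mem_image_of_mem W ht₂) ⟨hWt₁.le, hWt₂.le⟩

section PositiveWeights

variable {κ : Type*} [Fintype κ] {w : κ → ℝ} {F : ℝ → ℝ}

theorem sum_pos_of_forall_pos [Nonempty κ] (hw : ∀ j, 0 < w j) : 0 < ∑ j, w j :=
  sum_pos (fun j _ => hw j) univ_nonempty

theorem sum_mul_apply_le_sum_mul_apply_sum (hw : ∀ j, 0 < w j) (hF : MonotoneOn F (Ioi 0)) :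
    ∑ j, w j * F (w j) ≤ (∑ j, w j) * F (∑ j, w j) := by
  rw [sum_mul]
  refine sum_le_sum fun j _ => mul_le_mul_of_nonneg_left ?_ (hw j).le
  exact hF (hw j) ((hw j).trans_le (single_le_sum (fun k _ => (hw k).le) (mem_univ j)))
    (single_le_sum (fun k _ => (hw k).le) (mem_univ j))

theorem sum_mul_apply_lt_sum_mul_apply_sum [Nontrivial κ] (hw : ∀ j, 0 < w j)
    (hF : StrictMonoOn F (Ioi 0)) :
    ∑ j, w j * F (w j) < (∑ j, w j) * F (∑ j, w j) := by
  classical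
  have hlt : ∀ j, w j < ∑ k, w k := fun j => by
    obtain ⟨k, hk⟩ := exists_ne j
    calc w j < w j + w k := lt_add_of_pos_right _ (hw k)
      _ = ∑ l ∈ {j, k}, w l := (sum_pair hk.symm).symm
      _ ≤ ∑ l, w l := sum_le_univ_sum_of_nonneg fun l => (hw l).le
  rw [sum_mul]
  exact sum_lt_sum_of_nonempty univ_nonempty fun j _ =>
    mul_lt_mul_of_pos_left (hF (hw j) ((hw j).trans (hlt j)) (hlt j)) (hw j)

end PositiveWeights

section MarginalDefect

variable {ι κ : Type*} [Fintype ι] [Fintype κ]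

noncomputable def marginalDefect (lam : ι → κ → ℝ) : (ℝ → ℝ) →ₗ[ℝ] ℝ where
  toFun G := ∑ i, G (∑ j, lam i j) + ∑ j, G (∑ i, lam i j) - 2 * ∑ i, ∑ j, G (lam i j)
  map_add' G H := by simp only [Pi.add_apply, sum_add_distrib]; ring
  map_smul' c G := by simp only [Pi.smul_apply, smul_eq_mul, ← mul_sum, RingHom.id_apply]; ring

variable {lam : ι → κ → ℝ}

theorem marginalDefect_apply (G : ℝ → ℝ) : marginalDefect lam G =
    ∑ i, G (∑ j, lam i j) + ∑ j, G (∑ i, lam i j) - 2 * ∑ i, ∑ j, G (lam i j) := rfl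

theorem marginalDefect_mul_const (c : ℝ) : marginalDefect lam (fun x => x * c) = 0 := by
  have hswap : ∑ j, ∑ i, lam i j = ∑ i, ∑ j, lam i j := sum_comm
  simp only [marginalDefect_apply, ← sum_mul, hswap]
  ring

variable [Nonempty ι] [Nonempty κ]

theorem marginalDefect_congr (hlam : ∀ i j, 0 < lam i j) {G H : ℝ → ℝ}
    (h : ∀ x, 0 < x → G x = H x) : marginalDefect lam G = marginalDefect lam H := by
  simp only [marginalDefect_apply, h _ (sum_pos_of_forall_pos (hlam _)),
    h _ (sum_pos_of_forall_pos (hlam · _)),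
    h _ (hlam _ _)]

theorem hasDerivAt_marginalDefect (hlam : ∀ i j, 0 < lam i j) {g : ℝ → ℝ → ℝ} {g' : ℝ → ℝ}
    {t : ℝ} (hg : ∀ x, 0 < x → HasDerivAt (g x) (g' x) t) :
    HasDerivAt (fun s => marginalDefect lam (fun x => g x s)) (marginalDefect lam g') t := by
  simp only [marginalDefect_apply]
  exact ((HasDerivAt.fun_sum fun i _ => hg _ (sum_pos_of_forall_pos (hlam i))).add
    (HasDerivAt.fun_sum fun j _ => hg _ (sum_pos_of_forall_pos (hlam · j)))).sub
    ((HasDerivAt.fun_sum fun i _ => HasDerivAt.fun_sum fun j _ => hg _ (hlam i j)).const_mul 2)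

theorem tendsto_marginalDefect (hlam : ∀ i j, 0 < lam i j) {α : Type*} {l : Filter α}
    {g : α → ℝ → ℝ} {G : ℝ → ℝ} (hg : ∀ x, 0 < x → Tendsto (fun a => g a x) l (𝓝 (G x))) :
    Tendsto (fun a => marginalDefect lam (g a)) l (𝓝 (marginalDefect lam G)) := by
  simp only [marginalDefect_apply]
  exact ((tendsto_finsetSum _ fun i _ => hg _ (sum_pos_of_forall_pos (hlam i))).add
    (tendsto_finsetSum _ fun j _ => hg _ (sum_pos_of_forall_pos (hlam · j)))).sub
    ((tendsto_finsetSum _ fun i _ => tendsto_finsetSum _ fun j _ => hg _ (hlam i j)).const_mul 2)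

theorem log_prod_div_prod_sq_eq_marginalDefect (hlam : ∀ i j, 0 < lam i j) {G : ℝ → ℝ}
    (hG : ∀ x, 0 < x → 0 < G x) :
    log (((∏ i, G (∑ j, lam i j)) * ∏ j, G (∑ i, lam i j)) /
      (∏ i, ∏ j, G (lam i j)) ^ 2) =
      marginalDefect lam (fun x => log (G x)) := by
  have hrow : ∀ i, 0 < G (∑ j, lam i j) := fun i => hG _ (sum_pos_of_forall_pos (hlam i))
  have hcol : ∀ j, 0 < G (∑ i, lam i j) := fun j => hG _ (sum_pos_of_forall_pos (hlam · j))
  have hent : ∀ i, 0 < ∏ j, G (lam i j) := fun i => prod_pos fun j _ => hG _ (hlam i j)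
  have hA : 0 < ∏ i, G (∑ j, lam i j) := prod_pos fun i _ => hrow i
  have hB : 0 < ∏ j, G (∑ i, lam i j) := prod_pos fun j _ => hcol j
  have hC : 0 < ∏ i, ∏ j, G (lam i j) := prod_pos fun i _ => hent i
  rw [log_div (mul_pos hA hB).ne' (pow_pos hC 2).ne', log_mul hA.ne' hB.ne',
    log_pow, log_prod fun i _ => (hrow i).ne', log_prod fun j _ => (hcol j).ne',
    log_prod fun i _ => (hent i).ne', marginalDefect_apply]
  simp only [log_prod fun j _ => (hG _ (hlam _ j)).ne']
  push_cast
  ring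

theorem marginalDefect_mul_pos (hlam : ∀ i j, 0 < lam i j) (hnt : Nontrivial ι ∨ Nontrivial κ)
    {F : ℝ → ℝ} (hF : StrictMonoOn F (Ioi 0)) : 0 < marginalDefect lam (fun x => x * F x) := by
  have hrow : ∀ i, ∑ j, lam i j * F (lam i j) ≤ (∑ j, lam i j) * F (∑ j, lam i j) := fun i =>
    sum_mul_apply_le_sum_mul_apply_sum (hlam i) hF.monotoneOn
  have hcol : ∀ j, ∑ i, lam i j * F (lam i j) ≤ (∑ i, lam i j) * F (∑ i, lam i j) := fun j =>
    sum_mul_apply_le_sum_mul_apply_sum (hlam · j) hF.monotoneOn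
  have hswap : ∑ j, ∑ i, lam i j * F (lam i j) = ∑ i, ∑ j, lam i j * F (lam i j) := sum_comm
  rw [marginalDefect_apply]
  rcases hnt with hι | hκ
  · have := sum_lt_sum_of_nonempty univ_nonempty fun j _ =>
      sum_mul_apply_lt_sum_mul_apply_sum (hlam · j) hF
    linarith [sum_le_sum fun i (_ : i ∈ Finset.univ) => hrow i]
  · have := sum_lt_sum_of_nonempty univ_nonempty fun i _ =>
      sum_mul_apply_lt_sum_mul_apply_sum (hlam i) hF
    linarith [sum_le_sum fun j (_ : j ∈ Finset.univ) => hcol j]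

end MarginalDefect

section GammaRatio

variable {ι κ : Type*} [Fintype ι] [Fintype κ] [Nonempty ι] [Nonempty κ] {lam : ι → κ → ℝ}

theorem hasDerivAt_marginalDefect_log_Gamma (hlam : ∀ i j, 0 < lam i j) {t : ℝ} (ht : 0 < t) :
    HasDerivAt (fun s => marginalDefect lam (fun x => log (Gamma (1 + x * s))))
      (marginalDefect lam (fun x => x * digamma (1 + x * t))) t := by
  refine hasDerivAt_marginalDefect hlam fun x hx => ?_
  have hlin : HasDerivAt (fun s => 1 + x * s) x t := by
    simpa using ((hasDerivAt_id t).const_mul x).const_add 1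
  have h := (differentiableAt_log_Gamma (by positivity : 0 < 1 + x * t)).hasDerivAt.comp t hlin
  rwa [mul_comm] at h

theorem marginalDefect_digamma_pos (hlam : ∀ i j, 0 < lam i j)
    (hnt : Nontrivial ι ∨ Nontrivial κ) {t : ℝ} (ht : 0 < t) :
    0 < marginalDefect lam (fun x => x * digamma (1 + x * t)) :=
  marginalDefect_mul_pos hlam hnt fun a (ha : 0 < a) b (hb : 0 < b) hab =>
    strictMonoOn_digamma (by simp; positivity) (by simp; positivity) (by gcongr)

theorem marginalDefect_digamma_eq (hlam : ∀ i j, 0 < lam i j) {t : ℝ} (ht : 0 < t) :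
    marginalDefect lam (fun x => x * digamma (1 + x * t)) =
      marginalDefect lam (fun x => x * log x) +
        marginalDefect lam (fun x => x * (digamma (1 + x * t) - log (x * t))) := by
  calc marginalDefect lam (fun x => x * digamma (1 + x * t))
      = marginalDefect lam ((fun x => x * log x) +
          (fun x => x * (digamma (1 + x * t) - log (x * t))) + fun x => x * log t) := by
        refine marginalDefect_congr hlam fun x hx => ?_
        simp only [Pi.add_apply, log_mul hx.ne' ht.ne']
        ring
    _ = _ := by rw [map_add, map_add, marginalDefect_mul_const, add_zero]

theorem marginalDefect_digamma_lt (hlam : ∀ i j, 0 < lam i j)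
    (hnt : Nontrivial ι ∨ Nontrivial κ) {t : ℝ} (ht : 0 < t) :
    marginalDefect lam (fun x => x * digamma (1 + x * t)) <
      marginalDefect lam (fun x => x * log x) := by
  have h := marginalDefect_mul_pos hlam hnt (F := fun x => -(digamma (1 + x * t) - log (x * t)))
    fun a (ha : 0 < a) b (hb : 0 < b) hab =>
      neg_lt_neg (strictAntiOn_digamma_one_add_sub_log (by simp; positivity) (by simp; positivity)
        (by gcongr))
  rw [show (fun x => x * -(digamma (1 + x * t) - log (x * t))) =
    -fun x => x * (digamma (1 + x * t) - log (x * t)) by ext; simp only [Pi.neg_apply]; ring,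
    map_neg] at h
  linarith [marginalDefect_digamma_eq hlam ht]

theorem tendsto_marginalDefect_digamma_nhdsGT_zero (hlam : ∀ i j, 0 < lam i j) :
    Tendsto (fun t => marginalDefect lam (fun x => x * digamma (1 + x * t))) (𝓝[>] 0)
      (𝓝 0) := by
  have h := tendsto_marginalDefect hlam (l := 𝓝[>] 0)
      (g := fun t x => x * digamma (1 + x * t)) (G := fun x => x * digamma 1) fun x _ => by
    have hlin : Tendsto (fun t => 1 + x * t) (𝓝[>] 0) (𝓝 1) :=
      tendsto_nhdsWithin_of_tendsto_nhds (by simpa using (continuous_const.add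
        (continuous_const.mul continuous_id)).tendsto (f := fun t : ℝ => 1 + x * t) 0)
    exact ((continuousAt_digamma one_pos).tendsto.comp hlin).const_mul x
  rwa [marginalDefect_mul_const] at h

theorem tendsto_marginalDefect_digamma_atTop (hlam : ∀ i j, 0 < lam i j) :
    Tendsto (fun t => marginalDefect lam (fun x => x * digamma (1 + x * t))) atTop
      (𝓝 (marginalDefect lam (fun x => x * log x))) := by
  have h := tendsto_marginalDefect hlam (l := atTop)
    (g := fun t x => x * (digamma (1 + x * t) - log (x * t))) (G := fun x => x * 0) fun x hx =>
      (tendsto_digamma_one_add_sub_log_atTop.comp (tendsto_id.const_mul_atTop hx)).const_mul x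
  rw [marginalDefect_mul_const] at h
  have h' := (tendsto_const_nhds (x := marginalDefect lam fun x => x * log x)).add h
  rw [add_zero] at h'
  refine h'.congr' ?_
  filter_upwards [eventually_gt_atTop 0] with t ht
  exact (marginalDefect_digamma_eq hlam ht).symm

end GammaRatio

theorem image_log_deriv_ratio_gamma_rho_two
    (m n : ℕ) (hm : 0 < m) (hn : 0 < n) (hmn : 2 ≤ m ∨ 2 ≤ n)
    (lam : Fin m → Fin n → ℝ) (hlam : ∀ i j, 0 < lam i j)
    (α : Fin m → ℝ) (hα : ∀ i, α i = ∑ j : Fin n, lam i j)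
    (β : Fin n → ℝ) (hβ : ∀ j, β j = ∑ i : Fin m, lam i j)
    (f : ℝ → ℝ)
    (hf : ∀ t, f t =
      ((∏ i : Fin m, Real.Gamma (1 + α i * t)) * ∏ j : Fin n, Real.Gamma (1 + β j * t)) /
        (∏ i : Fin m, ∏ j : Fin n, Real.Gamma (1 + lam i j * t)) ^ 2) :
    deriv (fun s => Real.log (f s)) '' Set.Ioi 0 =
      Set.Ioo 0 (Real.log
        (((∏ i : Fin m, α i ^ α i) * ∏ j : Fin n, β j ^ β j) /
          (∏ i : Fin m, ∏ j : Fin n, lam i j ^ lam i j) ^ 2)) := by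
  obtain rfl : α = fun i => ∑ j, lam i j := funext hα
  obtain rfl : β = fun j => ∑ i, lam i j := funext hβ
  have : Nonempty (Fin m) := Fin.pos_iff_nonempty.mp hm
  have : Nonempty (Fin n) := Fin.pos_iff_nonempty.mp hn
  have hnt : Nontrivial (Fin m) ∨ Nontrivial (Fin n) :=
    hmn.imp Fin.nontrivial_iff_two_le.2 Fin.nontrivial_iff_two_le.2
  have hlogf : ∀ s, 0 < s → log (f s) = marginalDefect lam (fun x => log (Gamma (1 + x * s))) :=
    fun s hs => by
      rw [hf]
      exact log_prod_div_prod_sq_eq_marginalDefect (G := fun x => Gamma (1 + x * s)) hlam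
        fun x hx => Gamma_pos_of_pos (by positivity)
  have hL : log (((∏ i, (∑ j, lam i j) ^ ∑ j, lam i j) * ∏ j, (∑ i, lam i j) ^ ∑ i, lam i j) /
      (∏ i, ∏ j, lam i j ^ lam i j) ^ 2) = marginalDefect lam (fun x => x * log x) := by
    rw [log_prod_div_prod_sq_eq_marginalDefect (G := fun x => x ^ x) hlam
      fun x hx => rpow_pos_of_pos hx x]
    exact marginalDefect_congr hlam fun x hx => log_rpow hx x
  rw [hL]
  refine image_deriv_Ioi_eq_Ioo (fun t ht => ?_)
    (fun t ht => ⟨marginalDefect_digamma_pos hlam hnt ht, marginalDefect_digamma_lt hlam hnt ht⟩)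
    (tendsto_marginalDefect_digamma_nhdsGT_zero hlam) (tendsto_marginalDefect_digamma_atTop hlam)
  exact (hasDerivAt_marginalDefect_log_Gamma hlam ht).congr_of_eventuallyEq
    (eventually_gt_nhds ht |>.mono hlogf)
end

section
/- Let m, n be positive integers, λ_{ij} > 0 for 1 ≤ i ≤ m, 1 ≤ j ≤ n, α_i = ∑_{j=1}^n λ_{ij}, β_j = ∑_{i=1}^m λ_{ij}, and let ρ < 2. Then the logarithmic derivative (ln f)', where f(t) = [∏_{i=1}^m Γ(1+α_i t) · ∏_{j=1}^n Γ(1+β_j t)] / [∏_{i=1}^m ∏_{j=1}^n Γ(1+λ_{ij} t)]^ρ, is strictly increasing and concave on (0, ∞), and the image of (0, ∞) under (ln f)' is exactly the open interval (−γ(2−ρ)∑_{i=1}^m ∑_{j=1}^n λ_{ij}, ∞), where γ is the Euler–Mascheroni constant. -/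
/-!
By Weierstrass' product, `log Γ(1 + x) = -γ x + Σₖ (x/(k+1) - log (1 + x/(k+1)))`, so
`(ln f)'(t) = C(a ↦ a ψ(1 + a t))` with `ψ(1 + y) = -γ + Σₖ (1/(k+1) - 1/(k+1+y))` and
`C(φ) = Σᵢ φ(αᵢ) + Σⱼ φ(βⱼ) - ρ Σᵢⱼ φ(λᵢⱼ)`. Differentiating termwise,
`(ln f)'' = C(a ↦ a² ζ(2, 1 + a t))` and `(ln f)''' = -2 C(a ↦ a³ ζ(3, 1 + a t))`.

If `N` is increasing then `a ↦ a N(a)` is superadditive, and since `α` and `β` are the row and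
column sums of `λ` this gives `C(a ↦ a N(a)) ≥ (2 - ρ) Σᵢⱼ λᵢⱼ N(λᵢⱼ)`, which is positive when
`N > 0`. This applies to `N(a) = a^(p-1) ζ(p, 1 + a t)`, because `y ↦ y^(p-1) ζ(p, 1 + y)` is
increasing (Abel summation). Hence `(ln f)'` is strictly increasing and concave. Its formula extends
continuously to `t = 0`, with value `-γ (2 - ρ) Σᵢⱼ λᵢⱼ`, and tends to `∞` with `ψ`, which gives the
image.
-/

open Finset Filter Topology Set

local notation "γ" => Real.eulerMascheroniConstant

namespace GammaRatio

section Bounds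

variable {p : ℕ} {x : ℝ}

theorem summable_one_div_succ_sq : Summable fun k : ℕ => 1 / ((k : ℝ) + 1) ^ 2 := by
  exact_mod_cast (summable_nat_add_iff 1).mpr (Real.summable_one_div_nat_pow.mpr one_lt_two)

theorem one_div_add_pow_le_one_div_succ_sq (hx : 0 ≤ x) (hp : 2 ≤ p) (k : ℕ) :
    1 / ((k : ℝ) + 1 + x) ^ p ≤ 1 / ((k : ℝ) + 1) ^ 2 := by
  have hk : (1 : ℝ) ≤ k + 1 := by simp
  gcongr
  calc ((k : ℝ) + 1) ^ 2 ≤ ((k : ℝ) + 1 + x) ^ 2 :=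
        pow_le_pow_left₀ (by positivity) (by linarith) 2
    _ ≤ ((k : ℝ) + 1 + x) ^ p := pow_le_pow_right₀ (by linarith) hp

theorem summable_one_div_add_pow (hx : 0 ≤ x) (hp : 2 ≤ p) :
    Summable fun k : ℕ => 1 / ((k : ℝ) + 1 + x) ^ p :=
  summable_one_div_succ_sq.of_nonneg_of_le (fun _ => by positivity)
    (one_div_add_pow_le_one_div_succ_sq hx hp)

theorem one_div_sub_one_div_add_eq (hx : 0 ≤ x) (k : ℕ) :
    1 / ((k : ℝ) + 1) - 1 / ((k : ℝ) + 1 + x) = x / (((k : ℝ) + 1) * ((k : ℝ) + 1 + x)) := by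
  field_simp
  ring

theorem summable_one_div_sub_one_div_add (hx : 0 ≤ x) :
    Summable fun k : ℕ => 1 / ((k : ℝ) + 1) - 1 / ((k : ℝ) + 1 + x) := by
  refine (summable_one_div_succ_sq.mul_left x).of_nonneg_of_le
    (fun k => by rw [one_div_sub_one_div_add_eq hx]; positivity) fun k => ?_
  rw [one_div_sub_one_div_add_eq hx, mul_one_div]
  gcongr
  nlinarith

theorem summable_sub_log_one_add_div (hx : 0 ≤ x) :
    Summable fun k : ℕ => x / ((k : ℝ) + 1) - Real.log (1 + x / ((k : ℝ) + 1)) := by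
  refine (summable_one_div_succ_sq.mul_left (x ^ 2)).of_nonneg_of_le (fun k => ?_) (fun k => ?_)
  · linarith [Real.log_le_sub_one_of_pos (x := 1 + x / ((k : ℝ) + 1)) (by positivity)]
  · have hu : 0 ≤ x / ((k : ℝ) + 1) := by positivity
    set u := x / ((k : ℝ) + 1) with hu_def
    calc u - Real.log (1 + u) ≤ u - (1 - (1 + u)⁻¹) := by
          linarith [Real.one_sub_inv_le_log_of_pos (x := 1 + u) (by positivity)]
      _ = u ^ 2 / (1 + u) := by field_simp; ring
      _ ≤ u ^ 2 := div_le_self (sq_nonneg u) (by linarith)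
      _ = x ^ 2 * (1 / ((k : ℝ) + 1) ^ 2) := by rw [hu_def, div_pow]; ring

theorem hasDerivAt_one_div_add_pow (p : ℕ) {c y : ℝ} (h : c + y ≠ 0) :
    HasDerivAt (fun z => 1 / (c + z) ^ p) (-p * (1 / (c + y) ^ (p + 1))) y := by
  have := (((hasDerivAt_id' y).const_add c).fun_pow p).fun_inv (pow_ne_zero p h)
  simp only [one_div]
  refine this.congr_deriv ?_
  rcases p with _ | p
  · simp
  · simp only [Nat.add_sub_cancel]
    field_simp
    ring

theorem one_div_pow_sub_one_div_add_one_pow_le {y : ℝ} (hy : 0 < y) (p : ℕ) :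
    1 / y ^ p - 1 / (y + 1) ^ p ≤ p / y ^ (p + 1) := by
  have hbern := one_add_mul_le_pow (a := -1 / (y + 1)) (by
    rw [le_div_iff₀ (by positivity)]; linarith) p
  rw [show 1 + -1 / (y + 1) = y / (y + 1) by field_simp; ring, div_pow] at hbern
  have hsplit : 1 / (y + 1) ^ p = 1 / y ^ p * (y ^ p / (y + 1) ^ p) := by field_simp
  calc 1 / y ^ p - 1 / (y + 1) ^ p = 1 / y ^ p * (1 - y ^ p / (y + 1) ^ p) := by
        rw [hsplit]; ring
    _ ≤ 1 / y ^ p * (p / (y + 1)) := by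
        gcongr
        linarith [show (p : ℝ) * (-1 / (y + 1)) = -(p / (y + 1)) by ring]
    _ ≤ 1 / y ^ p * (p / y) := by gcongr; linarith
    _ = p / y ^ (p + 1) := by field_simp; ring

theorem hasSum_succ_mul_sub_of_antitone {c : ℕ → ℝ} (hc : Antitone c) (hsum : Summable c)
    (hlim : Tendsto (fun k : ℕ => (k : ℝ) * c k) atTop (𝓝 0)) :
    HasSum (fun k : ℕ => ((k : ℝ) + 1) * (c k - c (k + 1))) (∑' k, c k) := by
  have hpartial : ∀ n : ℕ, ∑ k ∈ range n, ((k : ℝ) + 1) * (c k - c (k + 1))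
      = ∑ k ∈ range n, c k - n * c n := by
    intro n
    induction n with
    | zero => simp
    | succ n ih => rw [sum_range_succ, sum_range_succ, ih]; push_cast; ring
  rw [hasSum_iff_tendsto_nat_of_nonneg
    (fun k => mul_nonneg (by positivity) (sub_nonneg.2 (hc k.le_succ)))]
  simpa [hpartial] using hsum.hasSum.tendsto_sum_nat.sub hlim

end Bounds

/-- `ψ(1 + x) + γ`. -/
noncomputable def digammaSeries (x : ℝ) : ℝ :=
  ∑' k : ℕ, (1 / ((k : ℝ) + 1) - 1 / ((k : ℝ) + 1 + x))

/-- The Hurwitz zeta value `ζ(p, 1 + x)`. -/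
noncomputable def hurwitzSeries (p : ℕ) (x : ℝ) : ℝ :=
  ∑' k : ℕ, 1 / ((k : ℝ) + 1 + x) ^ p

noncomputable def logGammaSeries (x : ℝ) : ℝ :=
  ∑' k : ℕ, (x / ((k : ℝ) + 1) - Real.log (1 + x / ((k : ℝ) + 1)))

section Series

variable {p : ℕ} {x : ℝ}

theorem hurwitzSeries_pos (hp : 2 ≤ p) (hx : 0 ≤ x) : 0 < hurwitzSeries p x :=
  (summable_one_div_add_pow hx hp).tsum_pos (fun _ => by positivity) 0 (by positivity)

theorem digammaSeries_zero : digammaSeries 0 = 0 := by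
  simp [digammaSeries]

theorem monotoneOn_digammaSeries : MonotoneOn digammaSeries (Ici 0) := by
  intro x hx y hy hxy
  rw [Set.mem_Ici] at hx hy
  exact (summable_one_div_sub_one_div_add hx).tsum_le_tsum (fun k => by gcongr)
    (summable_one_div_sub_one_div_add hy)

theorem digammaSeries_nonneg (hx : 0 ≤ x) : 0 ≤ digammaSeries x :=
  digammaSeries_zero ▸ monotoneOn_digammaSeries (Set.mem_Ici.2 le_rfl) hx hx

theorem tendsto_digammaSeries_atTop : Tendsto digammaSeries atTop atTop := by
  refine tendsto_atTop.2 fun M => ?_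
  obtain ⟨N, hN⟩ := (Real.tendsto_sum_range_one_div_nat_succ_atTop.eventually_gt_atTop M).exists
  have hlim : Tendsto (fun x => ∑ k ∈ range N, (1 / ((k : ℝ) + 1) - 1 / ((k : ℝ) + 1 + x)))
      atTop (𝓝 (∑ k ∈ range N, (1 / ((k : ℝ) + 1) - 0))) :=
    tendsto_finsetSum _ fun k _ => tendsto_const_nhds.sub <|
      tendsto_const_nhds.div_atTop (tendsto_atTop_add_const_left _ _ tendsto_id)
  simp only [sub_zero] at hlim
  filter_upwards [hlim.eventually (eventually_gt_nhds hN), eventually_ge_atTop 0] with x hx hx0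
  exact hx.le.trans <| (summable_one_div_sub_one_div_add hx0).sum_le_tsum _
    fun k _ => by rw [one_div_sub_one_div_add_eq hx0]; positivity

theorem hasDerivAt_digammaSeries (hx : 0 ≤ x) :
    HasDerivAt digammaSeries (hurwitzSeries 2 x) x := by
  -- working on `Ioi (-1/2)` also gives differentiability at `x = 0`
  have hhalf : ∀ k : ℕ, ∀ y ∈ Ioi (-1 / 2 : ℝ), ((k : ℝ) + 1) / 2 < (k : ℝ) + 1 + y := by
    intro k y hy
    have : (0 : ℝ) ≤ k := k.cast_nonneg
    linarith [Set.mem_Ioi.mp hy]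
  refine hasDerivAt_tsum_of_isPreconnected
    (g := fun (k : ℕ) (y : ℝ) => 1 / ((k : ℝ) + 1) - 1 / ((k : ℝ) + 1 + y))
    (g' := fun (k : ℕ) (y : ℝ) => 1 / ((k : ℝ) + 1 + y) ^ 2)
    (summable_one_div_succ_sq.mul_left 4) isOpen_Ioi isPreconnected_Ioi
    (fun k y hy => ?_) (fun k y hy => ?_) (t := Ioi (-1 / 2)) (y₀ := 0) (by norm_num) (by simp)
    (by rw [Set.mem_Ioi]; linarith)
  · have hk : 0 < (k : ℝ) + 1 + y := lt_of_le_of_lt (by positivity) (hhalf k y hy)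
    simpa using (hasDerivAt_one_div_add_pow 1 hk.ne').const_sub (1 / ((k : ℝ) + 1))
  · have hk := hhalf k y hy
    have hk' : 0 < (k : ℝ) + 1 + y := lt_of_le_of_lt (by positivity) hk
    rw [Real.norm_of_nonneg (by positivity), mul_one_div,
      div_le_div_iff₀ (by positivity) (by positivity)]
    nlinarith

theorem hasDerivAt_hurwitzSeries (hp : 2 ≤ p) (hx : 0 < x) :
    HasDerivAt (hurwitzSeries p) (-p * hurwitzSeries (p + 1) x) x := by
  rw [hurwitzSeries, ← tsum_mul_left]
  refine hasDerivAt_tsum_of_isPreconnected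
    (g := fun (k : ℕ) (y : ℝ) => 1 / ((k : ℝ) + 1 + y) ^ p)
    (summable_one_div_succ_sq.mul_left (p : ℝ)) isOpen_Ioi isPreconnected_Ioi
    (fun k y hy => hasDerivAt_one_div_add_pow p (by have := Set.mem_Ioi.mp hy; positivity))
    (fun k y hy => ?_) (t := Ioi 0) hx (summable_one_div_add_pow hx.le hp) hx
  have hy : 0 ≤ y := le_of_lt hy
  rw [norm_mul, norm_neg, Real.norm_natCast, Real.norm_of_nonneg (by positivity)]
  exact mul_le_mul_of_nonneg_left (one_div_add_pow_le_one_div_succ_sq hy (by omega) k)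
    (Nat.cast_nonneg p)

theorem mul_hurwitzSeries_succ_le (hp : 2 ≤ p) (hx : 0 < x) :
    p * x * hurwitzSeries (p + 1) x ≤ (p - 1) * hurwitzSeries p x := by
  -- Abel summation: `ζ(p, 1 + x) = Σₖ (k + 1) (cₖ - cₖ₊₁)`, and `cₖ - cₖ₊₁ ≤ p / (k + 1 + x)^(p+1)`
  set c : ℕ → ℝ := fun k => 1 / ((k : ℝ) + 1 + x) ^ p
  have hc_succ : ∀ k : ℕ, c (k + 1) = 1 / (((k : ℝ) + 1 + x) + 1) ^ p := fun k => by
    simp only [c]; push_cast; ring_nf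
  have hc : Antitone c := antitone_nat_of_succ_le fun k => by
    rw [hc_succ]
    exact one_div_le_one_div_of_le (by positivity)
      (pow_le_pow_left₀ (by positivity) (by linarith) p)
  have hlim : Tendsto (fun k : ℕ => (k : ℝ) * c k) atTop (𝓝 0) := by
    refine squeeze_zero (fun k => by positivity) (fun k => ?_)
      tendsto_one_div_add_atTop_nhds_zero_nat
    have hk := one_div_add_pow_le_one_div_succ_sq hx.le hp k
    calc (k : ℝ) * c k ≤ ((k : ℝ) + 1) * (1 / ((k : ℝ) + 1) ^ 2) := by gcongr; linarith
      _ = 1 / ((k : ℝ) + 1) := by field_simp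
  have habel := hasSum_succ_mul_sub_of_antitone hc (summable_one_div_add_pow hx.le hp) hlim
  have hbound := ((summable_one_div_add_pow hx.le hp).hasSum.mul_left (p : ℝ)).sub
    ((summable_one_div_add_pow hx.le (p := p + 1) (by omega)).hasSum.mul_left (p * x))
  have hle : hurwitzSeries p x ≤ p * hurwitzSeries p x - p * x * hurwitzSeries (p + 1) x := by
    refine hasSum_le (fun k => ?_) habel hbound
    have hk : 0 < (k : ℝ) + 1 + x := by positivity
    calc ((k : ℝ) + 1) * (c k - c (k + 1))
        ≤ ((k : ℝ) + 1) * (p / ((k : ℝ) + 1 + x) ^ (p + 1)) := by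
          rw [hc_succ]
          exact mul_le_mul_of_nonneg_left (one_div_pow_sub_one_div_add_one_pow_le hk p)
            (by positivity)
      _ = _ := by field_simp; ring
  linarith

theorem monotoneOn_pow_mul_hurwitzSeries (hp : 2 ≤ p) :
    MonotoneOn (fun x => x ^ (p - 1) * hurwitzSeries p x) (Ioi 0) := by
  obtain ⟨q, rfl⟩ : ∃ q, p = q + 2 := ⟨p - 2, by omega⟩
  have hderiv : ∀ x ∈ Ioi (0 : ℝ),
      HasDerivAt (fun x => x ^ (q + 2 - 1) * hurwitzSeries (q + 2) x)
        (x ^ q * ((q + 1) * hurwitzSeries (q + 2) x - (q + 2) * x * hurwitzSeries (q + 3) x))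
        x := by
    intro x hx
    refine ((hasDerivAt_pow (q + 1) x).fun_mul (hasDerivAt_hurwitzSeries hp hx)).congr_deriv ?_
    simp only [Nat.add_sub_cancel]
    push_cast
    ring
  refine monotoneOn_of_hasDerivWithinAt_nonneg (convex_Ioi 0)
    (fun x hx => (hderiv x hx).continuousAt.continuousWithinAt)
    (by rw [interior_Ioi]; exact fun x hx => (hderiv x hx).hasDerivWithinAt) ?_
  rw [interior_Ioi]
  intro x hx
  have hx' : 0 < x := hx
  have habel := mul_hurwitzSeries_succ_le hp hx
  push_cast at habel
  have : 0 ≤ (q + 1) * hurwitzSeries (q + 2) x - (q + 2) * x * hurwitzSeries (q + 3) x := by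
    linarith
  positivity

theorem sum_range_sub_log_one_add_div (hx : 0 ≤ x) (n : ℕ) :
    ∑ k ∈ range n, (x / ((k : ℝ) + 1) - Real.log (1 + x / ((k : ℝ) + 1)))
      = x * harmonic n + Real.log n.factorial - ∑ k ∈ range n, Real.log (1 + x + k) := by
  induction n with
  | zero => simp
  | succ n ih =>
    have hlog : Real.log (1 + x / ((n : ℝ) + 1)) = Real.log (1 + x + n) - Real.log (n + 1) := by
      rw [← Real.log_div (by positivity) (by positivity)]
      congr 1
      field_simp
      ring
    rw [sum_range_succ, ih, sum_range_succ, harmonic_succ, Nat.factorial_succ, hlog]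
    push_cast
    rw [Real.log_mul (by positivity) (by positivity)]
    field_simp
    ring

theorem log_Gamma_one_add (hx : 0 ≤ x) :
    Real.log (Real.Gamma (1 + x)) = logGammaSeries x - γ * x := by
  have hpartial : ∀ n : ℕ,
      ∑ k ∈ range n, (x / ((k : ℝ) + 1) - Real.log (1 + x / ((k : ℝ) + 1)))
        = x * (harmonic n - Real.log n) + Real.BohrMollerup.logGammaSeq (1 + x) n
          + (Real.log (n + (1 + x)) - Real.log n) := by
    intro n
    rw [sum_range_sub_log_one_add_div hx, Real.BohrMollerup.logGammaSeq, sum_range_succ,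
      show (n : ℝ) + (1 + x) = 1 + x + n by ring]
    ring
  have hlim := ((Real.tendsto_harmonic_sub_log.const_mul x).add
    (Real.BohrMollerup.tendsto_log_gamma (by linarith : 0 < 1 + x))).add
    ((Real.tendsto_log_comp_add_sub_log (1 + x)).comp tendsto_natCast_atTop_atTop)
  have := tendsto_nhds_unique (summable_sub_log_one_add_div hx).hasSum.tendsto_sum_nat
    (hlim.congr fun n => (hpartial n).symm)
  rw [logGammaSeries, this]
  ring

theorem hasDerivAt_logGammaSeries (hx : 0 < x) :
    HasDerivAt logGammaSeries (digammaSeries x) x := by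
  refine hasDerivAt_tsum_of_isPreconnected
    (g := fun (k : ℕ) (y : ℝ) => y / ((k : ℝ) + 1) - Real.log (1 + y / ((k : ℝ) + 1)))
    (g' := fun (k : ℕ) (y : ℝ) => 1 / ((k : ℝ) + 1) - 1 / ((k : ℝ) + 1 + y))
    (summable_one_div_succ_sq.mul_left (x + 1)) isOpen_Ioo isPreconnected_Ioo
    (fun k y hy => ?_) (fun k y hy => ?_) (t := Ioo 0 (x + 1)) ⟨hx, by linarith⟩
    (summable_sub_log_one_add_div hx.le) ⟨hx, by linarith⟩
  · have hy : 0 < y := hy.1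
    have hk : 0 < (k : ℝ) + 1 := by positivity
    have hdiv := (hasDerivAt_id' y).div_const ((k : ℝ) + 1)
    refine (hdiv.sub ((hdiv.const_add 1).log (by positivity))).congr_deriv ?_
    field_simp
  · obtain ⟨hy0, hy1⟩ := hy
    rw [Real.norm_of_nonneg (by rw [one_div_sub_one_div_add_eq hy0.le]; positivity),
      one_div_sub_one_div_add_eq hy0.le, mul_one_div]
    gcongr
    nlinarith

theorem hasDerivAt_log_Gamma_one_add (hx : 0 < x) :
    HasDerivAt (fun y => Real.log (Real.Gamma (1 + y))) (digammaSeries x - γ) x := by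
  refine ((hasDerivAt_logGammaSeries hx).sub ((hasDerivAt_id' x).const_mul γ)
    |>.congr_deriv (by ring)).congr_of_eventuallyEq ?_
  filter_upwards [Ioi_mem_nhds hx] with y hy
  exact log_Gamma_one_add (le_of_lt hy)

end Series

section MarginalCombination

variable {ι κ : Type*} [Fintype ι] [Fintype κ]

noncomputable def marginalCombination (lam : ι → κ → ℝ) (ρ : ℝ) (φ : ℝ → ℝ) : ℝ :=
  ∑ i, φ (∑ j, lam i j) + ∑ j, φ (∑ i, lam i j) - ρ * ∑ i, ∑ j, φ (lam i j)

variable {lam : ι → κ → ℝ} {ρ : ℝ}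

theorem marginalCombination_const_mul (c : ℝ) (φ : ℝ → ℝ) :
    marginalCombination lam ρ (fun a => c * φ a) = c * marginalCombination lam ρ φ := by
  simp only [marginalCombination, ← mul_sum]
  ring

theorem marginalCombination_sub_const_mul (φ : ℝ → ℝ) (c : ℝ) :
    marginalCombination lam ρ (fun a => φ a - c * a)
      = marginalCombination lam ρ φ - c * ((2 - ρ) * ∑ i, ∑ j, lam i j) := by
  simp only [marginalCombination, sum_sub_distrib, ← mul_sum]
  rw [sum_comm (f := fun i j => lam i j)]
  ring

theorem sum_mul_le_sum_mul_of_monotoneOn {α : Type*} {N : ℝ → ℝ} (hN : MonotoneOn N (Ioi 0))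
    {s : Finset α} {x : α → ℝ} (hx : ∀ i ∈ s, 0 < x i) :
    ∑ i ∈ s, x i * N (x i) ≤ (∑ i ∈ s, x i) * N (∑ i ∈ s, x i) := by
  rw [sum_mul]
  refine sum_le_sum fun i hi => mul_le_mul_of_nonneg_left ?_ (hx i hi).le
  have hle : x i ≤ ∑ j ∈ s, x j := single_le_sum (fun j hj => (hx j hj).le) hi
  exact hN (hx i hi) ((hx i hi).trans_le hle) hle

theorem sub_mul_sum_le_marginalCombination (hlam : ∀ i j, 0 < lam i j) {N : ℝ → ℝ}
    (hN : MonotoneOn N (Ioi 0)) :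
    (2 - ρ) * ∑ i, ∑ j, lam i j * N (lam i j)
      ≤ marginalCombination lam ρ (fun a => a * N a) := by
  have hrow : ∑ i, ∑ j, lam i j * N (lam i j) ≤ ∑ i, (∑ j, lam i j) * N (∑ j, lam i j) :=
    sum_le_sum fun i _ => sum_mul_le_sum_mul_of_monotoneOn hN fun j _ => hlam i j
  have hcol : ∑ i, ∑ j, lam i j * N (lam i j) ≤ ∑ j, (∑ i, lam i j) * N (∑ i, lam i j) := by
    rw [sum_comm]
    exact sum_le_sum fun j _ => sum_mul_le_sum_mul_of_monotoneOn hN fun i _ => hlam i j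
  unfold marginalCombination
  linarith

variable [Nonempty ι] [Nonempty κ]

theorem marginalCombination_pos (hρ : ρ < 2) (hlam : ∀ i j, 0 < lam i j) {N : ℝ → ℝ}
    (hN : MonotoneOn N (Ioi 0)) (hN_pos : ∀ a, 0 < a → 0 < N a) :
    0 < marginalCombination lam ρ (fun a => a * N a) := by
  refine lt_of_lt_of_le ?_ (sub_mul_sum_le_marginalCombination hlam hN)
  have : 0 < ∑ i, ∑ j, lam i j * N (lam i j) := sum_pos (fun i _ => sum_pos
    (fun j _ => mul_pos (hlam i j) (hN_pos _ (hlam i j))) univ_nonempty) univ_nonempty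
  nlinarith

theorem hasDerivAt_marginalCombination (hlam : ∀ i j, 0 < lam i j) {φ : ℝ → ℝ → ℝ}
    {φ' : ℝ → ℝ} {t : ℝ} (hφ : ∀ a, 0 < a → HasDerivAt (fun s => φ s a) (φ' a) t) :
    HasDerivAt (fun s => marginalCombination lam ρ (φ s)) (marginalCombination lam ρ φ') t :=
  ((HasDerivAt.fun_sum fun i _ => hφ _ (sum_pos (fun j _ => hlam i j) univ_nonempty)).add
    (HasDerivAt.fun_sum fun j _ => hφ _ (sum_pos (fun i _ => hlam i j) univ_nonempty))).sub
    ((HasDerivAt.fun_sum fun i _ => HasDerivAt.fun_sum fun j _ => hφ _ (hlam i j)).const_mul ρ)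

end MarginalCombination

section LogDerivGammaRatio

variable {ι κ : Type*} [Fintype ι] [Fintype κ] {lam : ι → κ → ℝ} {ρ : ℝ} {p : ℕ} {t : ℝ}

theorem log_Gamma_ratio_eq (hlam : ∀ i j, 0 ≤ lam i j) (ht : 0 ≤ t) :
    Real.log (((∏ i, Real.Gamma (1 + (∑ j, lam i j) * t)) *
        ∏ j, Real.Gamma (1 + (∑ i, lam i j) * t)) /
        (∏ i, ∏ j, Real.Gamma (1 + lam i j * t)) ^ ρ)
      = marginalCombination lam ρ (fun a => Real.log (Real.Gamma (1 + a * t))) := by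
  have hΓ : ∀ a, 0 ≤ a → 0 < Real.Gamma (1 + a * t) := fun a ha =>
    Real.Gamma_pos_of_pos (by positivity)
  have hrow : ∀ i, 0 ≤ ∑ j, lam i j := fun i => sum_nonneg fun j _ => hlam i j
  have hcol : ∀ j, 0 ≤ ∑ i, lam i j := fun j => sum_nonneg fun i _ => hlam i j
  have hprod : ∀ i, 0 < ∏ j, Real.Gamma (1 + lam i j * t) := fun i =>
    prod_pos fun j _ => hΓ _ (hlam i j)
  have hA : 0 < ∏ i, Real.Gamma (1 + (∑ j, lam i j) * t) := prod_pos fun i _ => hΓ _ (hrow i)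
  have hB : 0 < ∏ j, Real.Gamma (1 + (∑ i, lam i j) * t) := prod_pos fun j _ => hΓ _ (hcol j)
  have hC : 0 < ∏ i, ∏ j, Real.Gamma (1 + lam i j * t) := prod_pos fun i _ => hprod i
  rw [Real.log_div (mul_pos hA hB).ne' (Real.rpow_pos_of_pos hC ρ).ne',
    Real.log_mul hA.ne' hB.ne', Real.log_rpow hC, Real.log_prod fun i _ => (hΓ _ (hrow i)).ne',
    Real.log_prod fun j _ => (hΓ _ (hcol j)).ne', Real.log_prod fun i _ => (hprod i).ne']
  simp only [Real.log_prod fun j _ => (hΓ _ (hlam _ j)).ne', marginalCombination]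

noncomputable def logDerivGammaRatio (lam : ι → κ → ℝ) (ρ t : ℝ) : ℝ :=
  marginalCombination lam ρ (fun a => a * digammaSeries (a * t) - γ * a)

theorem logDerivGammaRatio_eq (t : ℝ) :
    logDerivGammaRatio lam ρ t = marginalCombination lam ρ (fun a => a * digammaSeries (a * t))
      - γ * ((2 - ρ) * ∑ i, ∑ j, lam i j) :=
  marginalCombination_sub_const_mul _ _

theorem logDerivGammaRatio_zero :
    logDerivGammaRatio lam ρ 0 = -(γ * (2 - ρ) * ∑ i, ∑ j, lam i j) := by
  simp only [logDerivGammaRatio_eq, mul_zero, digammaSeries_zero, marginalCombination,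
    sum_const_zero]
  ring

variable [Nonempty ι] [Nonempty κ]

theorem marginalCombination_pow_mul_hurwitzSeries_pos (hρ : ρ < 2) (hlam : ∀ i j, 0 < lam i j)
    (hp : 2 ≤ p) (ht : 0 < t) :
    0 < marginalCombination lam ρ (fun a => a ^ p * hurwitzSeries p (a * t)) := by
  have hN : MonotoneOn (fun a => a ^ (p - 1) * hurwitzSeries p (a * t)) (Ioi 0) := by
    intro a ha b hb hab
    have := monotoneOn_pow_mul_hurwitzSeries hp (mul_pos ha ht) (mul_pos hb ht)
      (mul_le_mul_of_nonneg_right hab ht.le)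
    simp only [mul_pow] at this
    have htp : 0 < t ^ (p - 1) := by positivity
    nlinarith
  have hN_pos : ∀ a, 0 < a → 0 < a ^ (p - 1) * hurwitzSeries p (a * t) := fun a ha =>
    mul_pos (by positivity) (hurwitzSeries_pos hp (by positivity))
  convert marginalCombination_pos hρ hlam hN hN_pos using 2
  funext a
  rw [← mul_assoc, ← pow_succ', Nat.sub_add_cancel (by omega)]

theorem hasDerivAt_log_Gamma_ratio (hlam : ∀ i j, 0 < lam i j) (ht : 0 < t) :
    HasDerivAt (fun s => marginalCombination lam ρ (fun a => Real.log (Real.Gamma (1 + a * s))))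
      (logDerivGammaRatio lam ρ t) t := by
  refine hasDerivAt_marginalCombination hlam fun a ha => ?_
  have := (hasDerivAt_log_Gamma_one_add (by positivity)).comp t ((hasDerivAt_id' t).const_mul a)
  exact this.congr_deriv (by ring)

theorem hasDerivAt_logDerivGammaRatio (hlam : ∀ i j, 0 < lam i j) (ht : 0 ≤ t) :
    HasDerivAt (logDerivGammaRatio lam ρ)
      (marginalCombination lam ρ (fun a => a ^ 2 * hurwitzSeries 2 (a * t))) t := by
  refine hasDerivAt_marginalCombination hlam fun a ha => ?_
  have := (hasDerivAt_digammaSeries (by positivity)).comp t ((hasDerivAt_id' t).const_mul a)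
  exact ((this.const_mul a).sub_const (γ * a)).congr_deriv (by ring)

theorem hasDerivAt_marginalCombination_pow_mul_hurwitzSeries (hlam : ∀ i j, 0 < lam i j)
    (hp : 2 ≤ p) (ht : 0 < t) :
    HasDerivAt (fun s => marginalCombination lam ρ (fun a => a ^ p * hurwitzSeries p (a * s)))
      (-p * marginalCombination lam ρ (fun a => a ^ (p + 1) * hurwitzSeries (p + 1) (a * t)))
      t := by
  rw [← marginalCombination_const_mul]
  refine hasDerivAt_marginalCombination hlam fun a ha => ?_
  have := (hasDerivAt_hurwitzSeries hp (by positivity)).comp t ((hasDerivAt_id' t).const_mul a)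
  exact (this.const_mul (a ^ p)).congr_deriv (by ring)

theorem continuousOn_logDerivGammaRatio (hlam : ∀ i j, 0 < lam i j) :
    ContinuousOn (logDerivGammaRatio lam ρ) (Ici 0) := fun _ ht =>
  (hasDerivAt_logDerivGammaRatio hlam ht).continuousAt.continuousWithinAt

theorem strictMonoOn_logDerivGammaRatio (hρ : ρ < 2) (hlam : ∀ i j, 0 < lam i j) :
    StrictMonoOn (logDerivGammaRatio lam ρ) (Ici 0) := by
  refine strictMonoOn_of_hasDerivWithinAt_pos (convex_Ici 0)
    (f' := fun t => marginalCombination lam ρ (fun a => a ^ 2 * hurwitzSeries 2 (a * t)))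
    (continuousOn_logDerivGammaRatio hlam) (fun t ht => ?_) (fun t ht => ?_)
  · exact (hasDerivAt_logDerivGammaRatio hlam (interior_subset ht)).hasDerivWithinAt
  · rw [interior_Ici] at ht
    exact marginalCombination_pow_mul_hurwitzSeries_pos hρ hlam le_rfl ht

theorem concaveOn_logDerivGammaRatio (hρ : ρ < 2) (hlam : ∀ i j, 0 < lam i j) :
    ConcaveOn ℝ (Ioi 0) (logDerivGammaRatio lam ρ) := by
  refine concaveOn_of_hasDerivWithinAt2_nonpos (convex_Ioi 0)
    (f' := fun t => marginalCombination lam ρ (fun a => a ^ 2 * hurwitzSeries 2 (a * t)))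
    (f'' := fun t =>
      -(2 : ℕ) * marginalCombination lam ρ (fun a => a ^ 3 * hurwitzSeries 3 (a * t)))
    ((continuousOn_logDerivGammaRatio hlam).mono Ioi_subset_Ici_self) (fun t ht => ?_)
    (fun t ht => ?_) (fun t ht => ?_)
  all_goals rw [interior_Ioi] at ht
  · exact (hasDerivAt_logDerivGammaRatio hlam (le_of_lt ht)).hasDerivWithinAt
  · exact (hasDerivAt_marginalCombination_pow_mul_hurwitzSeries hlam le_rfl ht).hasDerivWithinAt
  · have := marginalCombination_pow_mul_hurwitzSeries_pos hρ hlam (p := 3) (by norm_num) ht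
    push_cast
    linarith

theorem tendsto_logDerivGammaRatio_atTop (hρ : ρ < 2) (hlam : ∀ i j, 0 < lam i j) :
    Tendsto (logDerivGammaRatio lam ρ) atTop atTop := by
  obtain ⟨i₀⟩ := ‹Nonempty ι›
  obtain ⟨j₀⟩ := ‹Nonempty κ›
  have hμ := hlam i₀ j₀
  have hlower : ∀ t, 0 ≤ t → (2 - ρ) * (lam i₀ j₀ * digammaSeries (lam i₀ j₀ * t))
      - γ * ((2 - ρ) * ∑ i, ∑ j, lam i j) ≤ logDerivGammaRatio lam ρ t := by
    intro t ht
    have hN : MonotoneOn (fun a => digammaSeries (a * t)) (Ioi 0) := fun a ha b hb hab =>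
      monotoneOn_digammaSeries (mul_nonneg (le_of_lt ha) ht) (mul_nonneg (le_of_lt hb) ht)
        (mul_le_mul_of_nonneg_right hab ht)
    have hterm : ∀ i j, 0 ≤ lam i j * digammaSeries (lam i j * t) := fun i j =>
      mul_nonneg (hlam i j).le (digammaSeries_nonneg (mul_nonneg (hlam i j).le ht))
    have hsingle : lam i₀ j₀ * digammaSeries (lam i₀ j₀ * t)
        ≤ ∑ i, ∑ j, lam i j * digammaSeries (lam i j * t) :=
      (single_le_sum (fun j _ => hterm i₀ j) (mem_univ j₀)).trans
        (single_le_sum (fun i _ => sum_nonneg fun j _ => hterm i j) (mem_univ i₀))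
    rw [logDerivGammaRatio_eq]
    nlinarith [sub_mul_sum_le_marginalCombination (ρ := ρ) hlam hN]
  refine tendsto_atTop_mono' _ (eventually_atTop.2 ⟨0, hlower⟩) ?_
  refine tendsto_atTop_add_const_right _ _ (Tendsto.const_mul_atTop (by linarith) ?_)
  exact (tendsto_digammaSeries_atTop.comp (tendsto_id.const_mul_atTop hμ)).const_mul_atTop hμ

theorem image_logDerivGammaRatio_Ioi (hρ : ρ < 2) (hlam : ∀ i j, 0 < lam i j) :
    logDerivGammaRatio lam ρ '' Ioi 0 = Ioi (-(γ * (2 - ρ) * ∑ i, ∑ j, lam i j)) := by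
  rw [← logDerivGammaRatio_zero]
  exact (continuousOn_logDerivGammaRatio hlam).image_Ioi_of_strictMonoOn
    (strictMonoOn_logDerivGammaRatio hρ hlam) (tendsto_logDerivGammaRatio_atTop hρ hlam)

end LogDerivGammaRatio

end GammaRatio

open GammaRatio

theorem log_deriv_ratio_gamma_rho_lt_two
    (m n : ℕ) (hm : 0 < m) (hn : 0 < n)
    (lam : Fin m → Fin n → ℝ) (hlam : ∀ i j, 0 < lam i j)
    (α : Fin m → ℝ) (hα : ∀ i, α i = ∑ j : Fin n, lam i j)
    (β : Fin n → ℝ) (hβ : ∀ j, β j = ∑ i : Fin m, lam i j)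
    (ρ : ℝ) (hρ : ρ < 2)
    (f : ℝ → ℝ)
    (hf : ∀ t, f t =
      ((∏ i : Fin m, Real.Gamma (1 + α i * t)) * ∏ j : Fin n, Real.Gamma (1 + β j * t)) /
        (∏ i : Fin m, ∏ j : Fin n, Real.Gamma (1 + lam i j * t)) ^ ρ) :
    StrictMonoOn (deriv (fun s => Real.log (f s))) (Set.Ioi 0) ∧
      ConcaveOn ℝ (Set.Ioi (0 : ℝ)) (deriv (fun s => Real.log (f s))) ∧
      deriv (fun s => Real.log (f s)) '' Set.Ioi 0 =
        Set.Ioi (-(Real.eulerMascheroniConstant * (2 - ρ) *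
          ∑ i : Fin m, ∑ j : Fin n, lam i j)) := by
  obtain rfl : α = fun i => ∑ j, lam i j := funext hα
  obtain rfl : β = fun j => ∑ i, lam i j := funext hβ
  have : Nonempty (Fin m) := Fin.pos_iff_nonempty.mp hm
  have : Nonempty (Fin n) := Fin.pos_iff_nonempty.mp hn
  have hderiv : EqOn (logDerivGammaRatio lam ρ) (deriv fun s => Real.log (f s)) (Ioi 0) := by
    intro t ht
    refine ((hasDerivAt_log_Gamma_ratio hlam ht).congr_of_eventuallyEq ?_).deriv.symm
    filter_upwards [Ioi_mem_nhds ht] with s hs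
    rw [hf, log_Gamma_ratio_eq (fun i j => (hlam i j).le) (le_of_lt hs)]
  refine ⟨((strictMonoOn_logDerivGammaRatio hρ hlam).mono Ioi_subset_Ici_self).congr hderiv,
    (concaveOn_logDerivGammaRatio hρ hlam).congr hderiv, ?_⟩
  rw [← hderiv.image_eq, image_logDerivGammaRatio_Ioi hρ hlam]
end

section
/- Let m, n be positive integers with m ≥ 2 or n ≥ 2, let λ_{ij} > 0 for 1 ≤ i ≤ m, 1 ≤ j ≤ n, α_i = ∑_{j=1}^n λ_{ij}, β_j = ∑_{i=1}^m λ_{ij}, and take ρ = 2. Then f(t) = [∏_{i=1}^m Γ(1+α_i t) · ∏_{j=1}^n Γ(1+β_j t)] / [∏_{i=1}^m ∏_{j=1}^n Γ(1+λ_{ij} t)]² is strictly increasing on (0, ∞), f(t) → 1 as t → 0⁺, and f(t) → ∞ as t → ∞; consequently the image of (0, ∞) under f is the open interval (1, ∞). -/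
/-!
Euler's limit `Γ(x) = lim N ^ x N! / ∏_{k ≤ N} (x + k)` turns the `N`-th approximant of `f`
into a constant times `∏_{k ≤ N} R(1 + k, t)`, where
`R(c, t) = ∏ᵢⱼ (c + λᵢⱼ t)² / (∏ᵢ (c + αᵢ t) ∏ⱼ (c + βⱼ t))`: the powers of `N` do not depend
on `t` because `∑ αᵢ + ∑ βⱼ = 2 ∑ λᵢⱼ`. Grouping by rows and columns, `R(c, ·)` is a product of
ratios `∏ⱼ (c + wⱼ t) / (c + (∑ w) t)`, which are nondecreasing on `[0, ∞)`, and strictly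
increasing and unbounded when there are at least two weights. So `f / R(1, ·)` is nondecreasing
as a limit of nondecreasing functions and equals `1` at `0`; hence `f = (f / R(1, ·)) R(1, ·)`
is strictly increasing, `f ≥ R(1, ·) → ∞`, and continuity with `f 0 = 1` gives the image.
-/

open Finset Filter Set Topology Real

section MonotoneProducts

variable {ι : Type*} {f g : ℝ → ℝ} {S : Set ℝ}

lemma StrictMonoOn.mul_monotoneOn (hf : StrictMonoOn f S) (hg : MonotoneOn g S)
    (hf₀ : ∀ x ∈ S, 0 ≤ f x) (hg₀ : ∀ x ∈ S, 0 < g x) : StrictMonoOn (f * g) S :=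
  fun _ hx _ hy h ↦ mul_lt_mul (hf hx hy h) (hg hx hy h.le) (hg₀ _ hx) (hf₀ _ hy)

lemma MonotoneOn.mul_strictMonoOn (hf : MonotoneOn f S) (hg : StrictMonoOn g S)
    (hf₀ : ∀ x ∈ S, 0 < f x) (hg₀ : ∀ x ∈ S, 0 ≤ g x) : StrictMonoOn (f * g) S :=
  fun _ hx _ hy h ↦ mul_lt_mul' (hf hx hy h.le) (hg hx hy h) (hg₀ _ hx) (hf₀ _ hy)

lemma monotoneOn_finset_prod {s : Finset ι} {F : ι → ℝ → ℝ} (hF : ∀ i ∈ s, MonotoneOn (F i) S)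
    (hF₀ : ∀ i ∈ s, ∀ x ∈ S, 0 ≤ F i x) : MonotoneOn (fun x ↦ ∏ i ∈ s, F i x) S :=
  fun _ hx _ hy h ↦ prod_le_prod (fun i hi ↦ hF₀ i hi _ hx) fun i hi ↦ hF i hi hx hy h

lemma strictMonoOn_finset_prod {s : Finset ι} {F : ι → ℝ → ℝ} (hF : ∀ i ∈ s, MonotoneOn (F i) S)
    (hF₀ : ∀ i ∈ s, ∀ x ∈ S, 0 < F i x) (hstrict : ∃ i ∈ s, StrictMonoOn (F i) S) :
    StrictMonoOn (fun x ↦ ∏ i ∈ s, F i x) S := by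
  obtain ⟨i₀, hi₀, hstrict⟩ := hstrict
  exact fun _ hx _ hy h ↦ prod_lt_prod (fun i hi ↦ hF₀ i hi _ hx)
    (fun i hi ↦ hF i hi hx hy h.le) ⟨i₀, hi₀, hstrict hx hy h⟩

end MonotoneProducts

lemma image_Ioi_eq_Ioi_of_strictMonoOn {f : ℝ → ℝ} {a : ℝ} (hcont : ContinuousOn f (Ici a))
    (hmono : StrictMonoOn f (Ici a)) (htop : Tendsto f atTop atTop) :
    f '' Ioi a = Ioi (f a) := by
  refine (image_subset_iff.2 fun t ht ↦ hmono self_mem_Ici (mem_Ici.2 (le_of_lt ht)) ht).antisymm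
    fun y (hy : f a < y) ↦ ?_
  obtain ⟨b, hyb, hab⟩ := ((htop.eventually_ge_atTop y).and (eventually_ge_atTop a)).exists
  obtain ⟨t, ⟨hat, -⟩, rfl⟩ := intermediate_value_Icc hab (hcont.mono Icc_subset_Ici_self)
    ⟨hy.le, hyb⟩
  exact ⟨t, lt_of_le_of_ne hat (by rintro rfl; exact lt_irrefl _ hy), rfl⟩

section AffineProdRatio

variable {ι : Type*} {c : ℝ}

lemma monotoneOn_pair_ratio (hc : 0 < c) {a b : ℝ} (ha : 0 ≤ a) (hb : 0 ≤ b) :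
    MonotoneOn (fun t ↦ (c + a * t) * (c + b * t) / (c + (a + b) * t)) (Ici 0) := by
  intro x (hx : 0 ≤ x) y (hy : 0 ≤ y) hxy
  rw [div_le_div_iff₀ (by positivity) (by positivity)]
  have : 0 ≤ a * b * (y - x) * (c * (x + y) + (a + b) * x * y) := by
    have := sub_nonneg.2 hxy; positivity
  linear_combination this

lemma strictMonoOn_pair_ratio (hc : 0 < c) {a b : ℝ} (ha : 0 < a) (hb : 0 < b) :
    StrictMonoOn (fun t ↦ (c + a * t) * (c + b * t) / (c + (a + b) * t)) (Ici 0) := by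
  intro x (hx : 0 ≤ x) y (hy : 0 ≤ y) hxy
  rw [div_lt_div_iff₀ (by positivity) (by positivity)]
  have : 0 < a * b * (y - x) * (c * (x + y) + (a + b) * x * y) := by
    have := sub_pos.2 hxy
    have : 0 < c * (x + y) := mul_pos hc (by linarith)
    positivity
  linear_combination this

noncomputable def affineProdRatio (c : ℝ) (s : Finset ι) (w : ι → ℝ) (t : ℝ) : ℝ :=
  (∏ j ∈ s, (c + w j * t)) / (c + (∑ j ∈ s, w j) * t)

variable {s : Finset ι} {w : ι → ℝ}

lemma affineProdRatio_pos (hc : 0 < c) (hw : ∀ j ∈ s, 0 ≤ w j) {t : ℝ} (ht : 0 ≤ t) :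
    0 < affineProdRatio c s w t := by
  have := sum_nonneg hw
  exact div_pos (prod_pos fun j hj ↦ by have := hw j hj; positivity) (by positivity)

lemma affineProdRatio_insert [DecidableEq ι] {a : ι} (ha : a ∉ s) {t : ℝ}
    (h : c + (∑ j ∈ s, w j) * t ≠ 0) :
    affineProdRatio c (insert a s) w t = affineProdRatio c s w t *
      ((c + (∑ j ∈ s, w j) * t) * (c + w a * t) / (c + (∑ j ∈ s, w j + w a) * t)) := by
  rw [affineProdRatio, affineProdRatio, prod_insert ha, sum_insert ha, add_comm (w a),
    div_mul_div_comm, mul_left_comm (∏ j ∈ s, (c + w j * t)), mul_div_mul_left _ _ h, mul_comm]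

lemma affineProdRatio_monotoneOn (hc : 0 < c) (hw : ∀ j ∈ s, 0 ≤ w j) :
    MonotoneOn (affineProdRatio c s w) (Ici 0) := by
  classical
  induction s using Finset.induction_on with
  | empty => exact fun _ _ _ _ _ ↦ by simp [affineProdRatio]
  | insert a s ha ih =>
    have hw' : ∀ j ∈ s, 0 ≤ w j := fun j hj ↦ hw j (mem_insert_of_mem hj)
    have hS := sum_nonneg hw'
    have hwa := hw a (mem_insert_self a s)
    have hprod : MonotoneOn (affineProdRatio c s w *
        fun t ↦ (c + (∑ j ∈ s, w j) * t) * (c + w a * t) / (c + (∑ j ∈ s, w j + w a) * t))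
        (Ici 0) :=
      (ih hw').mul (monotoneOn_pair_ratio hc hS hwa)
        (fun t ht ↦ (affineProdRatio_pos hc hw' ht).le) fun t (ht : 0 ≤ t) ↦ by positivity
    exact hprod.congr fun t (ht : 0 ≤ t) ↦ (affineProdRatio_insert ha (by positivity)).symm

lemma affineProdRatio_eq_erase_mul [DecidableEq ι] (hc : 0 < c) (hw : ∀ j ∈ s, 0 ≤ w j) {a : ι}
    (ha : a ∈ s) {t : ℝ} (ht : 0 ≤ t) :
    affineProdRatio c s w t = affineProdRatio c (s.erase a) w t *
      ((c + (∑ j ∈ s.erase a, w j) * t) * (c + w a * t) /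
        (c + (∑ j ∈ s.erase a, w j + w a) * t)) := by
  have := sum_nonneg (s := s.erase a) fun j hj ↦ hw j (mem_of_mem_erase hj)
  conv_lhs => rw [← insert_erase ha]
  exact affineProdRatio_insert (notMem_erase a s) (by positivity)

lemma sum_erase_pos [DecidableEq ι] {a : ι} (hw : ∀ j ∈ s, 0 < w j) (hs : 1 < #s) (ha : a ∈ s) :
    0 < ∑ j ∈ s.erase a, w j :=
  sum_pos (fun j hj ↦ hw j (mem_of_mem_erase hj)) (card_pos.1 (by rw [card_erase_of_mem ha]; omega))

lemma affineProdRatio_strictMonoOn (hc : 0 < c) (hw : ∀ j ∈ s, 0 < w j) (hs : 1 < #s) :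
    StrictMonoOn (affineProdRatio c s w) (Ici 0) := by
  classical
  obtain ⟨a, ha⟩ := card_pos.1 (by omega : 0 < #s)
  have hw' : ∀ j ∈ s.erase a, 0 < w j := fun j hj ↦ hw j (mem_of_mem_erase hj)
  have hS := sum_erase_pos hw hs ha
  have hprod : StrictMonoOn (affineProdRatio c (s.erase a) w * fun t ↦
      (c + (∑ j ∈ s.erase a, w j) * t) * (c + w a * t) / (c + (∑ j ∈ s.erase a, w j + w a) * t))
      (Ici 0) :=
    (affineProdRatio_monotoneOn hc fun j hj ↦ (hw' j hj).le).mul_strictMonoOn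
      (strictMonoOn_pair_ratio hc hS (hw a ha))
      (fun t ht ↦ affineProdRatio_pos hc (fun j hj ↦ (hw' j hj).le) ht)
      fun t (ht : 0 ≤ t) ↦ by have := hw a ha; positivity
  exact hprod.congr fun t ht ↦
    (affineProdRatio_eq_erase_mul hc (fun j hj ↦ (hw j hj).le) ha ht).symm

lemma one_le_affineProdRatio (hw : ∀ j ∈ s, 0 ≤ w j) {t : ℝ} (ht : 0 ≤ t) :
    1 ≤ affineProdRatio 1 s w t := by
  simpa [affineProdRatio] using affineProdRatio_monotoneOn one_pos hw self_mem_Ici ht ht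

lemma pair_ratio_ge {a b t : ℝ} (ha : 0 ≤ a) (hb : 0 ≤ b) (ht : 1 ≤ t) :
    a * b / (1 + a + b) * t ≤ (1 + a * t) * (1 + b * t) / (1 + (a + b) * t) := by
  rw [div_mul_eq_mul_div, div_le_div_iff₀ (by positivity) (by positivity)]
  have : 0 ≤ a * b * t * (t - 1) + (1 + a + b) * (1 + (a + b) * t) := by
    have := sub_nonneg.2 ht; positivity
  linarith

lemma tendsto_affineProdRatio_atTop (hw : ∀ j ∈ s, 0 < w j) (hs : 1 < #s) :
    Tendsto (affineProdRatio 1 s w) atTop atTop := by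
  classical
  obtain ⟨a, ha⟩ := card_pos.1 (by omega : 0 < #s)
  set S := ∑ j ∈ s.erase a, w j
  have hS : 0 < S := sum_erase_pos hw hs ha
  have hwa := hw a ha
  refine tendsto_atTop_mono' _ ?_ (tendsto_id.const_mul_atTop
    (by positivity : 0 < S * w a / (1 + S + w a)))
  filter_upwards [eventually_ge_atTop 1] with t ht
  have ht₀ : 0 ≤ t := by linarith
  rw [affineProdRatio_eq_erase_mul one_pos (fun j hj ↦ (hw j hj).le) ha ht₀]
  exact (pair_ratio_ge hS.le hwa.le ht).trans (le_mul_of_one_le_left (by positivity)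
    (one_le_affineProdRatio (fun j hj ↦ (hw j (mem_of_mem_erase hj)).le) ht₀))

end AffineProdRatio

section MarginFactor

variable {ι κ : Type*} [Fintype ι] [Fintype κ] {lam : ι → κ → ℝ} {c : ℝ}

-- `R(c, t) = ∏ᵢⱼ (c + λᵢⱼ t)² / (∏ᵢ (c + αᵢ t) ∏ⱼ (c + βⱼ t))`, grouped by rows and columns.
noncomputable def marginFactor (c : ℝ) (lam : ι → κ → ℝ) (t : ℝ) : ℝ :=
  (∏ i, affineProdRatio c univ (lam i) t) * ∏ j, affineProdRatio c univ (fun i ↦ lam i j) t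

lemma marginFactor_swap : marginFactor c (fun j i ↦ lam i j) = marginFactor c lam :=
  funext fun _ ↦ mul_comm _ _

lemma marginFactor_pos (hc : 0 < c) (hlam : ∀ i j, 0 ≤ lam i j) {t : ℝ} (ht : 0 ≤ t) :
    0 < marginFactor c lam t :=
  mul_pos (prod_pos fun i _ ↦ affineProdRatio_pos hc (fun j _ ↦ hlam i j) ht)
    (prod_pos fun j _ ↦ affineProdRatio_pos hc (fun i _ ↦ hlam i j) ht)

lemma marginFactor_monotoneOn (hc : 0 < c) (hlam : ∀ i j, 0 ≤ lam i j) :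
    MonotoneOn (marginFactor c lam) (Ici 0) :=
  (monotoneOn_finset_prod (fun i _ ↦ affineProdRatio_monotoneOn hc fun j _ ↦ hlam i j)
      fun i _ _ ht ↦ (affineProdRatio_pos hc (fun j _ ↦ hlam i j) ht).le).mul
    (monotoneOn_finset_prod (fun j _ ↦ affineProdRatio_monotoneOn hc fun i _ ↦ hlam i j)
      fun j _ _ ht ↦ (affineProdRatio_pos hc (fun i _ ↦ hlam i j) ht).le)
    (fun _ ht ↦ prod_nonneg fun i _ ↦ (affineProdRatio_pos hc (fun j _ ↦ hlam i j) ht).le)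
    fun _ ht ↦ prod_nonneg fun j _ ↦ (affineProdRatio_pos hc (fun i _ ↦ hlam i j) ht).le

lemma marginFactor_strictMonoOn_of_one_lt_card [Nonempty κ] (hc : 0 < c)
    (hlam : ∀ i j, 0 < lam i j) (hι : 1 < Fintype.card ι) :
    StrictMonoOn (marginFactor c lam) (Ici 0) :=
  (monotoneOn_finset_prod (fun i _ ↦ affineProdRatio_monotoneOn hc fun j _ ↦ (hlam i j).le)
      fun i _ _ ht ↦ (affineProdRatio_pos hc (fun j _ ↦ (hlam i j).le) ht).le).mul_strictMonoOn
    (strictMonoOn_finset_prod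
      (fun j _ ↦ affineProdRatio_monotoneOn hc fun i _ ↦ (hlam i j).le)
      (fun j _ _ ht ↦ affineProdRatio_pos hc (fun i _ ↦ (hlam i j).le) ht)
      ⟨Classical.arbitrary κ, mem_univ _,
        affineProdRatio_strictMonoOn hc (fun i _ ↦ hlam i _) (by rwa [card_univ])⟩)
    (fun _ ht ↦ prod_pos fun i _ ↦ affineProdRatio_pos hc (fun j _ ↦ (hlam i j).le) ht)
    fun _ ht ↦ prod_nonneg fun j _ ↦ (affineProdRatio_pos hc (fun i _ ↦ (hlam i j).le) ht).le

lemma tendsto_marginFactor_atTop_of_one_lt_card [Nonempty κ] (hlam : ∀ i j, 0 < lam i j)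
    (hι : 1 < Fintype.card ι) : Tendsto (marginFactor 1 lam) atTop atTop := by
  classical
  obtain ⟨j₀⟩ := ‹Nonempty κ›
  refine tendsto_atTop_mono' _ ?_
    (tendsto_affineProdRatio_atTop (fun i _ ↦ hlam i j₀) (by rwa [card_univ]))
  filter_upwards [eventually_ge_atTop 0] with t ht
  have hrow : 1 ≤ ∏ i, affineProdRatio 1 univ (lam i) t :=
    one_le_prod fun i _ ↦ one_le_affineProdRatio (fun j _ ↦ (hlam i j).le) ht
  have hcol : 1 ≤ ∏ j ∈ univ.erase j₀, affineProdRatio 1 univ (fun i ↦ lam i j) t :=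
    one_le_prod fun j _ ↦ one_le_affineProdRatio (fun i _ ↦ (hlam i j).le) ht
  have hpos := affineProdRatio_pos (s := univ) one_pos (fun i _ ↦ (hlam i j₀).le) ht
  rw [marginFactor, ← mul_prod_erase _ _ (mem_univ j₀)]
  exact (le_mul_of_one_le_right hpos.le hcol).trans (le_mul_of_one_le_left (by positivity) hrow)

lemma marginFactor_strictMonoOn (hc : 0 < c) (hlam : ∀ i j, 0 < lam i j)
    (hcard : 1 < Fintype.card ι ∧ Nonempty κ ∨ 1 < Fintype.card κ ∧ Nonempty ι) :
    StrictMonoOn (marginFactor c lam) (Ici 0) := by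
  rcases hcard with ⟨hι, _⟩ | ⟨hκ, _⟩
  · exact marginFactor_strictMonoOn_of_one_lt_card hc hlam hι
  · rw [← marginFactor_swap]
    exact marginFactor_strictMonoOn_of_one_lt_card hc (fun j i ↦ hlam i j) hκ

lemma tendsto_marginFactor_atTop (hlam : ∀ i j, 0 < lam i j)
    (hcard : 1 < Fintype.card ι ∧ Nonempty κ ∨ 1 < Fintype.card κ ∧ Nonempty ι) :
    Tendsto (marginFactor 1 lam) atTop atTop := by
  rcases hcard with ⟨hι, _⟩ | ⟨hκ, _⟩
  · exact tendsto_marginFactor_atTop_of_one_lt_card hlam hι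
  · rw [← marginFactor_swap]
    exact tendsto_marginFactor_atTop_of_one_lt_card (fun j i ↦ hlam i j) hκ

end MarginFactor

section MarginRatio

variable {ι κ : Type*} [Fintype ι] [Fintype κ] {lam : ι → κ → ℝ}

-- `marginRatio Gamma lam` is `f`, with `αᵢ`, `βⱼ` the row and column sums of `lam`.
noncomputable def marginRatio (g : ℝ → ℝ) (lam : ι → κ → ℝ) (t : ℝ) : ℝ :=
  (∏ i, g (1 + (∑ j, lam i j) * t)) * (∏ j, g (1 + (∑ i, lam i j) * t)) /
    (∏ i, ∏ j, g (1 + lam i j * t)) ^ 2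

lemma marginRatio_mul (g h : ℝ → ℝ) (t : ℝ) :
    marginRatio (fun x ↦ g x * h x) lam t = marginRatio g lam t * marginRatio h lam t := by
  simp only [marginRatio, prod_mul_distrib, mul_pow]
  ring

lemma marginRatio_div (g h : ℝ → ℝ) (t : ℝ) :
    marginRatio (fun x ↦ g x / h x) lam t = marginRatio g lam t / marginRatio h lam t := by
  simp only [marginRatio, prod_div_distrib, div_pow]
  ring

lemma marginRatio_prod {α : Type*} (s : Finset α) (g : α → ℝ → ℝ) (t : ℝ) :
    marginRatio (fun x ↦ ∏ k ∈ s, g k x) lam t = ∏ k ∈ s, marginRatio (g k) lam t := by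
  induction s using Finset.cons_induction with
  | empty => simp [marginRatio]
  | cons a s ha ih => simp only [prod_cons, marginRatio_mul, ih]

lemma marginRatio_exp_affine (a b t : ℝ) :
    marginRatio (fun x ↦ exp (a * x + b)) lam t =
      exp ((a + b) *
        (Fintype.card ι + Fintype.card κ - 2 * (Fintype.card ι * Fintype.card κ))) := by
  simp only [marginRatio, ← Real.exp_sum, ← Real.exp_add, ← Real.exp_nat_mul, ← Real.exp_sub]
  congr 1
  -- the terms in `t` cancel since the row sums and the column sums have the same total
  simp only [mul_add, add_mul, sum_add_distrib, ← sum_mul, ← mul_sum, sum_const, card_univ,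
    nsmul_eq_mul, mul_one]
  rw [sum_comm (f := fun j i ↦ lam i j)]
  push_cast
  ring

lemma marginRatio_add_const (c t : ℝ) :
    marginRatio (fun x ↦ x + c) lam t = (marginFactor (1 + c) lam t)⁻¹ := by
  simp only [marginRatio, marginFactor, affineProdRatio, prod_div_distrib, add_right_comm _ _ c]
  rw [prod_comm (f := fun j i ↦ 1 + c + lam i j * t)]
  rw [div_mul_div_comm, inv_div, sq]

lemma GammaSeq_eq_exp_div {N : ℕ} (hN : 0 < N) (x : ℝ) :
    GammaSeq x N =
      exp (log N * x + log N.factorial) / ∏ k ∈ range (N + 1), (x + k) := by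
  rw [Real.GammaSeq, Real.exp_add, Real.exp_log (by positivity),
    ← Real.rpow_def_of_pos (by positivity)]

lemma marginRatio_GammaSeq {N : ℕ} (hN : 0 < N) (t : ℝ) :
    marginRatio (fun x ↦ GammaSeq x N) lam t =
      exp ((log N + log N.factorial) *
        (Fintype.card ι + Fintype.card κ - 2 * (Fintype.card ι * Fintype.card κ))) *
      ∏ k ∈ range (N + 1), marginFactor (1 + k) lam t := by
  simp only [GammaSeq_eq_exp_div hN, marginRatio_div, marginRatio_exp_affine, marginRatio_prod,
    marginRatio_add_const, prod_inv_distrib, div_inv_eq_mul]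

lemma tendsto_marginRatio_Gamma {α : Type*} {l : Filter α} {g : α → ℝ → ℝ} {T : α → ℝ} {t : ℝ}
    (hlam : ∀ i j, 0 ≤ lam i j) (ht : 0 ≤ t)
    (hg : ∀ w, 0 ≤ w → Tendsto (fun a ↦ g a (1 + w * T a)) l (𝓝 (Gamma (1 + w * t)))) :
    Tendsto (fun a ↦ marginRatio (g a) lam (T a)) l (𝓝 (marginRatio Gamma lam t)) := by
  have hsum : ∀ i, 0 ≤ ∑ j, lam i j := fun i ↦ sum_nonneg fun j _ ↦ hlam i j
  have hsum' : ∀ j, 0 ≤ ∑ i, lam i j := fun j ↦ sum_nonneg fun i _ ↦ hlam i j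
  refine ((tendsto_finsetProd _ fun i _ ↦ hg _ (hsum i)).mul
    (tendsto_finsetProd _ fun j _ ↦ hg _ (hsum' j))).div
    ((tendsto_finsetProd _ fun i _ ↦ tendsto_finsetProd _ fun j _ ↦ hg _ (hlam i j)).pow 2) ?_
  exact pow_ne_zero _ (prod_ne_zero_iff.2 fun i _ ↦ prod_ne_zero_iff.2 fun j _ ↦
    (Real.Gamma_pos_of_pos (by have := hlam i j; positivity)).ne')

lemma marginRatio_GammaSeq_div_marginFactor {N : ℕ} (hN : 0 < N) (hlam : ∀ i j, 0 ≤ lam i j)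
    {t : ℝ} (ht : 0 ≤ t) :
    marginRatio (fun x ↦ GammaSeq x N) lam t / marginFactor 1 lam t =
      exp ((log N + log N.factorial) *
        (Fintype.card ι + Fintype.card κ - 2 * (Fintype.card ι * Fintype.card κ))) *
      ∏ k ∈ range N, marginFactor (1 + (k + 1 : ℕ)) lam t := by
  rw [marginRatio_GammaSeq hN, prod_range_succ', Nat.cast_zero, add_zero, ← mul_assoc,
    mul_div_cancel_right₀ _ (marginFactor_pos one_pos hlam ht).ne']

lemma monotoneOn_marginRatio_Gamma_div_marginFactor (hlam : ∀ i j, 0 ≤ lam i j) :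
    MonotoneOn (fun t ↦ marginRatio Gamma lam t / marginFactor 1 lam t) (Ici 0) := by
  intro t₁ (h₁ : 0 ≤ t₁) t₂ (h₂ : 0 ≤ t₂) h₁₂
  have hlim : ∀ t, 0 ≤ t → Tendsto (fun N ↦ marginRatio (fun x ↦ GammaSeq x N) lam t /
      marginFactor 1 lam t) atTop (𝓝 (marginRatio Gamma lam t / marginFactor 1 lam t)) :=
    fun t ht ↦ (tendsto_marginRatio_Gamma (T := fun _ ↦ t) hlam ht
      fun w _ ↦ GammaSeq_tendsto_Gamma _).div_const _
  refine le_of_tendsto_of_tendsto (hlim t₁ h₁) (hlim t₂ h₂) ?_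
  filter_upwards [eventually_gt_atTop 0] with N hN
  rw [marginRatio_GammaSeq_div_marginFactor hN hlam h₁,
    marginRatio_GammaSeq_div_marginFactor hN hlam h₂]
  exact mul_le_mul_of_nonneg_left (monotoneOn_finset_prod
    (fun k _ ↦ marginFactor_monotoneOn (by positivity) hlam)
    (fun k _ t ht ↦ (marginFactor_pos (by positivity) hlam ht).le) h₁ h₂ h₁₂) (exp_pos _).le

lemma marginRatio_Gamma_pos (hlam : ∀ i j, 0 ≤ lam i j) {t : ℝ} (ht : 0 ≤ t) :
    0 < marginRatio Gamma lam t := by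
  have hΓ : ∀ w, 0 ≤ w → 0 < Gamma (1 + w * t) := fun w hw ↦ Gamma_pos_of_pos (by positivity)
  exact div_pos (mul_pos (prod_pos fun i _ ↦ hΓ _ (sum_nonneg fun j _ ↦ hlam i j))
    (prod_pos fun j _ ↦ hΓ _ (sum_nonneg fun i _ ↦ hlam i j)))
    (pow_pos (prod_pos fun i _ ↦ prod_pos fun j _ ↦ hΓ _ (hlam i j)) 2)

lemma continuousAt_marginRatio_Gamma (hlam : ∀ i j, 0 ≤ lam i j) {t : ℝ} (ht : 0 ≤ t) :
    ContinuousAt (marginRatio Gamma lam) t := by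
  refine tendsto_marginRatio_Gamma (T := id) hlam ht fun w hw ↦ ?_
  have hne : ∀ k : ℕ, 1 + w * t ≠ -k := fun k ↦ by
    have : (0 : ℝ) < 1 + w * t := by positivity
    linarith [(Nat.cast_nonneg k : (0 : ℝ) ≤ k)]
  exact (differentiableAt_Gamma hne).continuousAt.comp (f := fun x ↦ 1 + w * x) (by fun_prop)

lemma marginRatio_Gamma_zero : marginRatio Gamma lam 0 = 1 := by
  simp [marginRatio]

lemma marginFactor_one_zero : marginFactor 1 lam 0 = 1 := by
  simp [marginFactor, affineProdRatio]

lemma marginFactor_le_marginRatio_Gamma (hlam : ∀ i j, 0 ≤ lam i j) {t : ℝ} (ht : 0 ≤ t) :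
    marginFactor 1 lam t ≤ marginRatio Gamma lam t := by
  have h := monotoneOn_marginRatio_Gamma_div_marginFactor hlam self_mem_Ici ht ht
  dsimp only at h
  rwa [marginRatio_Gamma_zero, marginFactor_one_zero, div_one,
    one_le_div (marginFactor_pos one_pos hlam ht)] at h

lemma marginRatio_Gamma_strictMonoOn (hlam : ∀ i j, 0 < lam i j)
    (hcard : 1 < Fintype.card ι ∧ Nonempty κ ∨ 1 < Fintype.card κ ∧ Nonempty ι) :
    StrictMonoOn (marginRatio Gamma lam) (Ici 0) := by
  have hlam₀ : ∀ i j, 0 ≤ lam i j := fun i j ↦ (hlam i j).le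
  refine ((monotoneOn_marginRatio_Gamma_div_marginFactor hlam₀).mul_strictMonoOn
    (marginFactor_strictMonoOn one_pos hlam hcard)
    (fun t ht ↦ div_pos (marginRatio_Gamma_pos hlam₀ ht) (marginFactor_pos one_pos hlam₀ ht))
    fun t ht ↦ (marginFactor_pos one_pos hlam₀ ht).le).congr fun t ht ↦ ?_
  exact div_mul_cancel₀ _ (marginFactor_pos one_pos hlam₀ ht).ne'

lemma tendsto_marginRatio_Gamma_atTop (hlam : ∀ i j, 0 < lam i j)
    (hcard : 1 < Fintype.card ι ∧ Nonempty κ ∨ 1 < Fintype.card κ ∧ Nonempty ι) :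
    Tendsto (marginRatio Gamma lam) atTop atTop :=
  tendsto_atTop_mono' _ ((eventually_ge_atTop 0).mono fun _ ht ↦
    marginFactor_le_marginRatio_Gamma (fun i j ↦ (hlam i j).le) ht)
    (tendsto_marginFactor_atTop hlam hcard)

end MarginRatio

theorem ratio_gamma_rho_two_increasing_image
    (m n : ℕ) (hm : 0 < m) (hn : 0 < n) (hmn : 2 ≤ m ∨ 2 ≤ n)
    (lam : Fin m → Fin n → ℝ) (hlam : ∀ i j, 0 < lam i j)
    (α : Fin m → ℝ) (hα : ∀ i, α i = ∑ j : Fin n, lam i j)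
    (β : Fin n → ℝ) (hβ : ∀ j, β j = ∑ i : Fin m, lam i j)
    (f : ℝ → ℝ)
    (hf : ∀ t, f t =
      ((∏ i : Fin m, Real.Gamma (1 + α i * t)) * ∏ j : Fin n, Real.Gamma (1 + β j * t)) /
        (∏ i : Fin m, ∏ j : Fin n, Real.Gamma (1 + lam i j * t)) ^ 2) :
    StrictMonoOn f (Set.Ioi 0) ∧
      Tendsto f (nhdsWithin 0 (Set.Ioi 0)) (nhds 1) ∧
      Tendsto f atTop atTop ∧
      f '' Set.Ioi 0 = Set.Ioi 1 := by
  obtain rfl : α = fun i ↦ ∑ j, lam i j := funext hα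
  obtain rfl : β = fun j ↦ ∑ i, lam i j := funext hβ
  obtain rfl : f = marginRatio Gamma lam := funext hf
  have hcard : 1 < Fintype.card (Fin m) ∧ Nonempty (Fin n) ∨
      1 < Fintype.card (Fin n) ∧ Nonempty (Fin m) := by
    simp only [Fintype.card_fin, ← Fin.pos_iff_nonempty]
    omega
  have hlam₀ : ∀ i j, 0 ≤ lam i j := fun i j ↦ (hlam i j).le
  have hmono := marginRatio_Gamma_strictMonoOn hlam hcard
  have hcont : ContinuousOn (marginRatio Gamma lam) (Ici 0) :=
    fun t ht ↦ (continuousAt_marginRatio_Gamma hlam₀ ht).continuousWithinAt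
  have htop := tendsto_marginRatio_Gamma_atTop hlam hcard
  refine ⟨hmono.mono Ioi_subset_Ici_self, ?_, htop, ?_⟩
  · rw [← marginRatio_Gamma_zero (lam := lam)]
    exact (continuousAt_marginRatio_Gamma hlam₀ le_rfl).tendsto.mono_left nhdsWithin_le_nhds
  · rw [image_Ioi_eq_Ioi_of_strictMonoOn hcont hmono htop, marginRatio_Gamma_zero]
end

section
/- Let m, n be positive integers, λ_{ij} > 0 for 1 ≤ i ≤ m, 1 ≤ j ≤ n, α_i = ∑_{j=1}^n λ_{ij}, β_j = ∑_{i=1}^m λ_{ij}, and ρ ∈ ℝ. Then for every t > 0 the second derivative of ln f at t, where f(t) = [∏_{i=1}^m Γ(1+α_i t) · ∏_{j=1}^n Γ(1+β_j t)] / [∏_{i=1}^m ∏_{j=1}^n Γ(1+λ_{ij} t)]^ρ, admits the integral representation (ln f)''(t) = ∫₀^∞ u · ( ∑_{i=1}^m 1/(e^{u/α_i} − 1) + ∑_{j=1}^n 1/(e^{u/β_j} − 1) − ρ ∑_{i=1}^m ∑_{j=1}^n 1/(e^{u/λ_{ij}} − 1) ) · e^{−tu} du. -/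
/-!
Euler's product `Γ(x) = lim nˣ n! / (x (x+1) ⋯ (x+n))` gives
`log Γ(x) = -log x + ∑ₖ (x log ((k+2)/(k+1)) - log ((x+k+1)/(k+1)))`; the derivatives of the
summands have summable bounds locally, so the series may be differentiated twice termwise, giving
`(log Γ)''(x) = ∑ₖ 1/(x+k)²`. On the other side, `1/(e^{u/a} - 1) = ∑ₖ e^{-(k+1)u/a}`, and
integrating termwise with `∫₀^∞ u e^{-cu} du = 1/c²` gives
`∫₀^∞ u e^{-tu} / (e^{u/a} - 1) du = a² ∑ₖ 1/(1+at+k)² = (d/dt)² log Γ(1+at)`.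
The theorem is the combination of these identities over the exponents `αᵢ, βⱼ, λᵢⱼ` with
weights `1, 1, -ρ`.
-/

open Finset MeasureTheory Real Filter Topology Set

lemma summable_one_div_add_nat_sq {y : ℝ} (hy : 0 < y) :
    Summable fun k : ℕ => 1 / (y + k) ^ 2 := by
  refine ((Real.summable_one_div_nat_add_rpow y 2).mpr one_lt_two).congr fun k => ?_
  rw [abs_of_pos (by positivity), Real.rpow_two, add_comm]

lemma summable_div_nat_add_one_sq (c : ℝ) : Summable fun k : ℕ => c / ((k : ℝ) + 1) ^ 2 := by
  refine ((summable_one_div_add_nat_sq one_pos).mul_left c).congr fun k => ?_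
  rw [mul_one_div, add_comm]

lemma iteratedDeriv_two_eq_of_hasDerivAt {𝕜 F : Type*} [NontriviallyNormedField 𝕜]
    [NormedAddCommGroup F] [NormedSpace 𝕜 F] {f f' : 𝕜 → F} {f'' : F} {t : 𝕜}
    (h₁ : ∀ᶠ s in 𝓝 t, HasDerivAt f (f' s) s) (h₂ : HasDerivAt f' f'' t) :
    iteratedDeriv 2 f t = f'' := by
  rw [iteratedDeriv_succ, iteratedDeriv_one]
  exact (h₂.congr_of_eventuallyEq (h₁.mono fun s hs => hs.deriv)).deriv

lemma HasDerivAt.comp_one_add_mul {f : ℝ → ℝ} {f' a s : ℝ}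
    (hf : HasDerivAt f f' (1 + a * s)) :
    HasDerivAt (fun s => f (1 + a * s)) (a * f') s := by
  have h_inner : HasDerivAt (fun s => 1 + a * s) a s := by
    simpa using ((hasDerivAt_id s).const_mul a).const_add 1
  exact (hf.comp s h_inner).congr_deriv (mul_comm _ _)

noncomputable def eulerLogGammaTerm (k : ℕ) (x : ℝ) : ℝ :=
  x * (log (k + 2) - log (k + 1)) - (log (x + k + 1) - log (k + 1))

lemma sum_range_eulerLogGammaTerm (x : ℝ) (n : ℕ) :
    ∑ k ∈ range n, eulerLogGammaTerm k x =
      BohrMollerup.logGammaSeq x n + log x + x * (log (n + 1) - log n) := by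
  have h_tel : ∑ k ∈ range n, (log ((k : ℝ) + 2) - log (k + 1)) = log (n + 1) := by
    have := sum_range_sub (fun k : ℕ => log ((k : ℝ) + 1)) n
    push_cast at this
    simpa [add_assoc, one_add_one_eq_two] using this
  have h_fact : log (n.factorial : ℝ) = ∑ k ∈ range n, log ((k : ℝ) + 1) := by
    rw [← prod_range_add_one_eq_factorial, Nat.cast_prod,
      log_prod fun k _ => by positivity]
    push_cast
    rfl
  simp only [eulerLogGammaTerm, BohrMollerup.logGammaSeq, sum_sub_distrib, ← mul_sum, h_tel,
    h_fact, sum_range_succ' (fun k => log (x + k))]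
  push_cast
  simp only [add_assoc, add_zero]
  ring

lemma hasDerivAt_eulerLogGammaTerm (k : ℕ) {x : ℝ} (hx : 0 < x + k + 1) :
    HasDerivAt (eulerLogGammaTerm k) (log (k + 2) - log (k + 1) - 1 / (x + k + 1)) x := by
  have h_log : HasDerivAt (fun y => log (y + k + 1)) (1 / (x + k + 1)) x := by
    simpa [one_div] using (((hasDerivAt_id x).add_const (k : ℝ)).add_const 1).log hx.ne'
  exact (hasDerivAt_mul_const _).fun_sub (h_log.sub_const (log (k + 1)))

lemma abs_log_sub_log_sub_one_div_le (k : ℕ) {x b : ℝ} (hx : 0 ≤ x) (hxb : x ≤ b) :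
    |log (k + 2) - log (k + 1) - 1 / (x + k + 1)| ≤ (b + 1) / (k + 1) ^ 2 := by
  have hk : (0 : ℝ) < k + 1 := by positivity
  have h_ratio : log (k + 2) - log (k + 1) = log ((k + 2) / (k + 1)) := by
    rw [log_div (by positivity) hk.ne']
  have h_lower : 1 / (k + 2) ≤ log ((k + 2) / (k + 1)) := by
    have := one_sub_inv_le_log_of_pos (x := ((k : ℝ) + 2) / (k + 1)) (by positivity)
    rw [inv_div] at this
    convert this using 1
    field_simp
    ring
  have h_upper : log ((k + 2) / (k + 1)) ≤ 1 / (k + 1) := by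
    have := log_le_sub_one_of_pos (x := ((k : ℝ) + 2) / (k + 1)) (by positivity)
    convert this using 1
    field_simp
    ring
  have hq : 1 / (x + k + 1) ≤ 1 / (k + 1) :=
    one_div_le_one_div_of_le hk (by linarith)
  have hq' : 1 / (k + 1) - 1 / (x + k + 1) ≤ (b + 1) / (k + 1) ^ 2 := by
    rw [div_sub_div _ _ hk.ne' (by positivity), div_le_div_iff₀ (by positivity) (by positivity)]
    nlinarith [mul_nonneg (mul_nonneg hk.le (by linarith : (0 : ℝ) ≤ b + 1)) hx,
      mul_nonneg (mul_nonneg hk.le hk.le) (by linarith : 0 ≤ b + 1 - x)]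
  have h_gap : 1 / (k + 1) - 1 / (k + 2) ≤ (b + 1) / (k + 1) ^ 2 := by
    rw [div_sub_div _ _ hk.ne' (by positivity), div_le_div_iff₀ (by positivity) (by positivity)]
    nlinarith
  rw [h_ratio, abs_le]
  constructor <;> linarith

lemma hasSum_eulerLogGammaTerm {x : ℝ} (hx : 0 < x) :
    HasSum (fun k => eulerLogGammaTerm k x) (log (Gamma x) + log x) := by
  have h_summable : Summable fun k => eulerLogGammaTerm k x := by
    refine summable_of_summable_hasDerivAt_of_isPreconnected
      (summable_div_nat_add_one_sq (x + 1 + 1)) (t := Ioo 0 (x + 1)) (y₀ := 1)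
      isOpen_Ioo isPreconnected_Ioo
      (fun k y hy => hasDerivAt_eulerLogGammaTerm k (by linarith [hy.1]))
      (fun k y hy => abs_log_sub_log_sub_one_div_le k hy.1.le hy.2.le) ⟨one_pos, by linarith⟩
      ?_ ⟨hx, by linarith⟩
    have h_one : ∀ k, eulerLogGammaTerm k 1 = 0 := fun k => by
      simp only [eulerLogGammaTerm]; ring_nf
    simpa only [h_one] using summable_zero
  have h_lim := ((BohrMollerup.tendsto_log_gamma hx).add_const (log x)).add
    (tendsto_log_nat_add_one_sub_log.const_mul x)
  rw [mul_zero, add_zero] at h_lim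
  convert h_summable.hasSum
  exact tendsto_nhds_unique (h_lim.congr fun n => (sum_range_eulerLogGammaTerm x n).symm)
    h_summable.hasSum.tendsto_sum_nat

lemma hasDerivAt_log_Gamma {x : ℝ} (hx : 0 < x) :
    HasDerivAt (fun y => log (Gamma y))
      (∑' k : ℕ, (log (k + 2) - log (k + 1) - 1 / (x + k + 1)) - 1 / x) x := by
  have h_tsum : HasDerivAt (fun y => ∑' k, eulerLogGammaTerm k y)
      (∑' k : ℕ, (log (k + 2) - log (k + 1) - 1 / (x + k + 1))) x :=
    hasDerivAt_tsum_of_isPreconnected (summable_div_nat_add_one_sq (x + 1 + 1))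
      (t := Ioo 0 (x + 1)) isOpen_Ioo isPreconnected_Ioo
      (fun k y hy => hasDerivAt_eulerLogGammaTerm k (by linarith [hy.1]))
      (fun k y hy => abs_log_sub_log_sub_one_div_le k hy.1.le hy.2.le) ⟨hx, by linarith⟩
      (hasSum_eulerLogGammaTerm hx).summable ⟨hx, by linarith⟩
  have h_eq : (fun y => ∑' k, eulerLogGammaTerm k y - log y) =ᶠ[𝓝 x]
      fun y => log (Gamma y) :=
    eventually_of_mem (Ioi_mem_nhds hx) fun y hy => by
      simp only [(hasSum_eulerLogGammaTerm hy).tsum_eq, add_sub_cancel_right]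
  simpa [one_div] using (h_tsum.sub (hasDerivAt_log hx.ne')).congr_of_eventuallyEq h_eq.symm

lemma hasDerivAt_tsum_log_sub_log_sub_one_div {x : ℝ} (hx : 0 < x) :
    HasDerivAt (fun y => ∑' k : ℕ, (log (k + 2) - log (k + 1) - 1 / (y + k + 1)))
      (∑' k : ℕ, 1 / (x + k + 1) ^ 2) x := by
  refine hasDerivAt_tsum_of_isPreconnected (summable_div_nat_add_one_sq 1) (t := Ioi 0)
    (g := fun (k : ℕ) y => log ((k : ℝ) + 2) - log (k + 1) - 1 / (y + k + 1))
    (g' := fun (k : ℕ) y => 1 / (y + k + 1) ^ 2) isOpen_Ioi isPreconnected_Ioi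
    (fun k y hy => ?_) (fun k y hy => ?_) hx
    ((summable_div_nat_add_one_sq (x + 1)).of_norm_bounded
      fun k => abs_log_sub_log_sub_one_div_le k hx.le le_rfl) hx
  · have hy' : y + k + 1 ≠ 0 := by have : (0 : ℝ) < y := hy; positivity
    simpa [one_div, add_assoc, neg_div] using
      ((((hasDerivAt_id y).add_const ((k : ℝ) + 1)).inv
        (by simpa [add_assoc] using hy')).const_sub (log (k + 2) - log (k + 1)))
  · have : (0 : ℝ) < y := hy
    rw [norm_of_nonneg (by positivity)]
    exact one_div_le_one_div_of_le (by positivity)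
      (pow_le_pow_left₀ (by positivity) (by linarith) 2)

lemma hasDerivAt_deriv_log_Gamma {x : ℝ} (hx : 0 < x) :
    HasDerivAt (deriv fun y => log (Gamma y)) (∑' k : ℕ, 1 / (x + k) ^ 2) x := by
  have h_eq : (fun y => ∑' k : ℕ, (log (k + 2) - log (k + 1) - 1 / (y + k + 1)) - 1 / y)
      =ᶠ[𝓝 x] deriv fun y => log (Gamma y) :=
    eventually_of_mem (Ioi_mem_nhds hx) fun y hy => (hasDerivAt_log_Gamma hy).deriv.symm
  have h_inv : HasDerivAt (fun y : ℝ => 1 / y) (-(1 / x ^ 2)) x := by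
    simpa [one_div] using hasDerivAt_inv hx.ne'
  refine (((hasDerivAt_tsum_log_sub_log_sub_one_div hx).sub h_inv).congr_of_eventuallyEq
    h_eq.symm).congr_deriv ?_
  rw [(summable_one_div_add_nat_sq hx).tsum_eq_zero_add]
  push_cast
  simp only [add_zero, ← add_assoc]
  ring

lemma one_div_exp_sub_one_eq_tsum {v : ℝ} (hv : 0 < v) :
    1 / (exp v - 1) = ∑' k : ℕ, exp (-((k + 1) * v)) := by
  have h_term : ∀ k : ℕ, exp (-((k + 1) * v)) = exp (-v) * exp (-v) ^ k := fun k => by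
    rw [← pow_succ', ← exp_nat_mul]
    push_cast
    ring_nf
  rw [tsum_congr h_term, tsum_mul_left,
    tsum_geometric_of_lt_one (exp_pos _).le (exp_lt_one_iff.mpr (neg_neg_of_pos hv)), exp_neg]
  have : 1 < exp v := one_lt_exp_iff.mpr hv
  field_simp

lemma integral_mul_exp_neg_mul {c : ℝ} (hc : 0 < c) :
    ∫ u in Ioi 0, u * exp (-(c * u)) = 1 / c ^ 2 := by
  have h := integral_rpow_mul_exp_neg_mul_Ioi two_pos hc
  norm_num [Real.Gamma_two] at h
  rw [h, one_div]

lemma integral_mul_one_div_exp_sub_one_mul_exp {a t : ℝ} (ha : 0 < a) (ht : 0 < t) :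
    ∫ u in Ioi 0, u * (1 / (exp (u / a) - 1)) * exp (-t * u) =
      a ^ 2 * ∑' k : ℕ, 1 / (1 + a * t + k) ^ 2 := by
  have hc : ∀ k : ℕ, 0 < t + (k + 1) / a := fun k => by positivity
  have h_series : ∀ u ∈ Ioi (0 : ℝ), u * (1 / (exp (u / a) - 1)) * exp (-t * u) =
      ∑' k : ℕ, u * exp (-((t + (k + 1) / a) * u)) := fun u hu => by
    rw [one_div_exp_sub_one_eq_tsum (div_pos hu ha), ← tsum_mul_left, ← tsum_mul_right]
    congr 1 with k
    rw [mul_assoc, ← exp_add]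
    ring_nf
  have h_term : ∀ k : ℕ, ∫ u in Ioi 0, u * exp (-((t + (k + 1) / a) * u)) =
      a ^ 2 * (1 / (1 + a * t + k) ^ 2) := fun k => by
    rw [integral_mul_exp_neg_mul (hc k)]
    field_simp
    ring
  have h_int : ∀ k : ℕ, IntegrableOn (fun u => u * exp (-((t + (k + 1) / a) * u))) (Ioi 0) :=
    fun k => .of_integral_ne_zero (by rw [h_term k]; positivity)
  have h_norm : ∀ k : ℕ, ∫ u in Ioi 0, ‖u * exp (-((t + (k + 1) / a) * u))‖ =
      a ^ 2 * (1 / (1 + a * t + k) ^ 2) := fun k => by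
    rw [← h_term k]
    refine setIntegral_congr_fun measurableSet_Ioi fun u hu => norm_of_nonneg ?_
    have : (0 : ℝ) < u := hu
    positivity
  rw [setIntegral_congr_fun measurableSet_Ioi h_series,
    ← integral_tsum_of_summable_integral_norm h_int, tsum_congr h_term, tsum_mul_left]
  have hy : 0 < 1 + a * t := by positivity
  simpa only [h_norm] using (summable_one_div_add_nat_sq hy).mul_left _

lemma integrableOn_mul_one_div_exp_sub_one_mul_exp {a t : ℝ} (ha : 0 < a) (ht : 0 < t) :
    IntegrableOn (fun u => u * (1 / (exp (u / a) - 1)) * exp (-t * u)) (Ioi 0) := by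
  -- the integral is positive, while a non-integrable function has Bochner integral `0`
  refine .of_integral_ne_zero ?_
  rw [integral_mul_one_div_exp_sub_one_mul_exp ha ht]
  have hy : 0 < 1 + a * t := by positivity
  exact (mul_pos (pow_pos ha 2) ((summable_one_div_add_nat_sq hy).tsum_pos
    (fun k => by positivity) 0 (by positivity))).ne'

theorem iteratedDeriv_two_sum_mul_log_Gamma {ι : Type*} [Fintype ι] (w a : ι → ℝ)
    (ha : ∀ p, 0 < a p) {t : ℝ} (ht : 0 < t) :
    iteratedDeriv 2 (fun s => ∑ p, w p * log (Gamma (1 + a p * s))) t =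
      ∫ u in Ioi 0, u * (∑ p, w p * (1 / (exp (u / a p) - 1))) * exp (-t * u) := by
  have h₁ : ∀ᶠ s in 𝓝 t, HasDerivAt (fun s => ∑ p, w p * log (Gamma (1 + a p * s)))
      (∑ p, w p * (a p * deriv (fun y => log (Gamma y)) (1 + a p * s))) s :=
    eventually_of_mem (Ioi_mem_nhds ht) fun s (hs : 0 < s) => HasDerivAt.fun_sum fun p _ =>
      have : 0 < 1 + a p * s := by have := ha p; positivity
      (hasDerivAt_log_Gamma this).differentiableAt.hasDerivAt.comp_one_add_mul.const_mul (w p)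
  have h₂ : HasDerivAt
      (fun s => ∑ p, w p * (a p * deriv (fun y => log (Gamma y)) (1 + a p * s)))
      (∑ p, w p * (a p * (a p * ∑' k : ℕ, 1 / (1 + a p * t + k) ^ 2))) t :=
    HasDerivAt.fun_sum fun p _ =>
      have : 0 < 1 + a p * t := by have := ha p; positivity
      ((hasDerivAt_deriv_log_Gamma this).comp_one_add_mul.const_mul (a p)).const_mul (w p)
  have h_integrand : ∀ u : ℝ, u * (∑ p, w p * (1 / (exp (u / a p) - 1))) * exp (-t * u) =
      ∑ p, w p * (u * (1 / (exp (u / a p) - 1)) * exp (-t * u)) := fun u => by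
    rw [mul_sum, sum_mul]
    exact sum_congr rfl fun p _ => by ring
  simp_rw [iteratedDeriv_two_eq_of_hasDerivAt h₁ h₂, h_integrand]
  rw [integral_finsetSum _ fun p _ =>
    (integrableOn_mul_one_div_exp_sub_one_mul_exp (ha p) ht).const_mul (w p)]
  refine sum_congr rfl fun p _ => ?_
  rw [integral_const_mul, integral_mul_one_div_exp_sub_one_mul_exp (ha p) ht]
  ring

lemma log_prod_mul_prod_div_prod_rpow {ι κ : Type*} [Fintype ι] [Fintype κ] {x : ι → ℝ}
    {y : κ → ℝ} {z : ι → κ → ℝ} (hx : ∀ i, 0 < x i) (hy : ∀ j, 0 < y j)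
    (hz : ∀ i j, 0 < z i j) (ρ : ℝ) :
    log ((∏ i, x i) * (∏ j, y j) / (∏ i, ∏ j, z i j) ^ ρ) =
      (∑ i, log (x i)) + (∑ j, log (y j)) - ρ * ∑ i, ∑ j, log (z i j) := by
  have hx' : 0 < ∏ i, x i := prod_pos fun i _ => hx i
  have hy' : 0 < ∏ j, y j := prod_pos fun j _ => hy j
  have hz' : 0 < ∏ i, ∏ j, z i j := prod_pos fun i _ => prod_pos fun j _ => hz i j
  rw [log_div (by positivity) (rpow_pos_of_pos hz' ρ).ne', log_mul hx'.ne' hy'.ne', log_rpow hz',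
    log_prod fun i _ => (hx i).ne', log_prod fun j _ => (hy j).ne',
    log_prod fun i _ => (prod_pos fun j _ => hz i j).ne']
  simp_rw [log_prod fun j _ => (hz _ j).ne']

lemma sum_sumElim_mul {ι κ : Type*} [Fintype ι] [Fintype κ] (x : ι → ℝ) (y : κ → ℝ)
    (z : ι → κ → ℝ) (ρ : ℝ) (φ : ℝ → ℝ) :
    ∑ p : ι ⊕ κ ⊕ ι × κ, Sum.elim (fun _ => 1) (Sum.elim (fun _ => 1) fun _ => -ρ) p *
        φ (Sum.elim x (Sum.elim y fun q : ι × κ => z q.1 q.2) p) =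
      (∑ i, φ (x i)) + (∑ j, φ (y j)) - ρ * ∑ i, ∑ j, φ (z i j) := by
  simp only [Fintype.sum_sum_type, Fintype.sum_prod_type, Sum.elim_inl, Sum.elim_inr, one_mul,
    neg_mul, sum_neg_distrib, mul_sum]
  ring

theorem iteratedDeriv_two_log_Gamma_ratio {ι κ : Type*} [Fintype ι] [Fintype κ] {x : ι → ℝ}
    {y : κ → ℝ} {z : ι → κ → ℝ} (hx : ∀ i, 0 < x i) (hy : ∀ j, 0 < y j)
    (hz : ∀ i j, 0 < z i j) (ρ : ℝ) {t : ℝ} (ht : 0 < t) :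
    iteratedDeriv 2 (fun s => (∑ i, log (Gamma (1 + x i * s))) +
        (∑ j, log (Gamma (1 + y j * s))) - ρ * ∑ i, ∑ j, log (Gamma (1 + z i j * s))) t =
      ∫ u in Ioi 0, u * ((∑ i, 1 / (exp (u / x i) - 1)) + (∑ j, 1 / (exp (u / y j) - 1)) -
        ρ * ∑ i, ∑ j, 1 / (exp (u / z i j) - 1)) * exp (-t * u) := by
  have ha : ∀ p, 0 < Sum.elim x (Sum.elim y fun q : ι × κ => z q.1 q.2) p := by
    rintro (i | j | ⟨i, j⟩)
    exacts [hx i, hy j, hz i j]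
  convert iteratedDeriv_two_sum_mul_log_Gamma _ _ ha ht using 4 with s u
  · exact (sum_sumElim_mul x y z ρ fun c => log (Gamma (1 + c * s))).symm
  · exact congrArg (u * ·) (sum_sumElim_mul x y z ρ fun c => 1 / (exp (u / c) - 1)).symm

theorem integral_representation_second_deriv_log_ratio_gamma
    (m n : ℕ) (hm : 0 < m) (hn : 0 < n)
    (lam : Fin m → Fin n → ℝ) (hlam : ∀ i j, 0 < lam i j)
    (α : Fin m → ℝ) (hα : ∀ i, α i = ∑ j : Fin n, lam i j)
    (β : Fin n → ℝ) (hβ : ∀ j, β j = ∑ i : Fin m, lam i j)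
    (ρ : ℝ)
    (f : ℝ → ℝ)
    (hf : ∀ t, f t =
      ((∏ i : Fin m, Real.Gamma (1 + α i * t)) * ∏ j : Fin n, Real.Gamma (1 + β j * t)) /
        (∏ i : Fin m, ∏ j : Fin n, Real.Gamma (1 + lam i j * t)) ^ ρ) :
    ∀ t : ℝ, 0 < t →
      iteratedDeriv 2 (fun s => Real.log (f s)) t =
        ∫ u in Set.Ioi (0 : ℝ),
          u * ((∑ i : Fin m, 1 / (Real.exp (u / α i) - 1)) +
                (∑ j : Fin n, 1 / (Real.exp (u / β j) - 1)) -
                ρ * ∑ i : Fin m, ∑ j : Fin n, 1 / (Real.exp (u / lam i j) - 1)) *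
            Real.exp (-t * u) := by
  intro t ht
  have hα_pos : ∀ i, 0 < α i := fun i =>
    hα i ▸ sum_pos (fun j _ => hlam i j) ⟨⟨0, hn⟩, mem_univ _⟩
  have hβ_pos : ∀ j, 0 < β j := fun j =>
    hβ j ▸ sum_pos (fun i _ => hlam i j) ⟨⟨0, hm⟩, mem_univ _⟩
  have h_log : (fun s => log (f s)) =ᶠ[𝓝 t] fun s => (∑ i, log (Gamma (1 + α i * s))) +
      (∑ j, log (Gamma (1 + β j * s))) - ρ * ∑ i, ∑ j, log (Gamma (1 + lam i j * s)) :=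
    eventually_of_mem (Ioi_mem_nhds ht) fun s (hs : 0 < s) => by
      have hΓ : ∀ c : ℝ, 0 < c → 0 < Gamma (1 + c * s) := fun c hc =>
        Gamma_pos_of_pos (by positivity)
      simp only [hf]
      exact log_prod_mul_prod_div_prod_rpow (fun i => hΓ _ (hα_pos i))
        (fun j => hΓ _ (hβ_pos j)) (fun i j => hΓ _ (hlam i j)) ρ
  rw [h_log.iteratedDeriv_eq]
  exact iteratedDeriv_two_log_Gamma_ratio hα_pos hβ_pos hlam ρ ht
end

section
/- Let m, n be positive integers with m ≥ 2 or n ≥ 2, and let λ_{ij} > 0 for 1 ≤ i ≤ m, 1 ≤ j ≤ n. Set α_i = ∑_{j=1}^n λ_{ij} and β_j = ∑_{i=1}^m λ_{ij}. Then ∏_{i=1}^m α_i^{α_i} · ∏_{j=1}^n β_j^{β_j} > ( ∏_{i=1}^m ∏_{j=1}^n λ_{ij}^{λ_{ij}} )². -/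
/-!
Every entry of a row is at most the row sum `α`, so `λ ^ λ ≤ α ^ λ` factorwise, and multiplying
over the row gives `∏ⱼ λᵢⱼ ^ λᵢⱼ ≤ αᵢ ^ αᵢ`; likewise for columns. The square of the double
product is the product of its row-wise and column-wise arrangements, so multiplying the two
bounds gives the inequality. It is strict because, along whichever direction has at least two
indices, every entry is strictly smaller than its line sum.
-/

open Finset

namespace Real

variable {ι κ : Type*}

theorem prod_rpow_self_le_rpow_sum (s : Finset ι) {x : ι → ℝ} (hx : ∀ i ∈ s, 0 ≤ x i) :
    ∏ i ∈ s, x i ^ x i ≤ (∑ i ∈ s, x i) ^ ∑ i ∈ s, x i := by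
  rw [rpow_sum_of_nonneg (sum_nonneg hx) hx]
  exact prod_le_prod (fun i hi => rpow_nonneg (hx i hi) _) fun i hi =>
    rpow_le_rpow (hx i hi) (single_le_sum hx hi) (hx i hi)

theorem prod_rpow_self_lt_rpow_sum {s : Finset ι} (hs : 1 < #s) {x : ι → ℝ}
    (hx : ∀ i ∈ s, 0 < x i) :
    ∏ i ∈ s, x i ^ x i < (∑ i ∈ s, x i) ^ ∑ i ∈ s, x i := by
  have hx' : ∀ i ∈ s, 0 ≤ x i := fun i hi => (hx i hi).le
  rw [rpow_sum_of_pos (sum_pos hx (card_pos.1 (by omega)))]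
  refine prod_lt_prod_of_nonempty (fun i hi => rpow_pos_of_pos (hx i hi) _) (fun i hi => ?_)
    (card_pos.1 (by omega))
  obtain ⟨j, hj, hji⟩ := exists_mem_ne hs i
  exact rpow_lt_rpow (hx' i hi) (single_lt_sum hji hi hj (hx j hj) fun k hk _ => hx' k hk)
    (hx i hi)

variable [Fintype ι] [Fintype κ]

theorem prod_prod_rpow_self_le_prod_rpow_sum {lam : ι → κ → ℝ} (h : ∀ i j, 0 ≤ lam i j) :
    ∏ i, ∏ j, lam i j ^ lam i j ≤ ∏ i, (∑ j, lam i j) ^ ∑ j, lam i j :=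
  prod_le_prod (fun i _ => prod_nonneg fun j _ => rpow_nonneg (h i j) _) fun i _ =>
    prod_rpow_self_le_rpow_sum _ fun j _ => h i j

theorem prod_prod_rpow_self_lt_prod_rpow_sum [Nonempty ι] (hκ : 1 < Fintype.card κ)
    {lam : ι → κ → ℝ} (h : ∀ i j, 0 < lam i j) :
    ∏ i, ∏ j, lam i j ^ lam i j < ∏ i, (∑ j, lam i j) ^ ∑ j, lam i j :=
  prod_lt_prod_of_nonempty (fun i _ => prod_pos fun j _ => rpow_pos_of_pos (h i j) _)
    (fun i _ => prod_rpow_self_lt_rpow_sum hκ fun j _ => h i j) univ_nonempty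

end Real

open Real

theorem prod_rpow_self_row_col_gt_sq
    (m n : ℕ) (hm : 0 < m) (hn : 0 < n) (hmn : 2 ≤ m ∨ 2 ≤ n)
    (lam : Fin m → Fin n → ℝ) (hlam : ∀ i j, 0 < lam i j)
    (α : Fin m → ℝ) (hα : ∀ i, α i = ∑ j : Fin n, lam i j)
    (β : Fin n → ℝ) (hβ : ∀ j, β j = ∑ i : Fin m, lam i j) :
    (∏ i : Fin m, ∏ j : Fin n, lam i j ^ lam i j) ^ 2 <
      (∏ i : Fin m, α i ^ α i) * ∏ j : Fin n, β j ^ β j := by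
  obtain rfl : α = _ := funext hα
  obtain rfl : β = _ := funext hβ
  have : Nonempty (Fin m) := Fin.pos_iff_nonempty.1 hm
  have : Nonempty (Fin n) := Fin.pos_iff_nonempty.1 hn
  have hlam' : ∀ i j, 0 ≤ lam i j := fun i j => (hlam i j).le
  have hrows_pos : 0 < ∏ i, ∏ j, lam i j ^ lam i j :=
    prod_pos fun i _ => prod_pos fun j _ => rpow_pos_of_pos (hlam i j) _
  rw [sq]
  nth_rewrite 2 [prod_comm]
  rcases hmn with hm2 | hn2
  · exact mul_lt_mul_of_le_of_lt_of_pos_of_nonneg (prod_prod_rpow_self_le_prod_rpow_sum hlam')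
      (prod_prod_rpow_self_lt_prod_rpow_sum (by rwa [Fintype.card_fin]) fun j i => hlam i j)
      hrows_pos (prod_nonneg fun j _ => rpow_nonneg (sum_nonneg fun i _ => hlam' i j) _)
  · exact mul_lt_mul_of_lt_of_le_of_pos_of_nonneg
      (prod_prod_rpow_self_lt_prod_rpow_sum (by rwa [Fintype.card_fin]) hlam)
      (prod_prod_rpow_self_le_prod_rpow_sum fun j i => hlam' i j)
      (by rwa [prod_comm])
      (prod_nonneg fun i _ => rpow_nonneg (sum_nonneg fun j _ => hlam' i j) _)
end
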